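/- arXiv:2109.01600 — 7 statements merged into one kernel-verified Lean document; each statement's English description precedes it below -/
import Mathlib

section
/- If G is a connected digraph that is not regular (i.e., some vertex v has min(d⁺(v), d⁻(v)) < Δ_max(G)), then χ⃗(G) ≤ Δ_max(G). -/
/-- A digraph: no loops, no parallel arcs (arcs given by a relation), digons allowed. -/
structure Digraph' (V : Type) where
  Adj : V → V → Prop
  irrefl : ∀ v, ¬ Adj v v

namespace Digraph'

variable {V : Type} (G : Digraph' V)

/-- Out-degree of a vertex. -/
noncomputable def outDeg (v : V) : ℕ := Nat.card {w : V // G.Adj v w}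

/-- In-degree of a vertex. -/
noncomputable def inDeg (v : V) : ℕ := Nat.card {w : V // G.Adj w v}

/-- `d_min(v) = min(d⁺(v), d⁻(v))`. -/
noncomputable def dmin (v : V) : ℕ := min (G.outDeg v) (G.inDeg v)

/-- `d_max(v) = max(d⁺(v), d⁻(v))`. -/
noncomputable def dmax (v : V) : ℕ := max (G.outDeg v) (G.inDeg v)

/-- `Δ_min(G) = max_v min(d⁺(v), d⁻(v))`. -/
noncomputable def DeltaMin : ℕ := sSup (Set.range G.dmin)

/-- `Δ_max(G) = max_v max(d⁺(v), d⁻(v))`. -/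
noncomputable def DeltaMax : ℕ := sSup (Set.range G.dmax)

/-- A set of vertices is acyclic if it carries no directed cycle. -/
def AcyclicSet (S : Set V) : Prop :=
  ∀ v : V, ¬ Relation.TransGen (fun x y => x ∈ S ∧ y ∈ S ∧ G.Adj x y) v v

/-- `G` is `k`-dicolourable: its vertex set partitions into `k` acyclic colour classes. -/
def Dicolourable (k : ℕ) : Prop :=
  ∃ f : V → Fin k, ∀ c : Fin k, G.AcyclicSet {v | f v = c}

/-- The dichromatic number. -/
noncomputable def dichromaticNumber : ℕ := sInf {k | G.Dicolourable k}

/-- `G` is connected (its underlying undirected graph is connected). -/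
def Connected : Prop :=
  Nonempty V ∧ ∀ x y : V, Relation.ReflTransGen (fun a b => G.Adj a b ∨ G.Adj b a) x y

/-- The subdigraph induced on a set of vertices. -/
def induce (S : Set V) : Digraph' S :=
  ⟨fun a b => G.Adj a b, fun a h => G.irrefl a h⟩

/-- The connected component (of the underlying graph) containing `v`. -/
def component (v : V) : Set V :=
  {u | Relation.ReflTransGen (fun a b => G.Adj a b ∨ G.Adj b a) v u}

/-- `G` is a directed cycle. -/
def IsDirectedCycle : Prop :=
  ∃ n : ℕ, 2 ≤ n ∧ ∃ e : V ≃ ZMod n, ∀ x y : V, G.Adj x y ↔ e y = e x + 1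

/-- `G` is a symmetric cycle of odd length. -/
def IsSymmetricOddCycle : Prop :=
  ∃ n : ℕ, 3 ≤ n ∧ Odd n ∧ ∃ e : V ≃ ZMod n,
    ∀ x y : V, G.Adj x y ↔ (e y = e x + 1 ∨ e x = e y + 1)

/-- `G` is a symmetric complete digraph (a digon between any two distinct vertices). -/
def IsSymmetricComplete : Prop := ∀ x y : V, G.Adj x y ↔ x ≠ y

/-- `G` is a member of `𝓑_k`: directed cycles for `k = 1`, symmetric odd cycles for
`k = 2`, and the symmetric complete digraph on `k+1` vertices for `k ≥ 3`. -/
def IsException (k : ℕ) : Prop :=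
  (k = 1 ∧ G.IsDirectedCycle) ∨ (k = 2 ∧ G.IsSymmetricOddCycle) ∨
  (3 ≤ k ∧ G.IsSymmetricComplete ∧ Nat.card V = k + 1)

/-- underlying simple graph -/
def sym : SimpleGraph V where
  Adj x y := x ≠ y ∧ (G.Adj x y ∨ G.Adj y x)
  symm := ⟨fun x y h => ⟨h.1.symm, h.2.symm⟩⟩
  loopless := ⟨fun x h => h.1 rfl⟩

end Digraph'

section Greedy
variable {V : Type} [Fintype V]
namespace Digraph'

open Classical in
noncomputable def side (G : Digraph' V) (key : V → ℕ) (u : V) :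
    Finset {w : V // key w < key u} :=
  if (Finset.univ.filter fun w : {w : V // key w < key u} => G.Adj u w.1).card ≤
      (Finset.univ.filter fun w : {w : V // key w < key u} => G.Adj w.1 u).card
  then Finset.univ.filter fun w => G.Adj u w.1
  else Finset.univ.filter fun w => G.Adj w.1 u

open Classical in
lemma side_card_le (G : Digraph' V) (key : V → ℕ) (u : V) :
    (G.side key u).card ≤ Nat.card {x : {w : V // key w < key u} // G.Adj u x.1} ∧
    (G.side key u).card ≤ Nat.card {x : {w : V // key w < key u} // G.Adj x.1 u} := by
  have h1 : Nat.card {x : {w : V // key w < key u} // G.Adj u x.1}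
      = (Finset.univ.filter fun w : {w : V // key w < key u} => G.Adj u w.1).card := by
    rw [Nat.card_eq_fintype_card, Fintype.card_subtype]
  have h2 : Nat.card {x : {w : V // key w < key u} // G.Adj x.1 u}
      = (Finset.univ.filter fun w : {w : V // key w < key u} => G.Adj w.1 u).card := by
    rw [Nat.card_eq_fintype_card, Fintype.card_subtype]
  rw [h1, h2]
  unfold side
  split
  · exact ⟨le_rfl, by omega⟩
  · exact ⟨by omega, le_rfl⟩

noncomputable def greedy (G : Digraph' V) (k : ℕ) (hk : 0 < k) (key : V → ℕ)
    (u : V) : Fin k :=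
  if h : ∃ c : Fin k, c ∉ (G.side key u).image (fun w => G.greedy k hk key w.1) then
    h.choose else ⟨0, hk⟩
termination_by key u
decreasing_by all_goals exact w.2

open Classical in
lemma greedy_spec (G : Digraph' V) (k : ℕ) (hk : 0 < k) (key : V → ℕ) (u : V)
    (hcard : (G.side key u).card < k) :
    (∀ w, G.Adj u w → key w < key u → G.greedy k hk key w ≠ G.greedy k hk key u) ∨
    (∀ w, G.Adj w u → key w < key u → G.greedy k hk key w ≠ G.greedy k hk key u) := by
  have hused : ((G.side key u).image (fun w => G.greedy k hk key w.1)).card < k :=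
    lt_of_le_of_lt Finset.card_image_le hcard
  have hex : ∃ c : Fin k, c ∉ (G.side key u).image (fun w => G.greedy k hk key w.1) := by
    by_contra hcon
    push_neg at hcon
    have := Finset.eq_univ_iff_forall.mpr hcon
    rw [this, Finset.card_univ, Fintype.card_fin] at hused
    omega
  have hval : G.greedy k hk key u = hex.choose := by
    rw [greedy]
    exact dif_pos hex
  have hnm := hex.choose_spec
  have key1 : ∀ w : {w : V // key w < key u}, w ∈ G.side key u →
      G.greedy k hk key w.1 ≠ G.greedy k hk key u := by
    intro w hw heq
    exact hnm (hval ▸ heq ▸ Finset.mem_image_of_mem _ hw)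
  unfold side at key1
  split at key1
  · left; intro w hadj hkw
    exact key1 ⟨w, hkw⟩ (Finset.mem_filter.mpr ⟨Finset.mem_univ _, hadj⟩)
  · right; intro w hadj hkw
    exact key1 ⟨w, hkw⟩ (Finset.mem_filter.mpr ⟨Finset.mem_univ _, hadj⟩)

end Digraph'
end Greedy


/-- If `G` is connected and not regular (some vertex has `min(d⁺,d⁻) < Δ_max(G)`),
then `χ⃗(G) ≤ Δ_max(G)`. -/
theorem dichromaticNumber_le_DeltaMax_of_not_regular {V : Type} [Fintype V]
    (G : Digraph' V) (hc : G.Connected) (hnr : ∃ v : V, G.dmin v < G.DeltaMax) :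
    G.dichromaticNumber ≤ G.DeltaMax := by
  classical
  obtain ⟨v₀, hv₀⟩ := hnr
  set k := G.DeltaMax with hkdef
  have hk : 0 < k := lt_of_le_of_lt (Nat.zero_le _) hv₀
  set H := G.sym with hH
  -- reachability
  have hreach : ∀ u : V, H.Reachable v₀ u := by
    intro u
    rw [SimpleGraph.reachable_iff_reflTransGen]
    refine Relation.ReflTransGen.mono ?_ _ _ (hc.2 v₀ u)
    rintro a b (h | h)
    · exact ⟨fun he => G.irrefl a (he ▸ h), Or.inl h⟩
    · exact ⟨fun he => G.irrefl a (he ▸ h), Or.inr h⟩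
  set n := Fintype.card V with hn
  set d : V → ℕ := fun u => H.dist v₀ u with hd
  have hd_lt : ∀ u, d u < n := by
    intro u
    obtain ⟨p⟩ := hreach u
    exact lt_of_le_of_lt (SimpleGraph.dist_le p.bypass) p.bypass_isPath.length_lt
  set e := Fintype.equivFin V with he
  set key : V → ℕ := fun u => (n + 1) * (n - d u) + (e u : ℕ) with hkey
  have he_lt : ∀ u, (e u : ℕ) < n + 1 := fun u => Nat.lt_succ_of_lt (e u).2
  have hkey_inj : Function.Injective key := by
    intro a b hab
    have h1 : ((n + 1) * (n - d a) + (e a : ℕ)) % (n + 1)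
        = ((n + 1) * (n - d b) + (e b : ℕ)) % (n + 1) := by
      simpa [hkey] using congrArg (· % (n + 1)) hab
    rw [Nat.mul_add_mod, Nat.mul_add_mod, Nat.mod_eq_of_lt (he_lt a),
      Nat.mod_eq_of_lt (he_lt b)] at h1
    exact e.injective (Fin.ext h1)
  have hkey_mono : ∀ a b : V, d a < d b → key b < key a := by
    intro a b hab
    have h1 : n - d b + 1 ≤ n - d a := by have := hd_lt b; omega
    calc key b < (n + 1) * (n - d b) + (n + 1) := Nat.add_lt_add_left (he_lt b) _
      _ = (n + 1) * (n - d b + 1) := by ring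
      _ ≤ (n + 1) * (n - d a) := Nat.mul_le_mul_left _ h1
      _ ≤ key a := Nat.le_add_right _ _
  -- step toward v₀
  have hstep : ∀ u : V, u ≠ v₀ → ∃ w, H.Adj u w ∧ d w < d u := by
    intro u hu
    have hr := hreach u
    have hd0 : d u ≠ 0 := fun h0 => hu (hr.dist_eq_zero_iff.mp h0).symm
    obtain ⟨p, hp⟩ := hr.exists_walk_length_eq_dist
    obtain ⟨w, ha, q', hq'⟩ := SimpleGraph.Walk.exists_eq_cons_of_ne hu p.reverse
    refine ⟨w, ha, ?_⟩
    have h2 := SimpleGraph.dist_le q'.reverse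
    rw [SimpleGraph.Walk.length_reverse] at h2
    have h3 : p.reverse.length = d u := by rw [SimpleGraph.Walk.length_reverse, hp]
    rw [hq', SimpleGraph.Walk.length_cons] at h3
    have h4 : d w = H.dist v₀ w := rfl
    omega
  -- degrees
  have hdeg : ∀ u : V, G.dmax u ≤ k :=
    fun u => le_csSup (Set.Finite.bddAbove (Set.finite_range G.dmax)) ⟨u, rfl⟩
  -- key bound: side card < k at every vertex
  have hside : ∀ u : V, (G.side key u).card < k := by
    intro u
    obtain ⟨hL, hR⟩ := Digraph'.side_card_le G key u
    by_cases hu : u = v₀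
    · subst hu
      have hA : Nat.card {x : {w : V // key w < key u} // G.Adj u x.1}
          ≤ G.outDeg u := by
        unfold Digraph'.outDeg
        rw [Nat.card_eq_fintype_card, Nat.card_eq_fintype_card]
        exact Fintype.card_le_of_injective (fun x => ⟨x.1.1, x.2⟩) (by
            intro a b hab
            simp only [Subtype.mk.injEq] at hab
            exact Subtype.ext (Subtype.ext hab))
      have hB : Nat.card {x : {w : V // key w < key u} // G.Adj x.1 u}
          ≤ G.inDeg u := by
        unfold Digraph'.inDeg
        rw [Nat.card_eq_fintype_card, Nat.card_eq_fintype_card]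
        exact Fintype.card_le_of_injective (fun x => ⟨x.1.1, x.2⟩) (by
            intro a b hab
            simp only [Subtype.mk.injEq] at hab
            exact Subtype.ext (Subtype.ext hab))
      rcases min_lt_iff.mp hv₀ with h | h
      · exact lt_of_le_of_lt (le_trans hL hA) h
      · exact lt_of_le_of_lt (le_trans hR hB) h
    · obtain ⟨w', hadj', hdlt⟩ := hstep u hu
      have hkw' : key u < key w' := hkey_mono w' u hdlt
      rcases hadj'.2 with hout | hin
      · have hA : Nat.card {x : {w : V // key w < key u} // G.Adj u x.1}
            < G.outDeg u := by
          unfold Digraph'.outDeg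
          rw [Nat.card_eq_fintype_card, Nat.card_eq_fintype_card]
          refine Fintype.card_lt_of_injective_of_notMem
            (fun x => ⟨x.1.1, x.2⟩) (by
            intro a b hab
            simp only [Subtype.mk.injEq] at hab
            exact Subtype.ext (Subtype.ext hab))
            (b := ⟨w', hout⟩) ?_
          rintro ⟨x, hx⟩
          have h5 : x.1.1 = w' := by
            simpa only [Subtype.mk.injEq] using congrArg Subtype.val hx
          have h6 := x.1.2
          rw [h5] at h6
          omega
        have h7 : G.outDeg u ≤ k := le_trans (le_max_left _ _) (hdeg u)
        omega
      · have hB : Nat.card {x : {w : V // key w < key u} // G.Adj x.1 u}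
            < G.inDeg u := by
          unfold Digraph'.inDeg
          rw [Nat.card_eq_fintype_card, Nat.card_eq_fintype_card]
          refine Fintype.card_lt_of_injective_of_notMem
            (fun x => ⟨x.1.1, x.2⟩) (by
            intro a b hab
            simp only [Subtype.mk.injEq] at hab
            exact Subtype.ext (Subtype.ext hab))
            (b := ⟨w', hin⟩) ?_
          rintro ⟨x, hx⟩
          have h5 : x.1.1 = w' := by
            simpa only [Subtype.mk.injEq] using congrArg Subtype.val hx
          have h6 := x.1.2
          rw [h5] at h6
          omega
        have h7 : G.inDeg u ≤ k := le_trans (le_max_right _ _) (hdeg u)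
        omega
  -- the colouring
  set f : V → Fin k := G.greedy k hk key with hf
  have hdicol : G.Dicolourable k := by
    refine ⟨f, ?_⟩
    intro c v hcyc
    set R : V → V → Prop :=
      fun x y => x ∈ {v : V | f v = c} ∧ y ∈ {v : V | f v = c} ∧ G.Adj x y with hR
    set Dfin : Finset V :=
      Finset.univ.filter (fun z => Relation.TransGen R v z ∧ Relation.TransGen R z v)
      with hDfin
    have hvD : v ∈ Dfin := by
      simp only [hDfin, Finset.mem_filter, Finset.mem_univ, true_and]
      exact ⟨hcyc, hcyc⟩
    obtain ⟨w, hwD, hwmax⟩ := Finset.exists_max_image Dfin key ⟨v, hvD⟩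
    obtain ⟨-, hvw, hwv⟩ := Finset.mem_filter.mp hwD
    have hww : Relation.TransGen R w w := hwv.trans hvw
    obtain ⟨x, hwx, hxw⟩ := Relation.TransGen.head'_iff.mp hww
    obtain ⟨y, hwy, hyw⟩ := Relation.TransGen.tail'_iff.mp hww
    have hxne : x ≠ w := fun hh => G.irrefl w (hh ▸ hwx.2.2)
    have hyne : y ≠ w := fun hh => G.irrefl w (hh ▸ hyw.2.2)
    have hxD : x ∈ Dfin := by
      simp only [hDfin, Finset.mem_filter, Finset.mem_univ, true_and]
      exact ⟨hvw.tail hwx, Relation.TransGen.trans_right hxw hwv⟩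
    have hyD : y ∈ Dfin := by
      simp only [hDfin, Finset.mem_filter, Finset.mem_univ, true_and]
      exact ⟨Relation.TransGen.trans_left hvw hwy, Relation.TransGen.head hyw hwv⟩
    have hkx : key x < key w :=
      lt_of_le_of_ne (hwmax x hxD) (fun hh => hxne (hkey_inj hh))
    have hky : key y < key w :=
      lt_of_le_of_ne (hwmax y hyD) (fun hh => hyne (hkey_inj hh))
    have hfw : f w = c := hwx.1
    have hfx : f x = c := hwx.2.1
    have hfy : f y = c := hyw.1
    rcases Digraph'.greedy_spec G k hk key w (hside w) with hspec | hspec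
    · exact hspec x hwx.2.2 hkx (hfx.trans hfw.symm)
    · exact hspec y hyw.2.2 hky (hfy.trans hfw.symm)
  exact Nat.sInf_le hdicol
end

section
/- Let G be a connected k-regular digraph with χ⃗(G) = k + 1 that is not a directed cycle, symmetric odd cycle, or symmetric complete graph. Then the underlying undirected graph of G is 2-connected. -/
section Walks
variable {V : Type} {R : V → V → Prop}

lemma transGen_to_chain {a b : V} (h : Relation.TransGen R a b) :
    ∃ l : List V, List.Chain R a (l ++ [b]) := by
  induction h with
  | single h => exact ⟨[], List.Chain.cons h List.Chain.nil⟩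
  | @tail b c h₁ h₂ ih =>
    obtain ⟨l, hl⟩ := ih
    refine ⟨l ++ [b], ?_⟩
    rw [List.append_assoc]
    exact List.isChain_cons_split.2 ⟨hl, List.Chain.cons h₂ List.Chain.nil⟩

lemma chain_to_transGen : ∀ (l : List V) (a b : V), List.Chain R a (l ++ [b]) →
    Relation.TransGen R a b := by
  intro l
  induction l with
  | nil => intro a b h; cases h with | cons_cons h _ => exact .single h
  | cons x l ih =>
    intro a b h
    cases h with | cons_cons h h' => exact .head h (ih x b h')
end Walks

section Glue
variable {V : Type} {R : V → V → Prop} {v : V} {S₁ S₂ : Set V}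

/-- walk staying off `v` stays in its side -/
lemma side_chain (hside : ∀ x y, R x y → x ∈ S₁ → x ≠ v → y ∈ S₁) :
    ∀ (m : List V) (a b : V), a ∈ S₁ → a ≠ v → List.Chain R a (m ++ [b]) → v ∉ m →
      List.Chain (fun x y => x ∈ S₁ ∧ y ∈ S₁ ∧ R x y) a (m ++ [b]) ∧ b ∈ S₁ := by
  intro m
  induction m with
  | nil =>
    intro a b ha hav h _
    cases h with | cons_cons h _ =>
      have hb : b ∈ S₁ := hside a b h ha hav
      exact ⟨List.Chain.cons ⟨ha, hb, h⟩ List.Chain.nil, hb⟩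
  | cons w m ih =>
    intro a b ha hav h hv
    cases h with | cons_cons h h' =>
      have hw : w ∈ S₁ := hside a w h ha hav
      have hwv : w ≠ v := fun e => hv (by simp [e])
      have := ih w b hw hwv h' (fun e => hv (List.mem_cons_of_mem _ e))
      exact ⟨List.Chain.cons ⟨ha, hw, h⟩ this.1, this.2⟩

lemma glue (hdisj : ∀ x, x ∈ S₁ → x ∈ S₂ → x = v)
    (hv₁ : v ∈ S₁) (hv₂ : v ∈ S₂)
    (hstep : ∀ x y, R x y → (x ∈ S₁ ∧ y ∈ S₁) ∨ (x ∈ S₂ ∧ y ∈ S₂))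
    (hirr : ∀ x, ¬ R x x)
    (h₁ : ∀ x, ¬ Relation.TransGen (fun a b => a ∈ S₁ ∧ b ∈ S₁ ∧ R a b) x x)
    (h₂ : ∀ x, ¬ Relation.TransGen (fun a b => a ∈ S₂ ∧ b ∈ S₂ ∧ R a b) x x) :
    ∀ x, ¬ Relation.TransGen R x x := by
  have hside₁ : ∀ x y, R x y → x ∈ S₁ → x ≠ v → y ∈ S₁ := by
    intro x y h hx hxv
    rcases hstep x y h with ⟨_, hy⟩ | ⟨hx', _⟩
    · exact hy
    · exact absurd (hdisj x hx hx') hxv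
  have hside₂ : ∀ x y, R x y → x ∈ S₂ → x ≠ v → y ∈ S₂ := by
    intro x y h hx hxv
    rcases hstep x y h with ⟨hx', _⟩ | ⟨_, hy⟩
    · exact absurd (hdisj x hx' hx) hxv
    · exact hy
  -- walk starting at v, avoiding v in interior, is one-sided
  have atv : ∀ (l : List V), List.Chain R v (l ++ [v]) → v ∉ l → False := by
    intro l h hvl
    cases l with
    | nil => cases h with | cons_cons h _ => exact hirr v h
    | cons w m =>
      cases h with | cons_cons h h' =>
        have hwv : w ≠ v := fun e => hvl (by simp [e])
        rcases hstep v w h with ⟨_, hw⟩ | ⟨_, hw⟩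
        · have hc := side_chain hside₁ m w v hw hwv h'
            (fun e => hvl (List.mem_cons_of_mem _ e))
          exact h₁ v (chain_to_transGen (w :: m) v v
            (List.Chain.cons ⟨hv₁, hw, h⟩ hc.1))
        · have hc := side_chain hside₂ m w v hw hwv h'
            (fun e => hvl (List.mem_cons_of_mem _ e))
          exact h₂ v (chain_to_transGen (w :: m) v v
            (List.Chain.cons ⟨hv₂, hw, h⟩ hc.1))
  -- no closed walk at v, by strong induction on length
  have novloop : ∀ (n : ℕ) (l : List V), l.length = n → List.Chain R v (l ++ [v]) → False := by
    intro n
    induction n using Nat.strong_induction_on with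
    | _ n IH =>
      intro l hlen h
      by_cases hvl : v ∈ l
      · obtain ⟨l₁, l₂, rfl⟩ := List.append_of_mem hvl
        rw [List.append_assoc] at h
        have h' := (List.isChain_cons_split.1 h).1
        exact IH l₁.length (by simp [← hlen]) l₁ rfl h'
      · exact atv l h hvl
  intro x hx
  obtain ⟨l, hl⟩ := transGen_to_chain hx
  by_cases hvmem : v = x ∨ v ∈ l
  · rcases hvmem with rfl | hvl
    · exact novloop l.length l rfl hl
    · obtain ⟨l₁, l₂, rfl⟩ := List.append_of_mem hvl
      rw [List.append_assoc] at hl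
      have hsplit := List.isChain_cons_split.1 hl
      have hjoin : List.Chain R v ((l₂ ++ x :: l₁) ++ [v]) := by
        rw [List.append_assoc, List.cons_append]
        exact List.isChain_cons_split.2 ⟨hsplit.2, hsplit.1⟩
      exact novloop _ _ rfl hjoin
  · push_neg at hvmem
    cases l with
    | nil => cases hl with | cons_cons h _ => exact hirr x h
    | cons w m =>
      cases hl with | cons_cons h h' =>
        have hxv : x ≠ v := fun e => hvmem.1 e.symm
        have hvm : v ∉ w :: m := hvmem.2
        rcases hstep x w h with ⟨hx', _⟩ | ⟨hx', _⟩
        · have hc := side_chain hside₁ (w :: m) x x hx' hxv (List.Chain.cons h h') hvm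
          exact h₁ x (chain_to_transGen (w :: m) x x hc.1)
        · have hc := side_chain hside₂ (w :: m) x x hx' hxv (List.Chain.cons h h') hvm
          exact h₂ x (chain_to_transGen (w :: m) x x hc.1)
end Glue

section Restrict
variable {V : Type} {R : V → V → Prop} {t : V}

lemma noOutRestrict (h0 : ∀ y, ¬ R t y) :
    ∀ {a b}, Relation.TransGen R a b → b ≠ t →
      Relation.TransGen (fun x y => R x y ∧ x ≠ t ∧ y ≠ t) a b := by
  intro a b h
  induction h with
  | single h1 =>
    intro hb
    exact .single ⟨h1, fun ha => h0 _ (ha ▸ h1), hb⟩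
  | @tail b c h1 h2 ih =>
    intro hc
    have hb : b ≠ t := fun e => h0 _ (e ▸ h2)
    exact .tail (ih hb) ⟨h2, hb, hc⟩

lemma noInRestrict (h0 : ∀ y, ¬ R y t) :
    ∀ {a b}, Relation.TransGen R a b → a ≠ t →
      Relation.TransGen (fun x y => R x y ∧ x ≠ t ∧ y ≠ t) a b := by
  intro a b h
  induction h using Relation.TransGen.head_induction_on with
  | single h1 =>
    intro ha
    exact .single ⟨h1, ha, fun hb => h0 _ (hb ▸ h1)⟩
  | @head a c h1 h2 ih =>
    intro ha
    have hc : c ≠ t := fun e => h0 _ (e ▸ h1)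
    exact .head ⟨h1, ha, hc⟩ (ih hc)
end Restrict

lemma degen {V : Type} [Fintype V] (G : Digraph' V) (k : ℕ) (hk : 0 < k) (S : Set V)
    (hS : ∀ T ⊆ S, T.Nonempty → ∃ t ∈ T,
      {y | y ∈ T ∧ G.Adj t y}.ncard < k ∨ {y | y ∈ T ∧ G.Adj y t}.ncard < k) :
    ∃ f : V → Fin k, ∀ c : Fin k, G.AcyclicSet {v | v ∈ S ∧ f v = c} := by
  generalize hn : S.ncard = n
  induction n using Nat.strong_induction_on generalizing S with
  | _ n IH =>
  rcases S.eq_empty_or_nonempty with rfl | hne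
  · refine ⟨fun _ => ⟨0, hk⟩, fun c v hv => ?_⟩
    cases hv with
    | single h => exact h.1.1
    | tail _ h => exact h.2.1.1
  obtain ⟨t, htS, hdeg⟩ := hS S le_rfl hne
  set S' : Set V := S \ {t} with hS'
  have hsub : S' ⊆ S := Set.diff_subset
  have hcard : S'.ncard < n := by
    rw [← hn]
    exact Set.ncard_lt_ncard (Set.sdiff_singleton_ssubset.2 htS) S.toFinite
  obtain ⟨f, hf⟩ := IH S'.ncard hcard S' (fun T hT => hS T (hT.trans hsub)) rfl
  rcases hdeg with hout | hin
  · -- out case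
    have hB : {y | y ∈ S' ∧ G.Adj t y} = {y | y ∈ S ∧ G.Adj t y} := by
      ext y
      constructor
      · rintro ⟨hy, h⟩; exact ⟨hy.1, h⟩
      · rintro ⟨hy, h⟩; exact ⟨⟨hy, fun e => G.irrefl t (e ▸ h)⟩, h⟩
    have himg : (f '' {y | y ∈ S' ∧ G.Adj t y}) ≠ Set.univ := by
      intro he
      have h1 : (f '' {y | y ∈ S' ∧ G.Adj t y}).ncard ≤ {y | y ∈ S' ∧ G.Adj t y}.ncard :=
        Set.ncard_image_le (Set.toFinite _)
      rw [he, Set.ncard_univ, Nat.card_eq_fintype_card, Fintype.card_fin, hB] at h1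
      omega
    obtain ⟨c, hc⟩ := (Set.ne_univ_iff_exists_notMem _).1 himg
    classical
    refine ⟨Function.update f t c, fun c' => ?_⟩
    by_cases hcc : c' = c
    · rw [hcc]
      -- t has no out-edge in class
      intro x hx
      have hnoout : ∀ y, ¬ (fun a b => a ∈ {v | v ∈ S ∧ Function.update f t c v = c} ∧
          b ∈ {v | v ∈ S ∧ Function.update f t c v = c} ∧ G.Adj a b) t y := by
        rintro y ⟨_, ⟨hyS, hyc⟩, hadj⟩
        have hyt : y ≠ t := fun e => G.irrefl t (e ▸ hadj)
        rw [Function.update_of_ne hyt] at hyc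
        exact hc ⟨y, ⟨⟨hyS, hyt⟩, hadj⟩, hyc⟩
      have hxt : x ≠ t := by
        rcases Relation.TransGen.head'_iff.1 hx with ⟨b, h, _⟩
        exact fun e => hnoout _ (e ▸ h)
      have := noOutRestrict hnoout hx hxt
      refine hf c x (Relation.TransGen.mono ?_ _ _ this)
      rintro a b ⟨⟨⟨haS, hac⟩, ⟨hbS, hbc⟩, hadj⟩, hat, hbt⟩
      rw [Function.update_of_ne hat] at hac
      rw [Function.update_of_ne hbt] at hbc
      exact ⟨⟨⟨haS, hat⟩, hac⟩, ⟨⟨hbS, hbt⟩, hbc⟩, hadj⟩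
    · -- class without t
      intro x hx
      refine hf c' x (Relation.TransGen.mono ?_ _ _ hx)
      rintro a b ⟨⟨haS, hac⟩, ⟨hbS, hbc⟩, hadj⟩
      have hat : a ≠ t := by
        rintro rfl; rw [Function.update_self] at hac; exact hcc hac.symm
      have hbt : b ≠ t := by
        rintro rfl; rw [Function.update_self] at hbc; exact hcc hbc.symm
      rw [Function.update_of_ne hat] at hac
      rw [Function.update_of_ne hbt] at hbc
      exact ⟨⟨⟨haS, hat⟩, hac⟩, ⟨⟨hbS, hbt⟩, hbc⟩, hadj⟩
  · -- in case (dual)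
    have hB : {y | y ∈ S' ∧ G.Adj y t} = {y | y ∈ S ∧ G.Adj y t} := by
      ext y
      constructor
      · rintro ⟨hy, h⟩; exact ⟨hy.1, h⟩
      · rintro ⟨hy, h⟩; exact ⟨⟨hy, fun e => G.irrefl t (e ▸ h)⟩, h⟩
    have himg : (f '' {y | y ∈ S' ∧ G.Adj y t}) ≠ Set.univ := by
      intro he
      have h1 : (f '' {y | y ∈ S' ∧ G.Adj y t}).ncard ≤ {y | y ∈ S' ∧ G.Adj y t}.ncard :=
        Set.ncard_image_le (Set.toFinite _)
      rw [he, Set.ncard_univ, Nat.card_eq_fintype_card, Fintype.card_fin, hB] at h1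
      omega
    obtain ⟨c, hc⟩ := (Set.ne_univ_iff_exists_notMem _).1 himg
    classical
    refine ⟨Function.update f t c, fun c' => ?_⟩
    by_cases hcc : c' = c
    · rw [hcc]
      intro x hx
      have hnoin : ∀ y, ¬ (fun a b => a ∈ {v | v ∈ S ∧ Function.update f t c v = c} ∧
          b ∈ {v | v ∈ S ∧ Function.update f t c v = c} ∧ G.Adj a b) y t := by
        rintro y ⟨⟨hyS, hyc⟩, _, hadj⟩
        have hyt : y ≠ t := fun e => G.irrefl t (e ▸ hadj)
        rw [Function.update_of_ne hyt] at hyc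
        exact hc ⟨y, ⟨⟨hyS, hyt⟩, hadj⟩, hyc⟩
      have hxt : x ≠ t := by
        rcases Relation.TransGen.tail'_iff.1 hx with ⟨b, _, h⟩
        exact fun e => hnoin _ (e ▸ h)
      have := noInRestrict hnoin hx hxt
      refine hf c x (Relation.TransGen.mono ?_ _ _ this)
      rintro a b ⟨⟨⟨haS, hac⟩, ⟨hbS, hbc⟩, hadj⟩, hat, hbt⟩
      rw [Function.update_of_ne hat] at hac
      rw [Function.update_of_ne hbt] at hbc
      exact ⟨⟨⟨haS, hat⟩, hac⟩, ⟨⟨hbS, hbt⟩, hbc⟩, hadj⟩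
    · intro x hx
      refine hf c' x (Relation.TransGen.mono ?_ _ _ hx)
      rintro a b ⟨⟨haS, hac⟩, ⟨hbS, hbc⟩, hadj⟩
      have hat : a ≠ t := by
        rintro rfl; rw [Function.update_self] at hac; exact hcc hac.symm
      have hbt : b ≠ t := by
        rintro rfl; rw [Function.update_self] at hbc; exact hcc hbc.symm
      rw [Function.update_of_ne hat] at hac
      rw [Function.update_of_ne hbt] at hbc
      exact ⟨⟨⟨haS, hat⟩, hac⟩, ⟨⟨hbS, hbt⟩, hbc⟩, hadj⟩

lemma exists_boundary {V : Type} [Fintype V] (G : Digraph' V) (k : ℕ)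
    (hreg : ∀ v : V, G.outDeg v = k ∧ G.inDeg v = k) (hconn : G.Connected)
    (T : Set V) (hne : T.Nonempty) (hproper : T ≠ Set.univ) :
    ∃ t ∈ T, {y | y ∈ T ∧ G.Adj t y}.ncard < k ∨ {y | y ∈ T ∧ G.Adj y t}.ncard < k := by
  obtain ⟨x, hx⟩ := (Set.ne_univ_iff_exists_notMem _).1 hproper
  obtain ⟨s, hs⟩ := hne
  have hexit : ∀ s x : V, Relation.ReflTransGen (fun a b => G.Adj a b ∨ G.Adj b a) s x →
      s ∈ T → x ∉ T → ∃ u ∈ T, ∃ w, w ∉ T ∧ (G.Adj u w ∨ G.Adj w u) := by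
    intro s x h
    induction h with
    | refl => intro hs hx; exact absurd hs hx
    | @tail b c h1 h2 ih =>
      intro hs hx
      by_cases hb : b ∈ T
      · exact ⟨b, hb, c, hx, h2⟩
      · exact ih hs hb
  obtain ⟨u, hu, w, hw, hadj⟩ := hexit s x (hconn.2 s x) hs hx
  rcases hadj with hadj | hadj
  · refine ⟨u, hu, Or.inl ?_⟩
    have hlt : {y | y ∈ T ∧ G.Adj u y}.ncard < {y | G.Adj u y}.ncard := by
      refine Set.ncard_lt_ncard ⟨fun y hy => hy.2, fun hsub => hw (hsub hadj).1⟩ (Set.toFinite _)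
    have heq : {y | G.Adj u y}.ncard = k := by
      rw [← Nat.card_coe_set_eq]
      exact (hreg u).1
    omega
  · refine ⟨u, hu, Or.inr ?_⟩
    have hlt : {y | y ∈ T ∧ G.Adj y u}.ncard < {y | G.Adj y u}.ncard := by
      refine Set.ncard_lt_ncard ⟨fun y hy => hy.2, fun hsub => hw (hsub hadj).1⟩ (Set.toFinite _)
    have heq : {y | G.Adj y u}.ncard = k := by
      rw [← Nat.card_coe_set_eq]
      exact (hreg u).2
    omega

/-- A connected `k`-regular digraph with `χ⃗(G) = k + 1` that is none of the
exceptional digraphs has a 2-connected underlying graph (connected, at least 3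
vertices, and no cutvertex). -/
theorem underlying_two_connected {V : Type} [Fintype V] (G : Digraph' V) (k : ℕ)
    (hreg : ∀ v : V, G.outDeg v = k ∧ G.inDeg v = k) (hc : G.Connected)
    (hchi : G.dichromaticNumber = k + 1)
    (h1 : ¬ G.IsDirectedCycle) (h2 : ¬ G.IsSymmetricOddCycle)
    (h3 : ¬ G.IsSymmetricComplete) :
    G.Connected ∧ 3 ≤ Nat.card V ∧
      ∀ v : V, (G.induce {u : V | u ≠ v}).Connected := by
  classical
  -- Step 1: k ≥ 1
  have hk : 0 < k := by
    by_contra hk0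
    push_neg at hk0
    have hk0 : k = 0 := Nat.le_zero.1 hk0
    have hno : ∀ v w : V, ¬ G.Adj v w := by
      intro v w h
      haveI : Nonempty {w' : V // G.Adj v w'} := ⟨⟨w, h⟩⟩
      have hpos : 0 < Nat.card {w' : V // G.Adj v w'} := Nat.card_pos
      have := (hreg v).1
      rw [Digraph'.outDeg] at this
      omega
    have hsub : ∀ x y : V, x = y := by
      intro x y
      have h := hc.2 x y
      induction h with
      | refl => rfl
      | tail h1 h2 ih =>
        rcases h2 with h2 | h2
        · exact absurd h2 (hno _ _)
        · exact absurd h2 (hno _ _)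
    exact h3 (fun x y => ⟨fun h => absurd h (hno x y), fun hne => absurd (hsub x y) hne⟩)
  -- Step 2: |V| ≥ 3
  have h3V : 3 ≤ Nat.card V := by
    by_contra hlt
    push_neg at hlt
    apply h3
    intro x y
    constructor
    · intro h e
      exact G.irrefl y (e ▸ h)
    · intro hne
      have hall : ∀ w : V, w = x ∨ w = y := by
        intro w
        by_contra hw
        push_neg at hw
        have : 2 < Fintype.card V :=
          Fintype.two_lt_card_iff.2 ⟨x, y, w, hne, hw.1.symm, hw.2.symm⟩
        rw [← Nat.card_eq_fintype_card] at this
        omega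
      have hne' : Nonempty {w' : V // G.Adj x w'} := by
        by_contra he
        have : Nat.card {w' : V // G.Adj x w'} = 0 := by
          rw [Nat.card_eq_zero]
          exact Or.inl (not_nonempty_iff.1 he)
        have h2 := (hreg x).1
        rw [Digraph'.outDeg] at h2
        omega
      obtain ⟨w, hw⟩ := hne'
      rcases hall w with rfl | rfl
      · exact absurd hw (G.irrefl _)
      · exact hw
  refine ⟨hc, h3V, ?_⟩
  intro v
  have hcard1 : 1 < Fintype.card V := by
    rw [← Nat.card_eq_fintype_card]; omega
  constructor
  · obtain ⟨u, hu⟩ := Fintype.exists_ne_of_one_lt_card hcard1 v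
    exact ⟨⟨u, hu⟩⟩
  intro xs ys
  by_contra hnot
  -- the component of x in G - v
  set Rel' : V → V → Prop := fun a b => (G.Adj a b ∨ G.Adj b a) ∧ a ≠ v ∧ b ≠ v with hRel'
  set C₁ : Set V := {u | u ≠ v ∧ Relation.ReflTransGen Rel' ↑xs u} with hC₁
  have hlift : ∀ u : V, Relation.ReflTransGen Rel' ↑xs u → ∀ hu : u ∈ {u : V | u ≠ v},
      Relation.ReflTransGen
        (fun a b : ↥{u : V | u ≠ v} =>
          (G.induce {u : V | u ≠ v}).Adj a b ∨ (G.induce {u : V | u ≠ v}).Adj b a)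
        xs ⟨u, hu⟩ := by
    intro u h
    induction h with
    | refl => intro hu; exact Relation.ReflTransGen.refl
    | @tail b u' h1 h2 ih =>
      intro hu
      have hb : b ∈ {u : V | u ≠ v} := h2.2.1
      exact (ih hb).tail h2.1
  have hyC : (↑ys : V) ∉ C₁ := by
    rintro ⟨hy, hpath⟩
    exact hnot (hlift _ hpath hy)
  have hx₁ : (↑xs : V) ∈ C₁ := ⟨xs.2, Relation.ReflTransGen.refl⟩
  set C₂ : Set V := {u | u ≠ v ∧ u ∉ C₁} with hC₂
  have hy₂ : (↑ys : V) ∈ C₂ := ⟨ys.2, hyC⟩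
  have hno12 : ∀ a ∈ C₁, ∀ b : V, b ≠ v → (G.Adj a b ∨ G.Adj b a) → b ∈ C₁ := by
    intro a ha b hb hadj
    exact ⟨hb, ha.2.tail ⟨hadj, ha.1, hb⟩⟩
  set S₁ : Set V := insert v C₁ with hS₁
  set S₂ : Set V := insert v C₂ with hS₂
  have hyS₁ : (↑ys : V) ∉ S₁ := by
    rintro (he | he)
    · exact ys.2 he
    · exact hyC he
  have hxS₂ : (↑xs : V) ∉ S₂ := by
    rintro (he | he)
    · exact xs.2 he
    · exact he.2 hx₁
  obtain ⟨f₁, hf₁⟩ := degen G k hk S₁ (by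
    intro T hT hTne
    refine exists_boundary G k hreg hc T hTne ?_
    intro he
    exact hyS₁ (hT (he ▸ Set.mem_univ _)))
  obtain ⟨f₂, hf₂⟩ := degen G k hk S₂ (by
    intro T hT hTne
    refine exists_boundary G k hreg hc T hTne ?_
    intro he
    exact hxS₂ (hT (he ▸ Set.mem_univ _)))
  set σ : Fin k ≃ Fin k := Equiv.swap (f₁ v) (f₂ v) with hσ
  set f : V → Fin k := fun u => if u ∈ S₁ then f₁ u else σ (f₂ u) with hf
  have hvS₁ : v ∈ S₁ := Set.mem_insert _ _
  have hvS₂ : v ∈ S₂ := Set.mem_insert _ _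
  have hfS₁ : ∀ u ∈ S₁, f u = f₁ u := by
    intro u hu; simp only [hf, if_pos hu]
  have hdisj : ∀ z : V, z ∈ S₁ → z ∈ S₂ → z = v := by
    rintro z (rfl | hz1) hz2
    · rfl
    · rcases hz2 with rfl | hz2
      · rfl
      · exact absurd hz1 hz2.2
  have hfS₂ : ∀ u ∈ S₂, f u = σ (f₂ u) := by
    intro u hu
    by_cases h1 : u ∈ S₁
    · have : u = v := hdisj u h1 hu
      subst this
      rw [hfS₁ u h1, hσ]
      exact (Equiv.swap_apply_right _ _).symm
    · simp only [hf, if_neg h1]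
  have hdico : G.Dicolourable k := by
    refine ⟨f, fun c => ?_⟩
    have hcover : ∀ u : V, u ∈ S₁ ∨ u ∈ S₂ := by
      intro u
      by_cases hu : u = v
      · exact Or.inl (hu ▸ hvS₁)
      by_cases h1 : u ∈ C₁
      · exact Or.inl (Set.mem_insert_of_mem _ h1)
      · exact Or.inr (Set.mem_insert_of_mem _ ⟨hu, h1⟩)
    refine glue (v := v) (S₁ := S₁) (S₂ := S₂)
      (R := fun a b => a ∈ {u : V | f u = c} ∧ b ∈ {u : V | f u = c} ∧ G.Adj a b)
      hdisj hvS₁ hvS₂ ?_ ?_ ?_ ?_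
    · -- hstep
      rintro a b ⟨-, -, hadj⟩
      rcases hcover a with ha | ha
      · rcases ha with rfl | ha
        · -- a = v
          rcases hcover b with hb | hb
          · exact Or.inl ⟨hvS₁, hb⟩
          · exact Or.inr ⟨hvS₂, hb⟩
        · -- a ∈ C₁
          rcases hcover b with hb | hb
          · exact Or.inl ⟨Set.mem_insert_of_mem _ ha, hb⟩
          · rcases hb with rfl | hb
            · exact Or.inl ⟨Set.mem_insert_of_mem _ ha, hvS₁⟩
            · exact absurd (hno12 a ha b hb.1 (Or.inl hadj)) hb.2
      · rcases ha with rfl | ha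
        · rcases hcover b with hb | hb
          · exact Or.inl ⟨hvS₁, hb⟩
          · exact Or.inr ⟨hvS₂, hb⟩
        · rcases hcover b with hb | hb
          · rcases hb with rfl | hb
            · exact Or.inr ⟨Set.mem_insert_of_mem _ ha, hvS₂⟩
            · exact absurd (hno12 b hb a ha.1 (Or.inr hadj)) ha.2
          · exact Or.inr ⟨Set.mem_insert_of_mem _ ha, hb⟩
    · -- hirr
      rintro z ⟨-, -, hadj⟩
      exact G.irrefl z hadj
    · -- h₁
      intro z hz
      refine hf₁ c z (Relation.TransGen.mono ?_ _ _ hz)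
      rintro a b ⟨ha, hb, hfa, hfb, hadj⟩
      have hfa' : f₁ a = c := by rw [← hfS₁ a ha]; exact hfa
      have hfb' : f₁ b = c := by rw [← hfS₁ b hb]; exact hfb
      exact ⟨⟨ha, hfa'⟩, ⟨hb, hfb'⟩, hadj⟩
    · -- h₂
      intro z hz
      refine hf₂ (σ.symm c) z (Relation.TransGen.mono ?_ _ _ hz)
      rintro a b ⟨ha, hb, hfa, hfb, hadj⟩
      have hfa' : σ (f₂ a) = c := by rw [← hfS₂ a ha]; exact hfa
      have hfb' : σ (f₂ b) = c := by rw [← hfS₂ b hb]; exact hfb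
      exact ⟨⟨ha, (σ.apply_eq_iff_eq_symm_apply).1 hfa'⟩,
        ⟨hb, (σ.apply_eq_iff_eq_symm_apply).1 hfb'⟩, hadj⟩
  have hle : G.dichromaticNumber ≤ k := Nat.sInf_le hdico
  rw [hchi] at hle
  omega
end

section
/- Let k ≥ 3 and let G be a vertex-minimal digraph with Δ_max(G) = k and χ⃗(G) = k + 1 whose every component is not a directed cycle, symmetric odd cycle or symmetric complete graph. Then G does not contain, as an induced subdigraph, the symmetric complete graph on k+1 vertices minus one arc, nor minus one digon. -/
namespace Aux
open Digraph'
variable {V : Type}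

lemma outDeg_eq_ncard (G : Digraph' V) (v : V) : G.outDeg v = {w | G.Adj v w}.ncard :=
  Nat.card_coe_set_eq _

lemma inDeg_eq_ncard (G : Digraph' V) (v : V) : G.inDeg v = {w | G.Adj w v}.ncard :=
  Nat.card_coe_set_eq _

lemma dmax_le_DeltaMax [Finite V] (G : Digraph' V) (v : V) : G.dmax v ≤ G.DeltaMax :=
  le_csSup (Set.finite_range _).bddAbove (Set.mem_range_self v)

lemma outDeg_le_DeltaMax [Finite V] (G : Digraph' V) (v : V) : G.outDeg v ≤ G.DeltaMax :=
  le_trans (le_max_left _ _) (dmax_le_DeltaMax G v)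

lemma inDeg_le_DeltaMax [Finite V] (G : Digraph' V) (v : V) : G.inDeg v ≤ G.DeltaMax :=
  le_trans (le_max_right _ _) (dmax_le_DeltaMax G v)

lemma induce_outDeg_le [Finite V] (G : Digraph' V) (U : Set V) (v : U) :
    (G.induce U).outDeg v ≤ G.outDeg ↑v := by
  apply Nat.card_le_card_of_injective
    (fun w => (⟨↑w.1, w.2⟩ : {w : V // G.Adj ↑v w}))
  intro x y h
  have := congrArg Subtype.val h
  exact Subtype.ext (Subtype.ext this)

lemma induce_inDeg_le [Finite V] (G : Digraph' V) (U : Set V) (v : U) :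
    (G.induce U).inDeg v ≤ G.inDeg ↑v := by
  apply Nat.card_le_card_of_injective
    (fun w => (⟨↑w.1, w.2⟩ : {w : V // G.Adj w ↑v}))
  intro x y h
  have := congrArg Subtype.val h
  exact Subtype.ext (Subtype.ext this)

lemma induce_DeltaMax_le [Finite V] (G : Digraph' V) (U : Set V) :
    (G.induce U).DeltaMax ≤ G.DeltaMax := by
  by_cases hU : Nonempty U
  · apply csSup_le (Set.range_nonempty _)
    rintro n ⟨v, rfl⟩
    calc (G.induce U).dmax v ≤ G.dmax ↑v :=
          max_le_max (induce_outDeg_le G U v) (induce_inDeg_le G U v)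
      _ ≤ G.DeltaMax := dmax_le_DeltaMax G ↑v
  · have : Set.range (G.induce U).dmax = ∅ := by
      simp [Set.range_eq_empty_iff, not_nonempty_iff.mp hU]
    rw [DeltaMax, this, csSup_empty]
    exact Nat.zero_le _

lemma dicolourable_mono {G : Digraph' V} {j j' : ℕ} (h : j ≤ j')
    (hG : G.Dicolourable j) : G.Dicolourable j' := by
  obtain ⟨f, hf⟩ := hG
  refine ⟨fun v => Fin.castLE h (f v), fun c v hv => ?_⟩
  obtain ⟨b, h1, -⟩ := Relation.TransGen.head'_iff.mp hv
  have hvmem : Fin.castLE h (f v) = c := h1.1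
  apply hf (f v) v
  refine Relation.TransGen.mono ?_ _ _ hv
  rintro x y ⟨hx, hy, hxy⟩
  refine ⟨?_, ?_, hxy⟩ <;> · apply Fin.castLE_injective h; simp_all

/-- Sink removal: if `a` has no `R`-successor, any `R`-path ends at `a` or avoids `a`. -/
lemma transGen_avoid {α : Type*} {R : α → α → Prop} {a : α} (ha : ∀ y, ¬ R a y)
    {v w : α} (h : Relation.TransGen R v w) :
    w = a ∨ Relation.TransGen (fun x y => R x y ∧ x ≠ a ∧ y ≠ a) v w := by
  induction h with
  | single h =>
    have hv : v ≠ a := fun hv => ha _ (hv ▸ h)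
    rename_i w'
    by_cases hw : w' = a
    · exact Or.inl hw
    · exact Or.inr (Relation.TransGen.single ⟨h, hv, hw⟩)
  | tail h hstep ih =>
    rename_i w' z
    rcases ih with rfl | ih
    · exact absurd hstep (ha _)
    · have hw : w' ≠ a := fun hw => ha _ (hw ▸ hstep)
      by_cases hz : z = a
      · exact Or.inl hz
      · exact Or.inr (ih.tail ⟨hstep, hw, hz⟩)

lemma transGen_cycle_avoid {α : Type*} {R : α → α → Prop} {a : α} (ha : ∀ y, ¬ R a y)
    {v : α} (h : Relation.TransGen R v v) :
    v ≠ a ∧ Relation.TransGen (fun x y => R x y ∧ x ≠ a ∧ y ≠ a) v v := by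
  have hv : v ≠ a := by
    rintro rfl
    obtain ⟨b, h1, -⟩ := Relation.TransGen.head'_iff.mp h
    exact ha _ h1
  rcases transGen_avoid ha h with rfl | h'
  · exact absurd rfl hv
  · exact ⟨hv, h'⟩

/-- Lift a TransGen whose relation forces membership in `U` to the subtype. -/
lemma transGen_subtype {α : Type*} (U : Set α) (R : α → α → Prop)
    (Rs : U → U → Prop)
    (hdom : ∀ x y, R x y → x ∈ U ∧ y ∈ U)
    (hR : ∀ x y (hx : x ∈ U) (hy : y ∈ U), R x y → Rs ⟨x, hx⟩ ⟨y, hy⟩) :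
    ∀ {v w : α}, Relation.TransGen R v w → ∀ (hv : v ∈ U) (hw : w ∈ U),
      Relation.TransGen Rs ⟨v, hv⟩ ⟨w, hw⟩ := by
  intro v w h
  induction h with
  | single h => exact fun hv hw => Relation.TransGen.single (hR _ _ hv hw h)
  | tail h hstep ih =>
    intro hv hw
    have hm := (hdom _ _ hstep).1
    exact (ih hv hm).tail (hR _ _ hm hw hstep)


lemma ncard_lt_card {α : Type} [Finite α] {s : Set α} {x : α} (hx : x ∉ s) :
    s.ncard < Nat.card α := by
  rw [← Set.ncard_univ]
  exact Set.ncard_lt_ncard ⟨Set.subset_univ s, fun h => hx (h (Set.mem_univ x))⟩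
    Set.finite_univ

lemma exists_notin_of_ncard_lt {α : Type} [Finite α] {s : Set α}
    (h : s.ncard < Nat.card α) : ∃ c, c ∉ s := by
  by_contra hc
  push_neg at hc
  have : s = Set.univ := Set.eq_univ_of_forall hc
  rw [this, Set.ncard_univ] at h
  omega

lemma greedy_aux : ∀ (n : ℕ) (V : Type) [Finite V], Nat.card V < n →
    ∀ (G : Digraph' V) (d : ℕ), (∀ v, G.outDeg v ≤ d) → G.Dicolourable (d + 1) := by
  intro n
  induction n with
  | zero => intro V _ h; omega
  | succ n ih =>
    intro V _ hcard G d hdeg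
    by_cases hE : IsEmpty V
    · exact ⟨fun v => (hE.false v).elim, fun c v => (hE.false v).elim⟩
    have hne : Nonempty V := not_isEmpty_iff.mp hE
    obtain ⟨v0⟩ := hne
    set U : Set V := {v0}ᶜ with hUdef
    have hcardU : Nat.card ↥U < Nat.card V := by
      rw [Nat.card_coe_set_eq]
      exact ncard_lt_card (x := v0) (by simp [hUdef])
    have hdegU : ∀ v : ↥U, (G.induce U).outDeg v ≤ d :=
      fun v => le_trans (induce_outDeg_le G U v) (hdeg ↑v)
    obtain ⟨g, hg⟩ := ih U (by omega) (G.induce U) d hdegU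
    -- choose colour for v0 avoiding out-neighbours' colours
    set I : Set (Fin (d + 1)) := g '' {w : ↥U | G.Adj v0 ↑w} with hIdef
    have hI : I.ncard ≤ d := by
      have h2 : {w : ↥U | G.Adj v0 ↑w}.ncard ≤ G.outDeg v0 := by
        rw [← Nat.card_coe_set_eq]
        apply Nat.card_le_card_of_injective
          (fun w => (⟨↑w.1.1, w.2⟩ : {w : V // G.Adj v0 w}))
        intro x y h
        have := congrArg Subtype.val h
        exact Subtype.ext (Subtype.ext this)
      exact le_trans (Set.ncard_image_le (Set.toFinite _)) (le_trans h2 (hdeg v0))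
    obtain ⟨c0, hc0⟩ : ∃ c, c ∉ I := by
      apply exists_notin_of_ncard_lt
      simp only [Nat.card_eq_fintype_card, Fintype.card_fin]
      omega
    classical
    refine ⟨fun v => if h : v ∈ U then g ⟨v, h⟩ else c0, fun c v hv => ?_⟩
    set f : V → Fin (d + 1) := fun v => if h : v ∈ U then g ⟨v, h⟩ else c0 with hfdef
    have hf0 : f v0 = c0 := by simp [hfdef, hUdef]
    have hfU : ∀ v (h : v ∈ U), f v = g ⟨v, h⟩ := by intro v h; simp [hfdef, h]
    -- v0 is a sink in its class
    have hsink : ∀ y, ¬ (v0 ∈ {v | f v = c} ∧ y ∈ {v | f v = c} ∧ G.Adj v0 y) := by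
      rintro y ⟨h1, h2, h3⟩
      have hyU : y ∈ U := fun hy => G.irrefl v0 ((Set.eq_of_mem_singleton hy) ▸ h3)
      apply hc0
      rw [hIdef]
      refine ⟨⟨y, hyU⟩, h3, ?_⟩
      have := hfU y hyU
      simp only [Set.mem_setOf_eq] at h1 h2
      rw [this] at h2
      rw [h2, ← h1, hf0]
    obtain ⟨-, hv'⟩ := transGen_cycle_avoid hsink hv
    have hvU : v ∈ U := by
      obtain ⟨b, h1, -⟩ := Relation.TransGen.head'_iff.mp hv'
      intro hmem
      exact h1.2.1 (Set.eq_of_mem_singleton hmem)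
    apply hg c ⟨v, hvU⟩
    refine transGen_subtype U _ _ ?_ ?_ hv' hvU hvU
    · rintro x y ⟨⟨hx, hy, -⟩, hx0, hy0⟩
      constructor <;> · intro h; first | exact hx0 (Set.eq_of_mem_singleton h) |
        exact hy0 (Set.eq_of_mem_singleton h)
    · rintro x y hx hy ⟨⟨h1, h2, h3⟩, -, -⟩
      exact ⟨by simpa [hfU x hx] using h1, by simpa [hfU y hy] using h2, h3⟩

lemma greedy {V : Type} [Finite V] (G : Digraph' V) (d : ℕ)
    (hdeg : ∀ v, G.outDeg v ≤ d) : G.Dicolourable (d + 1) :=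
  greedy_aux (Nat.card V + 1) V (by omega) G d hdeg
section Transfer
variable {α β : Type} {G : Digraph' α} {H : Digraph' β} (e : α ≃ β)
  (he : ∀ x y, G.Adj x y ↔ H.Adj (e x) (e y))
include he

lemma adj_symm_transfer : ∀ x y, H.Adj x y ↔ G.Adj (e.symm x) (e.symm y) := by
  intro x y
  rw [he (e.symm x) (e.symm y)]
  simp

lemma outDeg_transfer (v : α) : G.outDeg v = H.outDeg (e v) :=
  Nat.card_congr (Equiv.subtypeEquiv e (fun w => he v w))

lemma inDeg_transfer (v : α) : G.inDeg v = H.inDeg (e v) :=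
  Nat.card_congr (Equiv.subtypeEquiv e (fun w => he w v))

lemma dmax_transfer (v : α) : G.dmax v = H.dmax (e v) := by
  rw [Digraph'.dmax, Digraph'.dmax, outDeg_transfer e he, inDeg_transfer e he]

lemma DeltaMax_transfer : G.DeltaMax = H.DeltaMax := by
  rw [Digraph'.DeltaMax, Digraph'.DeltaMax]
  congr 1
  ext n
  constructor
  · rintro ⟨v, rfl⟩; exact ⟨e v, (dmax_transfer e he v).symm⟩
  · rintro ⟨w, rfl⟩
    refine ⟨e.symm w, ?_⟩
    rw [dmax_transfer e he (e.symm w)]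
    simp

lemma dicolourable_transfer_fwd {k : ℕ} (hG : G.Dicolourable k) : H.Dicolourable k := by
  obtain ⟨f, hf⟩ := hG
  refine ⟨fun w => f (e.symm w), fun c v hv => ?_⟩
  apply hf c (e.symm v)
  refine Relation.TransGen.lift e.symm ?_ _ _ hv
  rintro x y ⟨h1, h2, h3⟩
  exact ⟨h1, h2, (adj_symm_transfer e he x y).mp h3⟩

lemma dicolourable_transfer {k : ℕ} : G.Dicolourable k ↔ H.Dicolourable k := by
  constructor
  · exact dicolourable_transfer_fwd e he
  · apply dicolourable_transfer_fwd e.symm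
    intro x y
    rw [adj_symm_transfer e he]

lemma dichromaticNumber_transfer : G.dichromaticNumber = H.dichromaticNumber := by
  rw [Digraph'.dichromaticNumber, Digraph'.dichromaticNumber]
  congr 1
  ext j
  exact dicolourable_transfer e he

lemma component_transfer (v u : α) :
    u ∈ G.component v ↔ e u ∈ H.component (e v) := by
  constructor
  · intro h
    refine Relation.ReflTransGen.lift e ?_ _ _ h
    intro x y hxy
    rcases hxy with h' | h'
    · exact Or.inl ((he x y).mp h')
    · exact Or.inr ((he y x).mp h')
  · intro h
    have h2 : Relation.ReflTransGen (fun a b => G.Adj a b ∨ G.Adj b a)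
        (e.symm (e v)) (e.symm (e u)) := by
      refine Relation.ReflTransGen.lift e.symm ?_ _ _ h
      intro x y hxy
      rcases hxy with h' | h'
      · exact Or.inl ((adj_symm_transfer e he x y).mp h')
      · exact Or.inr ((adj_symm_transfer e he y x).mp h')
    simp only [Equiv.symm_apply_apply] at h2
    exact h2

lemma exception_transfer {k : ℕ} (hG : G.IsException k) : H.IsException k := by
  have hcard : Nat.card α = Nat.card β := Nat.card_congr e
  rcases hG with ⟨hk, n, hn, e1, h1⟩ | ⟨hk, n, hn, hodd, e1, h1⟩ | ⟨hk, hsc, hc⟩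
  · refine Or.inl ⟨hk, n, hn, e.symm.trans e1, fun x y => ?_⟩
    rw [adj_symm_transfer e he, h1]
    rfl
  · refine Or.inr (Or.inl ⟨hk, n, hn, hodd, e.symm.trans e1, fun x y => ?_⟩)
    rw [adj_symm_transfer e he, h1]
    rfl
  · refine Or.inr (Or.inr ⟨hk, fun x y => ?_, hcard ▸ hc⟩)
    rw [adj_symm_transfer e he, hsc]
    simp [not_iff_not]

end Transfer

section CompTransfer
variable {α β : Type} {G : Digraph' α} {H : Digraph' β} (e : α ≃ β)
  (he : ∀ x y, G.Adj x y ↔ H.Adj (e x) (e y))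
include he

/-- Transfer of exceptional components. -/
lemma component_exception_transfer {k : ℕ} (v : α)
    (h : (G.induce (G.component v)).IsException k) :
    (H.induce (H.component (e v))).IsException k := by
  refine exception_transfer
    (G := G.induce (G.component v)) (H := H.induce (H.component (e v)))
    (Equiv.subtypeEquiv e (fun u => component_transfer e he v u)) ?_ h
  intro x y
  exact he ↑x ↑y

end CompTransfer
lemma counting {V : Type} [Finite V] {P A : Set V} {q : V} {k : ℕ}
    (hPk : P.ncard ≤ k) (hAP : A ⊆ P) (hA : A.ncard = k) (hq : q ∉ A) (hqP : q ∈ P) :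
    False := by
  have h1 : insert q A ⊆ P := Set.insert_subset hqP hAP
  have h2 : (insert q A).ncard = k + 1 := by
    rw [Set.ncard_insert_of_notMem hq (Set.toFinite A), hA]
  have := Set.ncard_le_ncard h1 (Set.toFinite P)
  omega

lemma rest_dicolourable {V : Type} [Fintype V] (G : Digraph' V) (k : ℕ)
    (hk : 3 ≤ k) (hd : G.DeltaMax = k)
    (hcomp : ∀ v : V, ¬ (G.induce (G.component v)).IsException k)
    (hmin : ∀ m : ℕ, m < Nat.card V → ∀ H : Digraph' (Fin m),
      ¬ (H.DeltaMax = k ∧ H.dichromaticNumber = k + 1 ∧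
          ∀ v : Fin m, ¬ (H.induce (H.component v)).IsException k))
    (S : Set V) (hS : S.Nonempty) : (G.induce Sᶜ).Dicolourable k := by
  by_contra hnd
  set Gs := G.induce Sᶜ with hGs
  have hDle : Gs.DeltaMax ≤ k := hd ▸ induce_DeltaMax_le G Sᶜ
  have hgreedy : ∀ d, (∀ v : ↥(Sᶜ), Gs.outDeg v ≤ d) → Gs.Dicolourable (d + 1) :=
    fun d h => greedy Gs d h
  have hDeq : Gs.DeltaMax = k := by
    rcases eq_or_lt_of_le hDle with h | h
    · exact h
    · exfalso
      apply hnd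
      have h1 : Gs.Dicolourable (Gs.DeltaMax + 1) :=
        hgreedy _ (fun v => outDeg_le_DeltaMax Gs v)
      exact dicolourable_mono (by omega) h1
  have hdick1 : Gs.Dicolourable (k + 1) := by
    apply hgreedy
    intro v
    exact hDeq ▸ outDeg_le_DeltaMax Gs v
  have hchiGs : Gs.dichromaticNumber = k + 1 := by
    apply le_antisymm (Nat.sInf_le hdick1)
    apply le_csInf ⟨k + 1, by exact hdick1⟩
    intro j hj
    by_contra hcon
    push_neg at hcon
    exact hnd (dicolourable_mono (by omega) hj)
  -- transport to `Fin m` and apply minimality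
  set m := Nat.card ↥(Sᶜ) with hm
  have hmlt : m < Nat.card V := by
    obtain ⟨s, hs⟩ := hS
    rw [hm, Nat.card_coe_set_eq]
    exact ncard_lt_card (x := s) (fun h => h hs)
  set e : ↥(Sᶜ) ≃ Fin m := Finite.equivFin ↥(Sᶜ) with he'
  set H : Digraph' (Fin m) := ⟨fun x y => Gs.Adj (e.symm x) (e.symm y),
    fun x h => Gs.irrefl _ h⟩ with hH
  have he : ∀ x y, Gs.Adj x y ↔ H.Adj (e x) (e y) := by
    intro x y
    show _ ↔ Gs.Adj (e.symm (e x)) (e.symm (e y))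
    simp
  have hHd : H.DeltaMax = k := (DeltaMax_transfer e he).symm.trans hDeq
  have hHchi : H.dichromaticNumber = k + 1 :=
    (dichromaticNumber_transfer e he).symm.trans hchiGs
  have := hmin m hmlt H
  push_neg at this
  obtain ⟨v, hv⟩ := this hHd hHchi
  -- transfer back
  have hexc : (Gs.induce (Gs.component (e.symm v))).IsException k := by
    have := component_exception_transfer (G := H) (H := Gs) e.symm
      (fun x y => Iff.rfl) v hv
    exact this
  set w : ↥(Sᶜ) := e.symm v with hw
  rcases hexc with ⟨h1, -⟩ | ⟨h1, -⟩ | ⟨-, hsc, hcard⟩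
  · omega
  · omega
  set C : Set ↥(Sᶜ) := Gs.component w with hC
  set C' : Set V := Subtype.val '' C with hC'
  have hC'card : C'.ncard = k + 1 := by
    rw [hC', Set.ncard_image_of_injective _ Subtype.val_injective,
      ← Nat.card_coe_set_eq]
    exact hcard
  have hadjC : ∀ x y : ↥(Sᶜ), x ∈ C → y ∈ C → (x : V) ≠ ↑y → G.Adj ↑x ↑y := by
    intro x y hx hy hne
    have := (hsc ⟨x, hx⟩ ⟨y, hy⟩).mpr (fun h => hne (by
      have := congrArg (fun t => ((t : ↥C) : ↥(Sᶜ)).1) h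
      exact this))
    exact this
  -- every vertex of C' has all its neighbours inside C'
  have hclosed : ∀ p ∈ C', ∀ q : V, (G.Adj p q ∨ G.Adj q p) → q ∈ C' := by
    rintro p hp q hq
    by_contra hqn
    obtain ⟨x, hx, rfl⟩ := hp
    have hxC' : (x : V) ∈ C' := ⟨x, hx, rfl⟩
    have hA : (C' \ {(x : V)}).ncard = k := by
      rw [Set.ncard_diff_singleton_of_mem hxC', hC'card]
      omega
    rcases hq with hq | hq
    · refine counting (P := {z | G.Adj ↑x z}) (A := C' \ {(x : V)}) (q := q)
        ?_ ?_ hA ?_ hq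
      · rw [← outDeg_eq_ncard]
        exact hd ▸ outDeg_le_DeltaMax G ↑x
      · rintro z ⟨⟨y, hy, rfl⟩, hz2⟩
        exact hadjC x y hx hy (fun h => hz2 (by simp [← h]))
      · exact fun h => hqn h.1
    · refine counting (P := {z | G.Adj z ↑x}) (A := C' \ {(x : V)}) (q := q)
        ?_ ?_ hA ?_ hq
      · rw [← inDeg_eq_ncard]
        exact hd ▸ inDeg_le_DeltaMax G ↑x
      · rintro z ⟨⟨y, hy, rfl⟩, hz2⟩
        exact hadjC y x hy hx (fun h => hz2 (by simp [h]))
      · exact fun h => hqn h.1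
  have hcompeq : G.component (↑w) = C' := by
    apply Set.eq_of_subset_of_subset
    · intro u hu
      induction hu with
      | refl => exact ⟨w, Relation.ReflTransGen.refl, rfl⟩
      | tail h step ih => exact hclosed _ ih _ step
    · rintro u ⟨x, hx, rfl⟩
      have : Relation.ReflTransGen (fun a b => G.Adj a b ∨ G.Adj b a) ↑w ↑x := by
        refine Relation.ReflTransGen.lift Subtype.val ?_ _ _ hx
        rintro p q (h | h)
        · exact Or.inl h
        · exact Or.inr h
      exact this
  apply hcomp ↑w
  refine Or.inr (Or.inr ⟨hk, ?_, ?_⟩)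
  · intro p q
    constructor
    · intro h hpq
      rw [hpq] at h
      exact G.irrefl ↑q h
    · intro hpq
      have hp : (p : V) ∈ C' := hcompeq ▸ p.2
      have hq : (q : V) ∈ C' := hcompeq ▸ q.2
      obtain ⟨x, hx, hxe⟩ := hp
      obtain ⟨y, hy, hye⟩ := hq
      have : (x : V) ≠ ↑y := by
        rw [hxe, hye]
        exact fun h => hpq (Subtype.ext h)
      have := hadjC x y hx hy this
      rw [hxe, hye] at this
      exact this
  · rw [Nat.card_coe_set_eq, hcompeq, hC'card]

end Aux

open Aux in
/-- A vertex-minimal digraph with `Δ_max = k ≥ 3` and `χ⃗ = k + 1`, none of whose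
components is exceptional, contains no induced `↔K_{k+1}` minus one arc, nor minus
one digon. -/
theorem no_almost_complete_induced {V : Type} [Fintype V] (G : Digraph' V) (k : ℕ)
    (hk : 3 ≤ k) (hd : G.DeltaMax = k) (hchi : G.dichromaticNumber = k + 1)
    (hcomp : ∀ v : V, ¬ (G.induce (G.component v)).IsException k)
    (hmin : ∀ m : ℕ, m < Nat.card V → ∀ H : Digraph' (Fin m),
      ¬ (H.DeltaMax = k ∧ H.dichromaticNumber = k + 1 ∧
          ∀ v : Fin m, ¬ (H.induce (H.component v)).IsException k)) :
    ¬ ∃ (S : Set V) (a b : S), a ≠ b ∧ Nat.card S = k + 1 ∧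
        ((∀ x y : S, (G.induce S).Adj x y ↔ (x ≠ y ∧ ¬ (x = a ∧ y = b))) ∨
         (∀ x y : S, (G.induce S).Adj x y ↔
            (x ≠ y ∧ ¬ ((x = a ∧ y = b) ∨ (x = b ∧ y = a))))) := by
  classical
  rintro ⟨S, a, b, hab, hScard, hcase⟩
  set A : V := ↑a with hA
  set B : V := ↑b with hB
  have hAB : A ≠ B := fun h => hab (Subtype.ext h)
  have hAS : A ∈ S := a.2
  have hBS : B ∈ S := b.2
  have fact1 : ∀ x y : S, x ≠ y → ¬(x = a ∧ y = b) → ¬(x = b ∧ y = a) →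
      G.Adj ↑x ↑y := by
    intro x y h1 h2 h3
    rcases hcase with hc | hc
    · exact (hc x y).mpr ⟨h1, h2⟩
    · exact (hc x y).mpr ⟨h1, by tauto⟩
  have fact2 : ¬ G.Adj A B := by
    rcases hcase with hc | hc
    · intro h
      exact ((hc a b).mp h).2 ⟨rfl, rfl⟩
    · intro h
      exact ((hc a b).mp h).2 (Or.inl ⟨rfl, rfl⟩)
  have hSncard : S.ncard = k + 1 := by
    rw [← Nat.card_coe_set_eq]; exact hScard
  -- adjacency when the target is not a or b
  have fact4 : ∀ x y : S, x ≠ y → (y : V) ≠ A → (y : V) ≠ B → G.Adj ↑x ↑y := by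
    intro x y h1 h2 h3
    exact fact1 x y h1 (fun h => h3 (congrArg Subtype.val h.2))
      (fun h => h2 (congrArg Subtype.val h.2))
  -- adjacency when the source is not a or b
  have fact3 : ∀ x y : S, x ≠ y → (x : V) ≠ A → (x : V) ≠ B → G.Adj ↑x ↑y := by
    intro x y h1 h2 h3
    exact fact1 x y h1 (fun h => h2 (congrArg Subtype.val h.1))
      (fun h => h3 (congrArg Subtype.val h.1))
  have hout_le : ∀ v : V, {z | G.Adj v z}.ncard ≤ k := by
    intro v
    rw [← outDeg_eq_ncard]
    exact hd ▸ outDeg_le_DeltaMax G v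
  -- saturation: vertices of S other than A, B have all out-neighbours in S
  have hsat : ∀ x : S, (x : V) ≠ A → (x : V) ≠ B → ∀ z, G.Adj ↑x z → z ∈ S := by
    intro x hxA hxB z hz
    by_contra hzS
    refine counting (P := {z | G.Adj ↑x z}) (A := S \ {(x : V)}) (q := z)
      (hout_le _) ?_ ?_ (fun h => hzS h.1) hz
    · rintro w ⟨hwS, hwx⟩
      refine fact3 x ⟨w, hwS⟩ ?_ hxA hxB
      intro h
      apply hwx
      rw [h]
      exact rfl
    · rw [Set.ncard_diff_singleton_of_mem x.2, hSncard]
      omega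
  -- a colouring of the complement of S
  obtain ⟨g, hg⟩ := rest_dicolourable G k hk hd hcomp hmin S ⟨A, hAS⟩
  -- outside out-neighbours of A and B are rare
  set OA : Set V := {z | G.Adj A z ∧ z ∉ S} with hOA
  set OB : Set V := {z | G.Adj B z ∧ z ∉ S} with hOB
  have hSab_sub_outA : S \ {A, B} ⊆ {z | G.Adj A z} := by
    rintro w ⟨hwS, hw2⟩
    simp only [Set.mem_insert_iff, Set.mem_singleton_iff, not_or] at hw2
    exact fact4 a ⟨w, hwS⟩ (fun h => hw2.1 (congrArg Subtype.val h).symm) hw2.1 hw2.2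
  have hSab_sub_outB : S \ {A, B} ⊆ {z | G.Adj B z} := by
    rintro w ⟨hwS, hw2⟩
    simp only [Set.mem_insert_iff, Set.mem_singleton_iff, not_or] at hw2
    exact fact4 b ⟨w, hwS⟩ (fun h => hw2.2 (congrArg Subtype.val h).symm) hw2.1 hw2.2
  have hSabcard : (S \ {A, B}).ncard = k - 1 := by
    rw [Set.ncard_diff (by rintro z (rfl | rfl); exacts [hAS, hBS]) (Set.toFinite _),
      Set.ncard_pair hAB, hSncard]
    omega
  have hOAcard : OA.ncard ≤ 1 := by
    have hdisj : Disjoint (S \ {A, B}) OA := by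
      rw [Set.disjoint_left]
      rintro z ⟨hz1, -⟩ ⟨-, hz2⟩
      exact hz2 hz1
    have hsub : (S \ {A, B}) ∪ OA ⊆ {z | G.Adj A z} := by
      rintro z (hz | hz)
      · exact hSab_sub_outA hz
      · exact hz.1
    have := le_trans (Set.ncard_le_ncard hsub (Set.toFinite _)) (hout_le A)
    rw [Set.ncard_union_eq hdisj (Set.toFinite _) (Set.toFinite _), hSabcard] at this
    omega
  have hOBcard : OB.ncard ≤ 1 := by
    have hdisj : Disjoint (S \ {A, B}) OB := by
      rw [Set.disjoint_left]
      rintro z ⟨hz1, -⟩ ⟨-, hz2⟩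
      exact hz2 hz1
    have hsub : (S \ {A, B}) ∪ OB ⊆ {z | G.Adj B z} := by
      rintro z (hz | hz)
      · exact hSab_sub_outB hz
      · exact hz.1
    have := le_trans (Set.ncard_le_ncard hsub (Set.toFinite _)) (hout_le B)
    rw [Set.ncard_union_eq hdisj (Set.toFinite _) (Set.toFinite _), hSabcard] at this
    omega
  -- the bad colours
  set W : Set ↥(Sᶜ) := {z | G.Adj A ↑z ∨ G.Adj B ↑z} with hW
  set bad : Set (Fin k) := g '' W with hbad
  have hbadcard : bad.ncard ≤ 2 := by
    have h1 : bad.ncard ≤ W.ncard := Set.ncard_image_le (Set.toFinite _)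
    have h2 : W.ncard = (Subtype.val '' W).ncard :=
      (Set.ncard_image_of_injective _ Subtype.val_injective).symm
    have h3 : Subtype.val '' W ⊆ OA ∪ OB := by
      rintro z ⟨⟨z', hz'⟩, hzW, rfl⟩
      rcases hzW with h | h
      · exact Or.inl ⟨h, hz'⟩
      · exact Or.inr ⟨h, hz'⟩
    have h4 := le_trans (Set.ncard_le_ncard h3 (Set.toFinite _))
      (Set.ncard_union_le _ _)
    omega
  obtain ⟨c0, hc0⟩ : ∃ c : Fin k, c ∉ bad := by
    apply exists_notin_of_ncard_lt
    simp only [Nat.card_eq_fintype_card, Fintype.card_fin]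
    omega
  -- the bijection between S \ {A,B} and the non-c0 colours
  set Sab : Set V := {v | v ∈ S ∧ v ≠ A ∧ v ≠ B} with hSab
  have hSabEq : Sab = S \ {A, B} := by
    ext v
    simp only [hSab, Set.mem_setOf_eq, Set.mem_diff, Set.mem_insert_iff,
      Set.mem_singleton_iff, not_or]
  have hSabN : Nat.card ↥Sab = k - 1 := by
    rw [Nat.card_coe_set_eq, hSabEq, hSabcard]
  have hQN : Nat.card {c : Fin k // c ≠ c0} = k - 1 := by
    rw [Nat.card_eq_fintype_card, Fintype.card_subtype_compl]
    simp
  set σ : ↥Sab ≃ {c : Fin k // c ≠ c0} :=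
    (Finite.equivFinOfCardEq hSabN).trans (Finite.equivFinOfCardEq hQN).symm with hσ
  -- the colouring of G
  set f : V → Fin k := fun v =>
    if hv : v ∈ S then
      (if h2 : v = A ∨ v = B then c0
       else ↑(σ ⟨v, hv, (not_or.mp h2).1, (not_or.mp h2).2⟩))
    else g ⟨v, hv⟩ with hf
  have hfA : f A = c0 := by simp [hf, hAS]
  have hfB : f B = c0 := by simp [hf, hBS]
  have hfSab : ∀ v (hv : v ∈ S) (h1 : v ≠ A) (h2 : v ≠ B),
      f v = ↑(σ ⟨v, hv, h1, h2⟩) := by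
    intro v hv h1 h2
    simp [hf, hv, h1, h2]
  have hfT : ∀ v (hv : v ∉ S), f v = g ⟨v, hv⟩ := by
    intro v hv
    simp [hf, hv]
  -- G is k-dicolourable: contradiction
  have hdic : G.Dicolourable k := by
    refine ⟨f, ?_⟩
    intro c v hv
    by_cases hcc : c = c0
    · rw [hcc] at hv
      clear hcc
      -- A is a sink of the class
      have hsinkA : ∀ y, ¬ (A ∈ {v | f v = c0} ∧ y ∈ {v | f v = c0} ∧ G.Adj A y) := by
        rintro y ⟨-, h2, h3⟩
        simp only [Set.mem_setOf_eq] at h2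
        by_cases hyS : y ∈ S
        · by_cases hyA : y = A
          · exact G.irrefl A (hyA ▸ h3)
          by_cases hyB : y = B
          · exact fact2 (hyB ▸ h3)
          exact (σ ⟨y, hyS, hyA, hyB⟩).2 (by rw [← hfSab y hyS hyA hyB, h2])
        · apply hc0
          rw [hbad]
          exact ⟨⟨y, hyS⟩, Or.inl h3, by rw [← hfT y hyS, h2]⟩
      obtain ⟨-, hv1⟩ := transGen_cycle_avoid hsinkA hv
      have hsinkB : ∀ y, ¬ ((B ∈ {v | f v = c0} ∧ y ∈ {v | f v = c0} ∧ G.Adj B y)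
          ∧ B ≠ A ∧ y ≠ A) := by
        rintro y ⟨⟨-, h2, h3⟩, -, hyA⟩
        simp only [Set.mem_setOf_eq] at h2
        by_cases hyS : y ∈ S
        · by_cases hyB : y = B
          · exact G.irrefl B (hyB ▸ h3)
          exact (σ ⟨y, hyS, hyA, hyB⟩).2 (by rw [← hfSab y hyS hyA hyB, h2])
        · apply hc0
          rw [hbad]
          exact ⟨⟨y, hyS⟩, Or.inr h3, by rw [← hfT y hyS, h2]⟩
      obtain ⟨-, hv2⟩ := transGen_cycle_avoid hsinkB hv1
      -- remaining cycle lives outside S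
      have hmem : ∀ x : V, f x = c0 → x ≠ A → x ≠ B → x ∈ Sᶜ := by
        intro x h1 h2 h3 hxS
        exact (σ ⟨x, hxS, h2, h3⟩).2 (by rw [← hfSab x hxS h2 h3, h1])
      have hvmem : v ∈ Sᶜ := by
        obtain ⟨u, h1, -⟩ := Relation.TransGen.head'_iff.mp hv2
        exact hmem v h1.1.1.1 h1.1.2.1 h1.2.1
      apply hg c0 ⟨v, hvmem⟩
      refine transGen_subtype Sᶜ _ _ ?_ ?_ hv2 hvmem hvmem
      · rintro x y ⟨⟨⟨hx1, hy1, -⟩, hxA, hyA⟩, hxB, hyB⟩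
        exact ⟨hmem x hx1 hxA hxB, hmem y hy1 hyA hyB⟩
      · rintro x y hx hy ⟨⟨⟨hx1, hy1, hadj⟩, -, -⟩, -, -⟩
        refine ⟨?_, ?_, hadj⟩
        · show g ⟨x, hx⟩ = c0
          rw [← hfT x hx]
          exact hx1
        · show g ⟨y, hy⟩ = c0
          rw [← hfT y hy]
          exact hy1
    · -- c ≠ c0 : the unique vertex of S coloured c is a sink
      set s : ↥Sab := σ.symm ⟨c, hcc⟩ with hs
      have hsS : (s : V) ∈ S := s.2.1
      have hsA : (s : V) ≠ A := s.2.2.1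
      have hsB : (s : V) ≠ B := s.2.2.2
      have hkey : ∀ u, u ∈ S → f u = c → u = ↑s := by
        intro u huS huc
        have huA : u ≠ A := by
          rintro rfl
          rw [hfA] at huc
          exact hcc huc.symm
        have huB : u ≠ B := by
          rintro rfl
          rw [hfB] at huc
          exact hcc huc.symm
        rw [hfSab u huS huA huB] at huc
        have h2 : σ ⟨u, huS, huA, huB⟩ = ⟨c, hcc⟩ := Subtype.ext huc
        have h3 : (⟨u, huS, huA, huB⟩ : ↥Sab) = σ.symm ⟨c, hcc⟩ := by
          rw [← h2, Equiv.symm_apply_apply]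
        exact congrArg Subtype.val h3
      have hsinks : ∀ y, ¬ ((↑s : V) ∈ {v | f v = c} ∧ y ∈ {v | f v = c}
          ∧ G.Adj ↑s y) := by
        rintro y ⟨-, h2, h3⟩
        simp only [Set.mem_setOf_eq] at h2
        have hyS : y ∈ S := hsat ⟨↑s, hsS⟩ hsA hsB y h3
        have hy : y = ↑s := hkey y hyS h2
        exact G.irrefl ↑s (hy ▸ h3)
      obtain ⟨-, hv1⟩ := transGen_cycle_avoid hsinks hv
      have hmem2 : ∀ x, f x = c → x ≠ ↑s → x ∈ Sᶜ := by
        intro x h1 h2 hxS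
        exact h2 (hkey x hxS h1)
      have hvmem : v ∈ Sᶜ := by
        obtain ⟨u, h1, -⟩ := Relation.TransGen.head'_iff.mp hv1
        exact hmem2 v h1.1.1 h1.2.1
      apply hg c ⟨v, hvmem⟩
      refine transGen_subtype Sᶜ _ _ ?_ ?_ hv1 hvmem hvmem
      · rintro x y ⟨⟨hx1, hy1, -⟩, hxs, hys⟩
        exact ⟨hmem2 x hx1 hxs, hmem2 y hy1 hys⟩
      · rintro x y hx hy ⟨⟨hx1, hy1, hadj⟩, -, -⟩
        refine ⟨?_, ?_, hadj⟩
        · show g ⟨x, hx⟩ = c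
          rw [← hfT x hx]
          exact hx1
        · show g ⟨y, hy⟩ = c
          rw [← hfT y hy]
          exact hy1
  rw [Digraph'.dichromaticNumber] at hchi
  have := Nat.sInf_le (show k ∈ {j | G.Dicolourable j} from hdic)
  omega
end

section
/- Let G be a digraph with χ⃗(G) = Δ_max(G) + 1 = k + 1 and let M be a maximal induced acyclic subdigraph of G. Then χ⃗(G − M) = k. -/
namespace DigraphAux

open Digraph'

variable {V : Type}

/-- If `v` has no outgoing edge under `R`, then any `TransGen R` path ending away
from `v` avoids `v` entirely. -/
lemma transGen_avoid {R : V → V → Prop} {v : V} (hv : ¬ ∃ w, R v w) :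
    ∀ {a b : V}, Relation.TransGen R a b → b ≠ v →
      a ≠ v ∧ Relation.TransGen (fun x y => R x y ∧ x ≠ v ∧ y ≠ v) a b := by
  intro a b h
  induction h with
  | @single b hab =>
      intro hb
      have ha : a ≠ v := by rintro rfl; exact hv ⟨_, hab⟩
      exact ⟨ha, .single ⟨hab, ha, hb⟩⟩
  | @tail b c h₁ h₂ ih =>
      intro hc
      have hb : b ≠ v := by rintro rfl; exact hv ⟨_, h₂⟩
      obtain ⟨ha, ht⟩ := ih hb
      exact ⟨ha, ht.tail ⟨h₂, hb, hc⟩⟩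

lemma transGen_subtype {S : Set V} {R : V → V → Prop}
    (hR : ∀ x y, R x y → x ∈ S ∧ y ∈ S) :
    ∀ {a b : V}, Relation.TransGen R a b → ∀ (ha : a ∈ S) (hb : b ∈ S),
      Relation.TransGen (fun x y : S => R x y) ⟨a, ha⟩ ⟨b, hb⟩ := by
  intro a b h
  induction h with
  | @single b hab => intro ha hb; exact .single hab
  | @tail b c h₁ h₂ ih => intro ha hc; exact (ih ha (hR _ _ h₂).1).tail h₂

lemma acyclic_of_induce (G : Digraph' V) {S C : Set V} (hC : C ⊆ S)
    (h : (G.induce S).AcyclicSet {u : S | ↑u ∈ C}) : G.AcyclicSet C := by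
  intro v hv
  have hvC : v ∈ C := by
    cases hv with
    | single h' => exact h'.2.1
    | tail _ h' => exact h'.2.1
  have hvS : v ∈ S := hC hvC
  exact h ⟨v, hvS⟩
    (transGen_subtype (fun x y hxy => ⟨hC hxy.1, hC hxy.2.1⟩) hv hvS hvS)

lemma dicolourable_of_outDeg (n : ℕ) :
    ∀ (V : Type) [Fintype V] (G : Digraph' V) (k : ℕ),
      Fintype.card V ≤ n → (∀ v, G.outDeg v < k) → G.Dicolourable k := by
  induction n with
  | zero =>
      intro V _ G k hc _
      have : IsEmpty V := Fintype.card_eq_zero_iff.mp (Nat.le_zero.mp hc)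
      exact ⟨fun v => isEmptyElim v, fun c v => isEmptyElim v⟩
  | succ n ih =>
      intro V _ G k hc hdeg
      classical
      by_cases hV : IsEmpty V
      · exact ⟨fun v => isEmptyElim v, fun c v => isEmptyElim v⟩
      obtain ⟨v⟩ := not_isEmpty_iff.mp hV
      set S : Set V := {u | u ≠ v} with hS
      have hcard : Fintype.card S ≤ n := by
        have hlt : Fintype.card {u : V // u ≠ v} < Fintype.card V :=
          Fintype.card_subtype_lt (x := v) (by simp)
        have : Fintype.card S = Fintype.card {u : V // u ≠ v} := by
          apply Fintype.card_congr; rfl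
        omega
      have hinj : Function.Injective
          (fun w : {w : S // G.Adj v ↑w} => (⟨↑w.1, w.2⟩ : {w : V // G.Adj v w})) := by
        intro a b hab
        simp only [Subtype.mk.injEq] at hab
        exact Subtype.ext (Subtype.ext hab)
      have hdegle : Nat.card {w : S // G.Adj v ↑w} ≤ G.outDeg v :=
        Nat.card_le_card_of_injective _ hinj
      have hdeg' : ∀ u : S, (G.induce S).outDeg u < k := by
        intro u
        refine lt_of_le_of_lt ?_ (hdeg ↑u)
        exact Nat.card_le_card_of_injective
          (fun w : {w : S // G.Adj ↑u ↑w} => (⟨↑w.1, w.2⟩ : {w : V // G.Adj ↑u w}))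
          (by intro a b hab
              simp only [Subtype.mk.injEq] at hab
              exact Subtype.ext (Subtype.ext hab))
      obtain ⟨f', hf'⟩ := ih S (G.induce S) k hcard hdeg'
      let T : Finset (Fin k) := Finset.univ.image (fun w : {w : S // G.Adj v ↑w} => f' w.1)
      have hTcard : T.card < k := by
        have h1 : T.card ≤ Fintype.card {w : S // G.Adj v ↑w} := by
          simpa using Finset.card_image_le
            (s := (Finset.univ : Finset {w : S // G.Adj v ↑w}))
            (f := fun w => f' w.1)
        have h2 : Fintype.card {w : S // G.Adj v ↑w} = Nat.card {w : S // G.Adj v ↑w} :=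
          Nat.card_eq_fintype_card.symm
        have := hdeg v
        omega
      obtain ⟨c, hc⟩ : ∃ c : Fin k, c ∉ T := by
        by_contra hcon
        push_neg at hcon
        have : T = Finset.univ := Finset.eq_univ_iff_forall.mpr hcon
        rw [this, Finset.card_univ, Fintype.card_fin] at hTcard
        omega
      refine ⟨fun u => if h : u = v then c else f' ⟨u, h⟩, ?_⟩
      intro c' u hu
      set f : V → Fin k := fun u => if h : u = v then c else f' ⟨u, h⟩ with hf
      by_cases hex : ∃ w, v ∈ {x : V | f x = c'} ∧ w ∈ {x : V | f x = c'} ∧ G.Adj v w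
      · obtain ⟨w, hv', hw', hadj⟩ := hex
        have hvv : f v = c := dif_pos rfl
        have hwv : w ≠ v := fun h => G.irrefl v (h ▸ hadj)
        have hfw : f w = f' ⟨w, hwv⟩ := dif_neg hwv
        have hcT : c ∈ T := by
          have heq : f' ⟨w, hwv⟩ = c := by
            rw [← hfw]
            have h1 : f w = c' := hw'
            have h2 : f v = c' := hv'
            rw [h1, ← h2, hvv]
          exact Finset.mem_image.mpr ⟨⟨⟨w, hwv⟩, hadj⟩, Finset.mem_univ _, heq⟩
        exact absurd hcT hc
      · have huv : u ≠ v := by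
          rintro rfl
          obtain ⟨w', h, -⟩ := Relation.TransGen.head'_iff.mp hu
          exact hex ⟨_, h⟩
        obtain ⟨-, ht⟩ := transGen_avoid hex hu huv
        have ht' := transGen_subtype (S := S) (fun x y h => ⟨h.2.1, h.2.2⟩) ht huv huv
        refine hf' c' ⟨u, huv⟩ (Relation.TransGen.mono ?_ _ _ ht')
        rintro x y ⟨⟨hx, hy, hadj⟩, hxv, hyv⟩
        refine ⟨?_, ?_, hadj⟩
        · show f' x = c'
          have hx' : (if h : (x : V) = v then c else f' ⟨↑x, h⟩) = c' := hx
          rwa [dif_neg (show ¬(x : V) = v from x.2)] at hx'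
        · show f' y = c'
          have hy' : (if h : (y : V) = v then c else f' ⟨↑y, h⟩) = c' := hy
          rwa [dif_neg (show ¬(y : V) = v from y.2)] at hy'

end DigraphAux

/-- If `χ⃗(G) = Δ_max(G) + 1 = k + 1` and `M` is a maximal induced acyclic set,
then `χ⃗(G − M) = k`. -/
theorem dichromaticNumber_compl_maximal_acyclic {V : Type} [Fintype V]
    (G : Digraph' V) (k : ℕ) (hd : G.DeltaMax = k)
    (hchi : G.dichromaticNumber = k + 1) (M : Set V) (hac : G.AcyclicSet M)
    (hmax : ∀ v : V, v ∉ M → ¬ G.AcyclicSet (insert v M)) :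
    (G.induce Mᶜ).dichromaticNumber = k := by
  classical
  -- every vertex outside M has an out-neighbour inside M
  have hout : ∀ u : V, u ∉ M → ∃ w ∈ M, G.Adj u w := by
    intro u hu
    have h := hmax u hu
    rw [Digraph'.AcyclicSet] at h
    push_neg at h
    obtain ⟨t, ht⟩ := h
    by_cases hex : ∃ w, u ∈ insert u M ∧ w ∈ insert u M ∧ G.Adj u w
    · obtain ⟨w, _, hwm, hadj⟩ := hex
      have hwu : w ≠ u := fun h => G.irrefl u (h ▸ hadj)
      exact ⟨w, (Set.mem_insert_iff.mp hwm).resolve_left hwu, hadj⟩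
    · exfalso
      have htu : t ≠ u := by
        rintro rfl
        obtain ⟨w', h, -⟩ := Relation.TransGen.head'_iff.mp ht
        exact hex ⟨_, h⟩
      obtain ⟨-, ht'⟩ := DigraphAux.transGen_avoid hex ht htu
      refine hac t (Relation.TransGen.mono ?_ _ _ ht')
      rintro x y ⟨⟨hx, hy, hadj⟩, hxu, hyu⟩
      exact ⟨(Set.mem_insert_iff.mp hx).resolve_left hxu,
        (Set.mem_insert_iff.mp hy).resolve_left hyu, hadj⟩
  -- degree bound in the induced subdigraph
  have hdeg : ∀ u : ↥(Mᶜ), (G.induce Mᶜ).outDeg u < k := by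
    intro u
    obtain ⟨w₀, hw₀M, hadj₀⟩ := hout ↑u u.2
    have h1 : (G.induce Mᶜ).outDeg u = ({w : V | w ∈ Mᶜ ∧ G.Adj ↑u w}).ncard := by
      rw [Digraph'.outDeg, ← Nat.card_coe_set_eq]
      exact Nat.card_congr (Equiv.subtypeSubtypeEquivSubtypeInter
        (fun w : V => w ∈ Mᶜ) (fun w => G.Adj ↑u w))
    have hsub : {w : V | w ∈ Mᶜ ∧ G.Adj ↑u w} ⊂ {w : V | G.Adj ↑u w} := by
      constructor
      · intro w hw; exact hw.2
      · intro hcon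
        exact (hcon (show w₀ ∈ {w : V | G.Adj ↑u w} from hadj₀)).1 hw₀M
    have h2 : ({w : V | w ∈ Mᶜ ∧ G.Adj ↑u w}).ncard < ({w : V | G.Adj ↑u w}).ncard :=
      Set.ncard_lt_ncard hsub (Set.toFinite _)
    have h3 : ({w : V | G.Adj ↑u w}).ncard = G.outDeg ↑u :=
      (Nat.card_coe_set_eq _).symm
    have h4 : G.outDeg ↑u ≤ k := by
      have hb : BddAbove (Set.range G.dmax) := (Set.finite_range _).bddAbove
      have hmax' : G.dmax ↑u ≤ G.DeltaMax := le_csSup hb ⟨↑u, rfl⟩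
      calc G.outDeg ↑u ≤ G.dmax ↑u := le_max_left _ _
        _ ≤ G.DeltaMax := hmax'
        _ = k := hd
    omega
  -- upper bound: G - M is k-dicolourable
  have hmem : (G.induce Mᶜ).Dicolourable k :=
    DigraphAux.dicolourable_of_outDeg (Fintype.card ↥(Mᶜ)) ↥(Mᶜ) (G.induce Mᶜ) k
      le_rfl hdeg
  have hle : (G.induce Mᶜ).dichromaticNumber ≤ k := Nat.sInf_le hmem
  -- lower bound
  have hlift : ∀ j, (G.induce Mᶜ).Dicolourable j → G.Dicolourable (j + 1) := by
    rintro j ⟨f', hf'⟩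
    refine ⟨fun v => if h : v ∈ M then Fin.last j else (f' ⟨v, h⟩).castSucc, ?_⟩
    intro c
    by_cases hc : c = Fin.last j
    · subst hc
      have hset : {v : V | (if h : v ∈ M then Fin.last j
          else (f' ⟨v, h⟩).castSucc) = Fin.last j} = M := by
        ext v
        simp only [Set.mem_setOf_eq]
        constructor
        · intro hv
          by_contra hvM
          rw [dif_neg hvM] at hv
          exact (Fin.castSucc_lt_last _).ne hv
        · intro hv
          rw [dif_pos hv]
      show G.AcyclicSet {v : V | (if h : v ∈ M then Fin.last j
          else (f' ⟨v, h⟩).castSucc) = Fin.last j}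
      rw [hset]; exact hac
    · obtain ⟨c', rfl⟩ := Fin.exists_castSucc_eq.mpr hc
      apply DigraphAux.acyclic_of_induce (S := Mᶜ)
      · intro v hv
        simp only [Set.mem_setOf_eq] at hv
        by_contra hvM
        rw [Set.notMem_compl_iff] at hvM
        rw [dif_pos hvM] at hv
        exact (Fin.castSucc_lt_last c').ne' hv
      · have hset : {u : ↥(Mᶜ) | (u : V) ∈ {v : V | (if h : v ∈ M then Fin.last j
            else (f' ⟨v, h⟩).castSucc) = c'.castSucc}} = {u : ↥(Mᶜ) | f' u = c'} := by
          ext u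
          simp only [Set.mem_setOf_eq, dif_neg u.2]
          exact Fin.castSucc_inj
        rw [hset]; exact hf' c'
  have hne : Set.Nonempty {j : ℕ | (G.induce Mᶜ).Dicolourable j} :=
    ⟨k, show (G.induce Mᶜ).Dicolourable k from hmem⟩
  have hcol : (G.induce Mᶜ).Dicolourable (G.induce Mᶜ).dichromaticNumber :=
    Nat.sInf_mem hne
  have hG : G.Dicolourable ((G.induce Mᶜ).dichromaticNumber + 1) := hlift _ hcol
  have hge : k + 1 ≤ (G.induce Mᶜ).dichromaticNumber + 1 := by
    rw [← hchi]
    exact Nat.sInf_le hG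
  omega
end

section
/- Every k-tree (in the directed sense) is k-dicolourable, i.e., if G is a k-tree then χ⃗(G) ≤ k. -/
namespace Digraph'

/-- A digraph is buildable (as a `k`-tree) if it is a member of `𝓑_{k−1}`, or is
obtained from buildable digraphs by a direct composition (adding exactly one arc
between two chosen vertices) or a cyclic composition (joining `ℓ ≥ 2` buildable
digraphs cyclically through chosen vertices), up to isomorphism. -/
inductive Buildable (k : ℕ) : {V : Type} → Digraph' V → Prop
  | base {V : Type} (G : Digraph' V) : G.IsException (k - 1) → Buildable k G
  | direct {V₁ V₂ : Type} (G₁ : Digraph' V₁) (G₂ : Digraph' V₂)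
      (v₁ : V₁) (v₂ : V₂) (d : Bool) (G : Digraph' (V₁ ⊕ V₂)) :
      Buildable k G₁ → Buildable k G₂ →
      (∀ a b, G.Adj a b ↔
        ((∃ x y, a = Sum.inl x ∧ b = Sum.inl y ∧ G₁.Adj x y) ∨
         (∃ x y, a = Sum.inr x ∧ b = Sum.inr y ∧ G₂.Adj x y) ∨
         (d = true ∧ a = Sum.inl v₁ ∧ b = Sum.inr v₂) ∨
         (d = false ∧ a = Sum.inr v₂ ∧ b = Sum.inl v₁))) →
      Buildable k G
  | cyclic {n : ℕ} (hn : 2 ≤ n) (Vf : Fin n → Type) (Gf : ∀ i, Digraph' (Vf i))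
      (vf : ∀ i, Vf i) (G : Digraph' (Σ i, Vf i)) :
      (∀ i, Buildable k (Gf i)) →
      (∀ a b, G.Adj a b ↔
        ((∃ (i : Fin n) (x y : Vf i), a = ⟨i, x⟩ ∧ b = ⟨i, y⟩ ∧ (Gf i).Adj x y) ∨
         (∃ i : Fin n, a = ⟨i, vf i⟩ ∧ b = ⟨i + ⟨1, by omega⟩, vf (i + ⟨1, by omega⟩)⟩))) →
      Buildable k G
  | iso {V W : Type} (e : V ≃ W) (G : Digraph' V) (H : Digraph' W) :
      (∀ x y, G.Adj x y ↔ H.Adj (e x) (e y)) → Buildable k G → Buildable k H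

/-- A `k`-tree: a buildable digraph with `Δ_max ≤ k`. -/
def IsKTree (k : ℕ) {V : Type} (G : Digraph' V) : Prop :=
  G.DeltaMax ≤ k ∧ Buildable k G

/-- `G` is a symmetric path of odd length (an undirected path with an odd number of
edges, each edge replaced by a digon). -/
def IsSymmetricOddPath {V : Type} (G : Digraph' V) : Prop :=
  ∃ n : ℕ, 2 ≤ n ∧ Even n ∧ ∃ e : V ≃ Fin n,
    ∀ x y : V, G.Adj x y ↔ ((e y).val = (e x).val + 1 ∨ (e x).val = (e y).val + 1)

end Digraph'

namespace DicolourAux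

open Relation Digraph'
open Fin.NatCast
open Fin.CommRing

lemma noClosed_of_empty {V : Type} {r : V → V → Prop} (h : ∀ x y, ¬ r x y) (v : V) :
    ¬ Relation.TransGen r v v := by
  intro hw
  cases hw with
  | single h' => exact h _ _ h'
  | tail _ h' => exact h _ _ h'

lemma transGen_mono_lt {V : Type} {r : V → V → Prop} {φ : V → ℕ}
    (h : ∀ x y, r x y → φ x < φ y) {a b : V} (hw : Relation.TransGen r a b) :
    φ a < φ b := by
  induction hw with
  | single h' => exact h _ _ h'
  | tail _ h' ih => exact ih.trans (h _ _ h')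

lemma noClosed_of_mono {V : Type} {r : V → V → Prop} {φ : V → ℕ}
    (h : ∀ x y, r x y → φ x < φ y) (v : V) : ¬ Relation.TransGen r v v :=
  fun hw => lt_irrefl _ (transGen_mono_lt h hw)

lemma acyclic_of_subsingleton {V : Type} (G : Digraph' V) {S : Set V}
    (h : ∀ x ∈ S, ∀ y ∈ S, x = y) : G.AcyclicSet S := by
  intro v
  apply noClosed_of_empty
  rintro x y ⟨hx, hy, hadj⟩
  have hxy := h x hx y hy
  subst hxy
  exact G.irrefl x hadj

lemma acyclic_of_no_adj {V : Type} (G : Digraph' V) {S : Set V}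
    (h : ∀ x ∈ S, ∀ y ∈ S, ¬ G.Adj x y) : G.AcyclicSet S := by
  intro v
  apply noClosed_of_empty
  rintro x y ⟨hx, hy, hadj⟩
  exact h x hx y hy hadj

lemma acyclic_of_monoPhi {V : Type} (G : Digraph' V) {S : Set V} (φ : V → ℕ)
    (h : ∀ x ∈ S, ∀ y ∈ S, G.Adj x y → φ x < φ y) : G.AcyclicSet S := by
  intro v
  apply noClosed_of_mono (φ := φ)
  rintro x y ⟨hx, hy, hadj⟩
  exact h x hx y hy hadj

lemma perm_classes {V : Type} (G : Digraph' V) {k : ℕ} {f : V → Fin k}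
    (σ : Equiv.Perm (Fin k)) (hf : ∀ c, G.AcyclicSet {v | f v = c}) (c : Fin k) :
    G.AcyclicSet {v | σ (f v) = c} := by
  have hset : {v | σ (f v) = c} = {v | f v = σ.symm c} := by
    ext v
    simp [Equiv.apply_eq_iff_eq_symm_apply]
  rw [hset]
  exact hf _

/-- splitting a closed walk along a "monotone" predicate -/
lemma split {V : Type} {r : V → V → Prop} {p : V → Prop}
    (h : ∀ a b, r a b → p b → p a) {a : V} (hw : Relation.TransGen r a a) :
    Relation.TransGen (fun x y => r x y ∧ p x ∧ p y) a a ∨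
    Relation.TransGen (fun x y => r x y ∧ ¬ p x ∧ ¬ p y) a a := by
  by_cases hp : p a
  · left
    have key : ∀ x, Relation.TransGen r x a →
        p x ∧ Relation.TransGen (fun x y => r x y ∧ p x ∧ p y) x a := by
      intro x hx
      induction hx using Relation.TransGen.head_induction_on with
      | single h' => exact ⟨h _ _ h' hp, .single ⟨h', h _ _ h' hp, hp⟩⟩
      | head h' _ ihh =>
        obtain ⟨hpb, hww⟩ := ihh
        exact ⟨h _ _ h' hpb, .head ⟨h', h _ _ h' hpb, hpb⟩ hww⟩
    exact (key a hw).2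
  · right
    have key : ∀ y, Relation.TransGen r a y →
        ¬ p y ∧ Relation.TransGen (fun x y => r x y ∧ ¬ p x ∧ ¬ p y) a y := by
      intro y hy
      induction hy with
      | single h' => exact ⟨fun hpy => hp (h _ _ h' hpy), .single ⟨h', hp, fun hpy => hp (h _ _ h' hpy)⟩⟩
      | tail _ h' ihh =>
        obtain ⟨hpb, hww⟩ := ihh
        exact ⟨fun hpy => hpb (h _ _ h' hpy), .tail hww ⟨h', hpb, fun hpy => hpb (h _ _ h' hpy)⟩⟩
    exact (key a hw).2

/-- projecting a walk along an "embedding" -/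
lemma proj {A V : Type} {g : A → V} {r : V → V → Prop} {s : A → A → Prop}
    (h : ∀ u v, r u v → ∀ x, u = g x → ∃ y, v = g y ∧ s x y)
    {x : A} {b : V} (hw : Relation.TransGen r (g x) b) :
    ∃ y, b = g y ∧ Relation.TransGen s x y := by
  induction hw with
  | single h' =>
    obtain ⟨y, rfl, hs⟩ := h _ _ h' x rfl
    exact ⟨y, rfl, .single hs⟩
  | tail hww h' ih =>
    obtain ⟨y, rfl, hs⟩ := ih
    obtain ⟨z, rfl, hs'⟩ := h _ _ h' y rfl
    exact ⟨z, rfl, .tail hs hs'⟩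

/-- no closed walk in a one-arc sum composition -/
lemma sum_noClosed {V₁ V₂ : Type} {r : V₁ ⊕ V₂ → V₁ ⊕ V₂ → Prop}
    {s₁ : V₁ → V₁ → Prop} {s₂ : V₂ → V₂ → Prop}
    (h : ∀ a b, r a b →
      (∃ x y, a = Sum.inl x ∧ b = Sum.inl y ∧ s₁ x y) ∨
      (∃ x y, a = Sum.inr x ∧ b = Sum.inr y ∧ s₂ x y) ∨
      (∃ x y, a = Sum.inl x ∧ b = Sum.inr y))
    (h₁ : ∀ x, ¬ Relation.TransGen s₁ x x) (h₂ : ∀ x, ¬ Relation.TransGen s₂ x x)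
    (a : V₁ ⊕ V₂) : ¬ Relation.TransGen r a a := by
  intro hw
  have hmon : ∀ a b, r a b → (∃ x, b = Sum.inl x) → (∃ x, a = Sum.inl x) := by
    rintro a b hr ⟨y, rfl⟩
    rcases h _ _ hr with ⟨x, y', rfl, _, _⟩ | ⟨x, y', _, hb, _⟩ | ⟨x, y', _, hb⟩
    · exact ⟨x, rfl⟩
    · simp at hb
    · simp at hb
  rcases split hmon hw with hL | hR
  · have hpa : ∃ x, a = Sum.inl x := by
      cases hL with
      | single h' => exact h'.2.1
      | tail _ h' => exact h'.2.2
    obtain ⟨x, rfl⟩ := hpa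
    have hyp : ∀ u v, ((fun x y => r x y ∧ (∃ x', x = Sum.inl x') ∧ (∃ y', y = Sum.inl y')) u v) →
        ∀ z, u = Sum.inl z → ∃ w, v = Sum.inl w ∧ s₁ z w := by
      rintro u v ⟨hruv, hpu, hpv⟩ z rfl
      rcases h _ _ hruv with ⟨x', y', hx, hy, hs⟩ | ⟨x', y', hx, _, _⟩ | ⟨x', y', _, hy⟩
      · rw [Sum.inl.injEq] at hx
        subst hx
        exact ⟨y', hy, hs⟩
      · simp at hx
      · obtain ⟨z', hz'⟩ := hpv
        rw [hy] at hz'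
        simp at hz'
    obtain ⟨y, hy, hs⟩ := proj hyp hL
    rw [Sum.inl.injEq] at hy
    subst hy
    exact h₁ x hs
  · have hpa : ¬ ∃ x, a = Sum.inl x := by
      cases hR with
      | single h' => exact h'.2.1
      | tail _ h' => exact h'.2.2
    have hra : ∃ x, a = Sum.inr x := by
      cases a with
      | inl x => exact absurd ⟨x, rfl⟩ hpa
      | inr x => exact ⟨x, rfl⟩
    obtain ⟨x, rfl⟩ := hra
    have hyp : ∀ u v, ((fun x y => r x y ∧ ¬(∃ x', x = Sum.inl x') ∧ ¬(∃ y', y = Sum.inl y')) u v) →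
        ∀ z, u = Sum.inr z → ∃ w, v = Sum.inr w ∧ s₂ z w := by
      rintro u v ⟨hruv, hpu, hpv⟩ z rfl
      rcases h _ _ hruv with ⟨x', y', hx, _, _⟩ | ⟨x', y', hx, hy, hs⟩ | ⟨x', y', hx, _⟩
      · exact absurd ⟨x', hx⟩ hpu
      · rw [Sum.inr.injEq] at hx
        subst hx
        exact ⟨y', hy, hs⟩
      · exact absurd ⟨x', hx⟩ hpu
    obtain ⟨y, hy, hs⟩ := proj hyp hR
    rw [Sum.inr.injEq] at hy
    subst hy
    exact h₂ x hs

/-- counting crossings in a cyclic composition -/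
lemma cyc_count {n : ℕ} [NeZero n] {Vf : Fin n → Type} {vf : ∀ i, Vf i}
    {r : (Σ i, Vf i) → (Σ i, Vf i) → Prop}
    {rIn : (Σ i, Vf i) → (Σ i, Vf i) → Prop} {P : Fin n → Prop}
    (hr : ∀ a b : Σ i, Vf i, r a b →
      (a.1 = b.1 ∧ rIn a b) ∨
      (a = ⟨a.1, vf a.1⟩ ∧ b = ⟨a.1 + 1, vf (a.1 + 1)⟩ ∧ P a.1 ∧ P (a.1 + 1)))
    {a b : Σ i, Vf i} (hw : Relation.TransGen r a b) :
    (a.1 = b.1 ∧ Relation.TransGen rIn a b) ∨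
    (∃ t : ℕ, 0 < t ∧ b.1 = a.1 + (t : Fin n) ∧
      ∀ s : ℕ, s ≤ t → P (a.1 + (s : Fin n))) := by
  induction hw with
  | single h' =>
    rcases hr _ _ h' with ⟨he, hin⟩ | ⟨ha, hb, hP0, hP1⟩
    · exact Or.inl ⟨he, .single hin⟩
    · refine Or.inr ⟨1, one_pos, ?_, ?_⟩
      · rw [hb]
        push_cast
        rfl
      · intro s hs
        interval_cases s
        · simpa using hP0
        · push_cast
          exact hP1
  | tail hww h' ih =>
    rename_i b' c'
    rcases hr _ _ h' with ⟨he, hin⟩ | ⟨hb, hc, hP0, hP1⟩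
    · rcases ih with ⟨he', hin'⟩ | ⟨t, ht, hteq, hPs⟩
      · exact Or.inl ⟨he'.trans he, .tail hin' hin⟩
      · exact Or.inr ⟨t, ht, he ▸ hteq, hPs⟩
    · rcases ih with ⟨he', _⟩ | ⟨t, ht, hteq, hPs⟩
      · refine Or.inr ⟨1, one_pos, ?_, ?_⟩
        · have : c'.1 = b'.1 + 1 := by rw [hc]
          rw [this, ← he']
          push_cast
          rfl
        · intro s hs
          interval_cases s
          · simpa [he'] using hP0
          · rw [he']
            push_cast
            exact hP1
      · refine Or.inr ⟨t + 1, by omega, ?_, ?_⟩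
        · have : c'.1 = b'.1 + 1 := by rw [hc]
          rw [this, hteq]
          push_cast
          ring
        · intro s hs
          rcases Nat.lt_or_ge s (t + 1) with hlt | hge
          · exact hPs s (by omega)
          · have hst : s = t + 1 := by omega
            subst hst
            have : a.1 + ((t : ℕ) + 1 : ℕ) = b'.1 + 1 := by
              rw [hteq]
              push_cast
              ring
            rw [this]
            exact hP1

end DicolourAux
namespace DicolourAux
open Fin.NatCast

lemma exception_colouring {V : Type} {G : Digraph' V} {k : ℕ} (he : G.IsException (k - 1)) :
    ∃ f : V → Fin k, ∀ c, G.AcyclicSet {v | f v = c} := by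
  rcases he with ⟨h1, hcyc⟩ | ⟨h2, hcyc⟩ | ⟨h3, _, hcard⟩
  · -- directed cycle, k = 2
    have hk : k = 2 := by omega
    subst hk
    obtain ⟨n, hn, e, hadj⟩ := hcyc
    haveI : NeZero n := ⟨by omega⟩
    haveI : Fact (1 < n) := ⟨by omega⟩
    refine ⟨fun v => if e v = 0 then 0 else 1, ?_⟩
    intro c
    by_cases hc : c = 0
    · subst hc
      apply acyclic_of_subsingleton
      intro x hx y hy
      simp only [Set.mem_setOf_eq] at hx hy
      have hx' : e x = 0 := by by_contra h'; simp [h'] at hx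
      have hy' : e y = 0 := by by_contra h'; simp [h'] at hy
      exact e.injective (hx'.trans hy'.symm)
    · apply acyclic_of_monoPhi (φ := fun v => (e v).val)
      intro x hx y hy hadj'
      simp only [Set.mem_setOf_eq] at hx hy
      have hx' : e x ≠ 0 := by intro h'; simp [h'] at hx; exact hc hx.symm
      have hy' : e y ≠ 0 := by intro h'; simp [h'] at hy; exact hc hy.symm
      have heq : e y = e x + 1 := (hadj x y).mp hadj'
      have h1 : (e y).val = ((e x).val + 1) % n := by
        rw [heq, ZMod.val_add, ZMod.val_one]
      have hlt := ZMod.val_lt (e x)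
      by_cases hcase : (e x).val + 1 < n
      · rw [Nat.mod_eq_of_lt hcase] at h1
        simp only [h1]
        omega
      · have hzero : ((e x).val + 1) % n = 0 := by
          have : (e x).val + 1 = n := by omega
          simp [this]
        rw [hzero] at h1
        exact absurd ((ZMod.val_eq_zero _).mp h1) hy'
  · -- symmetric odd cycle, k = 3
    have hk : k = 3 := by omega
    subst hk
    obtain ⟨n, hn, _, e, hadj⟩ := hcyc
    haveI : NeZero n := ⟨by omega⟩
    haveI : Fact (1 < n) := ⟨by omega⟩
    refine ⟨fun v => if e v = 0 then 2 else if Even (e v).val then 0 else 1, ?_⟩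
    intro c
    -- helper: adjacent nonzero vertices have different parity
    have step : ∀ u w : V, e u ≠ 0 → e w ≠ 0 → e w = e u + 1 →
        (Even (e w).val ↔ ¬ Even (e u).val) := by
      intro u w hu hw heq
      have h1 : (e w).val = ((e u).val + 1) % n := by
        rw [heq, ZMod.val_add, ZMod.val_one]
      have hlt := ZMod.val_lt (e u)
      by_cases hcase : (e u).val + 1 < n
      · rw [Nat.mod_eq_of_lt hcase] at h1
        rw [h1]
        exact Nat.even_add_one
      · have hzero : ((e u).val + 1) % n = 0 := by
          have : (e u).val + 1 = n := by omega
          simp [this]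
        rw [hzero] at h1
        exact absurd ((ZMod.val_eq_zero _).mp h1) hw
    by_cases hc : c = 2
    · subst hc
      apply acyclic_of_subsingleton
      intro x hx y hy
      simp only [Set.mem_setOf_eq] at hx hy
      have hx' : e x = 0 := by
        by_contra h'
        by_cases h2 : Even (e x).val <;> simp [h', h2] at hx
      have hy' : e y = 0 := by
        by_contra h'
        by_cases h2 : Even (e y).val <;> simp [h', h2] at hy
      exact e.injective (hx'.trans hy'.symm)
    · apply acyclic_of_no_adj
      intro x hx y hy hadj'
      simp only [Set.mem_setOf_eq] at hx hy
      have hx0 : e x ≠ 0 := by intro h'; simp [h'] at hx; exact hc hx.symm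
      have hy0 : e y ≠ 0 := by intro h'; simp [h'] at hy; exact hc hy.symm
      rw [if_neg hx0] at hx
      rw [if_neg hy0] at hy
      have hpar : Even (e x).val ↔ Even (e y).val := by
        by_cases h1 : Even (e x).val <;> by_cases h2 : Even (e y).val <;>
          simp [h1, h2] at hx hy <;> first | tauto | (rw [← hx] at hy; exact absurd hy (by simp) )
      rcases (hadj x y).mp hadj' with heq | heq
      · have := step x y hx0 hy0 heq
        tauto
      · have := step y x hy0 hx0 heq
        tauto
  · -- symmetric complete, k ≥ 4
    have hcard' : Nat.card V = k := by omega
    haveI : Finite V := Nat.finite_of_card_ne_zero (by omega)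
    let e := Finite.equivFinOfCardEq hcard'
    refine ⟨e, ?_⟩
    intro c
    apply acyclic_of_subsingleton
    intro x hx y hy
    simp only [Set.mem_setOf_eq] at hx hy
    exact e.injective (hx.trans hy.symm)

lemma buildable_two_le {k : ℕ} : ∀ {V : Type} {G : Digraph' V}, Digraph'.Buildable k G → 2 ≤ k := by
  intro V G h
  induction h with
  | base G he => rcases he with ⟨h1, _⟩ | ⟨h2, _⟩ | ⟨h3, _⟩ <;> omega
  | direct G₁ G₂ v₁ v₂ d G hb₁ hb₂ hadj ih₁ ih₂ => exact ih₁
  | cyclic hn Vf Gf vf G hb hadj ih => exact ih ⟨0, by omega⟩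
  | iso e G H hiff hb ih => exact ih

lemma buildable_colouring {k : ℕ} : ∀ {V : Type} {G : Digraph' V}, Digraph'.Buildable k G →
    ∃ f : V → Fin k, ∀ c, G.AcyclicSet {v | f v = c} := by
  intro V G h
  induction h with
  | base G he => exact exception_colouring he
  | direct G₁ G₂ v₁ v₂ d G hb₁ hb₂ hadj ih₁ ih₂ =>
    rename_i V₁ V₂
    obtain ⟨f₁, hf₁⟩ := ih₁
    obtain ⟨f₂, hf₂⟩ := ih₂
    refine ⟨Sum.elim f₁ f₂, ?_⟩
    intro c v
    cases d with
    | true =>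
      apply sum_noClosed (s₁ := fun x y => f₁ x = c ∧ f₁ y = c ∧ G₁.Adj x y)
        (s₂ := fun x y => f₂ x = c ∧ f₂ y = c ∧ G₂.Adj x y) ?_
        (fun x => hf₁ c x) (fun x => hf₂ c x)
      rintro a b ⟨ha, hb', hab⟩
      rcases (hadj a b).mp hab with ⟨x, y, rfl, rfl, hs⟩ | ⟨x, y, rfl, rfl, hs⟩ |
        ⟨_, rfl, rfl⟩ | ⟨hd, _, _⟩
      · exact Or.inl ⟨x, y, rfl, rfl, ha, hb', hs⟩
      · exact Or.inr (Or.inl ⟨x, y, rfl, rfl, ha, hb', hs⟩)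
      · exact Or.inr (Or.inr ⟨v₁, v₂, rfl, rfl⟩)
      · simp at hd
    | false =>
      intro hw
      have hw' : Relation.TransGen (fun x y : V₂ ⊕ V₁ =>
          (x.swap ∈ {v | Sum.elim f₁ f₂ v = c}) ∧ (y.swap ∈ {v | Sum.elim f₁ f₂ v = c}) ∧
          G.Adj x.swap y.swap) v.swap v.swap := by
        refine Relation.TransGen.lift Sum.swap ?_ _ _ hw
        rintro a b ⟨ha, hb', hab⟩
        simp only [Function.onFun, Sum.swap_swap]
        exact ⟨ha, hb', hab⟩
      revert hw'
      apply sum_noClosed (s₁ := fun x y => f₂ x = c ∧ f₂ y = c ∧ G₂.Adj x y)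
        (s₂ := fun x y => f₁ x = c ∧ f₁ y = c ∧ G₁.Adj x y) ?_
        (fun x => hf₂ c x) (fun x => hf₁ c x)
      rintro a b ⟨ha, hb', hab⟩
      rcases (hadj a.swap b.swap).mp hab with ⟨x, y, hx, hy, hs⟩ | ⟨x, y, hx, hy, hs⟩ |
        ⟨hd, _, _⟩ | ⟨_, hx, hy⟩
      · -- a.swap = inl x : a = inr x
        have hx' : a = Sum.inr x := by
          have := congrArg Sum.swap hx
          simpa using this
        have hy' : b = Sum.inr y := by
          have := congrArg Sum.swap hy
          simpa using this
        subst hx'; subst hy'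
        refine Or.inr (Or.inl ⟨x, y, rfl, rfl, ?_, ?_, hs⟩)
        · simpa [hx] using ha
        · simpa [hy] using hb'
      · have hx' : a = Sum.inl x := by
          have := congrArg Sum.swap hx
          simpa using this
        have hy' : b = Sum.inl y := by
          have := congrArg Sum.swap hy
          simpa using this
        subst hx'; subst hy'
        refine Or.inl ⟨x, y, rfl, rfl, ?_, ?_, hs⟩
        · simpa [hx] using ha
        · simpa [hy] using hb'
      · simp at hd
      · -- d = false : a.swap = inr v₂, b.swap = inl v₁
        have hx' : a = Sum.inl v₂ := by
          have := congrArg Sum.swap hx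
          simpa using this
        have hy' : b = Sum.inr v₁ := by
          have := congrArg Sum.swap hy
          simpa using this
        exact Or.inr (Or.inr ⟨v₂, v₁, hx', hy'⟩)
  | cyclic hn Vf Gf vf G hb hadj ih =>
    rename_i n
    haveI : NeZero n := ⟨by omega⟩
    have hk : 2 ≤ k := buildable_two_le (hb ⟨0, by omega⟩)
    haveI : NeZero k := ⟨by omega⟩
    choose fi hfi using ih
    have hone : (⟨1, by omega⟩ : Fin n) = 1 := by
      simp [Fin.ext_iff, Fin.val_one', Nat.mod_eq_of_lt (show 1 < n by omega)]
    set tgt : Fin n → Fin k := fun i => if i = 0 then ⟨0, by omega⟩ else ⟨1, by omega⟩ with htgt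
    refine ⟨fun a => Equiv.swap (fi a.1 (vf a.1)) (tgt a.1) (fi a.1 a.2), ?_⟩
    set f : (Σ i, Vf i) → Fin k := fun a => Equiv.swap (fi a.1 (vf a.1)) (tgt a.1) (fi a.1 a.2)
      with hfdef
    intro c a hw
    have hvfcol : ∀ j : Fin n, f ⟨j, vf j⟩ = tgt j := by
      intro j
      simp [hfdef, Equiv.swap_apply_left]
    have hr : ∀ x y : Σ i, Vf i,
        (x ∈ {v | f v = c} ∧ y ∈ {v | f v = c} ∧ G.Adj x y) →
        (x.1 = y.1 ∧ (fun x y : Σ i, Vf i => f x = c ∧ f y = c ∧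
            ∃ (i : Fin n) (u w : Vf i), x = ⟨i, u⟩ ∧ y = ⟨i, w⟩ ∧ (Gf i).Adj u w) x y) ∨
        (x = ⟨x.1, vf x.1⟩ ∧ y = ⟨x.1 + 1, vf (x.1 + 1)⟩ ∧
          (fun j => f ⟨j, vf j⟩ = c) x.1 ∧ (fun j => f ⟨j, vf j⟩ = c) (x.1 + 1)) := by
      rintro x y ⟨hx, hy, hxy⟩
      rcases (hadj x y).mp hxy with ⟨i, u, w, rfl, rfl, hs⟩ | ⟨i, rfl, rfl⟩
      · exact Or.inl ⟨rfl, hx, hy, i, u, w, rfl, rfl, hs⟩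
      · rw [hone] at hy ⊢
        exact Or.inr ⟨rfl, rfl, hx, hy⟩
    rcases cyc_count (vf := vf) (P := fun j => f ⟨j, vf j⟩ = c)
      (rIn := fun x y : Σ i, Vf i => f x = c ∧ f y = c ∧
        ∃ (i : Fin n) (u w : Vf i), x = ⟨i, u⟩ ∧ y = ⟨i, w⟩ ∧ (Gf i).Adj u w) hr hw with ⟨_, hIn⟩ | ⟨t, ht0, hteq, hP⟩
    · obtain ⟨i, u⟩ := a
      have hyp : ∀ p q : Σ i, Vf i, (f p = c ∧ f q = c ∧
            ∃ (j : Fin n) (u w : Vf j), p = ⟨j, u⟩ ∧ q = ⟨j, w⟩ ∧ (Gf j).Adj u w) →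
          ∀ z : Vf i, p = ⟨i, z⟩ →
          ∃ w : Vf i, q = (⟨i, w⟩ : Σ j, Vf j) ∧
            (f ⟨i, z⟩ = c ∧ f ⟨i, w⟩ = c ∧ (Gf i).Adj z w) := by
        rintro p q ⟨hp, hq, j, u', w', rfl, rfl, hsadj⟩ z hpz
        obtain ⟨rfl, hheq⟩ := Sigma.mk.inj_iff.mp hpz
        have hz : u' = z := eq_of_heq hheq
        subst hz
        exact ⟨w', rfl, hp, hq, hsadj⟩
      obtain ⟨y, hy, hs⟩ := proj hyp hIn
      have hz : u = y := eq_of_heq (Sigma.mk.inj_iff.mp hy).2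
      subst hz
      exact perm_classes (Gf i) (Equiv.swap (fi i (vf i)) (tgt i)) (hfi i) c u hs
    · have h0 : (t : Fin n) = 0 := left_eq_add.mp hteq
      have hmod : t % n = 0 := by
        have h' : ((t : Fin n)).val = (0 : Fin n).val := congrArg Fin.val h0
        rwa [Fin.val_natCast, Fin.val_zero] at h'
      have hnt : n ≤ t := Nat.le_of_dvd ht0 (Nat.dvd_of_mod_eq_zero hmod)
      have hPall : ∀ j : Fin n, f ⟨j, vf j⟩ = c := by
        intro j
        have hlt : ((j - a.1 : Fin n)).val ≤ t := by
          have := (j - a.1 : Fin n).isLt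
          omega
        have := hP ((j - a.1 : Fin n)).val hlt
        rwa [Fin.cast_val_eq_self, add_sub_cancel] at this
      have hc0 : c = tgt 0 := ((hvfcol 0).symm.trans (hPall 0)).symm
      have hc1 : c = tgt 1 := ((hvfcol 1).symm.trans (hPall 1)).symm
      have h10 : (1 : Fin n) ≠ 0 := by
        rw [← hone]
        intro hcon
        have := congrArg Fin.val hcon
        rw [Fin.val_zero] at this
        simp at this
      rw [htgt] at hc0 hc1
      simp only [if_pos rfl, if_neg h10] at hc0 hc1
      rw [hc0] at hc1
      simp at hc1
  | iso e G H hiff hb ih =>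
    obtain ⟨f, hf⟩ := ih
    refine ⟨f ∘ e.symm, ?_⟩
    intro c v hw
    have hw' : Relation.TransGen (fun x y =>
        x ∈ {v | f v = c} ∧ y ∈ {v | f v = c} ∧ G.Adj x y) (e.symm v) (e.symm v) := by
      refine Relation.TransGen.lift e.symm ?_ _ _ hw
      rintro a b ⟨ha, hb', hab⟩
      exact ⟨ha, hb', (hiff _ _).mpr (by simpa using hab)⟩
    exact hf c (e.symm v) hw'

end DicolourAux

/-- Every `k`-tree is `k`-dicolourable. -/
theorem ktree_dicolourable {V : Type} [Fintype V] (G : Digraph' V) (k : ℕ)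
    (h : G.IsKTree k) : G.dichromaticNumber ≤ k := by
  obtain ⟨f, hf⟩ := DicolourAux.buildable_colouring h.2
  exact Nat.sInf_le ⟨f, hf⟩
end

section
/- Every vertex of a directed k-tree has mindegree at least k−1; moreover, a k-tree has at least k+1 vertices v with min(d⁺(v), d⁻(v)) = k−1, unless it is ↔K_k or a symmetric path of odd length (the latter only for k = 2). -/
namespace Digraph'

variable {V : Type} {G : Digraph' V}

-- ======== helpers ========

lemma card_opt (α : Type) [Finite α] : Nat.card (Option α) = Nat.card α + 1 := by
  haveI := Fintype.ofFinite α
  simp [Nat.card_eq_fintype_card]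

lemma unique_card {α : Type} (a : α) (h : ∀ b : α, b = a) : Nat.card α = 1 := by
  haveI : Nonempty α := ⟨a⟩
  haveI : Subsingleton α := ⟨fun x y => (h x).trans (h y).symm⟩
  exact Nat.card_unique

lemma two_card {α : Type} (a b : α) (hab : a ≠ b) (h : ∀ c, c = a ∨ c = b) :
    Nat.card α = 2 := by
  have : Nat.card α = Nat.card Bool := by
    refine (Nat.card_eq_of_bijective (fun x : Bool => if x then a else b) ⟨?_, ?_⟩).symm
    · rintro ⟨⟩ ⟨⟩ hxy <;> simp_all
    · intro c
      rcases h c with rfl | rfl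
      exacts [⟨true, rfl⟩, ⟨false, rfl⟩]
  simp [this, Nat.card_eq_fintype_card]

lemma two_le_card {α : Type} [Finite α] (a b : α) (hab : a ≠ b) : 2 ≤ Nat.card α := by
  haveI := Fintype.ofFinite α
  rw [Nat.card_eq_fintype_card]
  exact Fintype.one_lt_card_iff_nontrivial.mpr ⟨a, b, hab⟩

lemma card_nbhd {W α : Type} [Finite α] {f : α → W} (hf : Function.Injective f)
    (P : α → Prop) (b₀ : W) (c : Prop) [Decidable c] (hb₀ : ∀ y, f y ≠ b₀) :
    Nat.card {b : W // (∃ y, b = f y ∧ P y) ∨ (c ∧ b = b₀)} =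
      Nat.card {y // P y} + (if c then 1 else 0) := by
  by_cases hc : c
  · rw [if_pos hc, ← card_opt]
    refine (Nat.card_eq_of_bijective
      (fun o : Option {y // P y} => o.elim ⟨b₀, Or.inr ⟨hc, rfl⟩⟩
        (fun y => ⟨f y.1, Or.inl ⟨y.1, rfl, y.2⟩⟩)) ⟨?_, ?_⟩).symm
    · rintro (_ | ⟨y, hy⟩) (_ | ⟨y', hy'⟩) h <;>
        simp only [Option.elim, Subtype.mk.injEq] at h
      · rfl
      · exact absurd h.symm (hb₀ y')
      · exact absurd h (hb₀ y)
      · exact congrArg some (Subtype.ext (hf h))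
    · rintro ⟨b, (⟨y, rfl, hy⟩ | ⟨-, rfl⟩)⟩
      · exact ⟨some ⟨y, hy⟩, rfl⟩
      · exact ⟨none, rfl⟩
  · rw [if_neg hc, Nat.add_zero]
    refine (Nat.card_eq_of_bijective (fun y : {y // P y} =>
      ⟨f y.1, Or.inl ⟨y.1, rfl, y.2⟩⟩) ⟨?_, ?_⟩).symm
    · intro y y' h
      exact Subtype.ext (hf (congrArg Subtype.val h))
    · rintro ⟨b, (⟨y, rfl, hy⟩ | ⟨h, -⟩)⟩
      · exact ⟨⟨y, hy⟩, rfl⟩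
      · exact absurd h hc

lemma card_ne_aux {α : Type} [Finite α] (P : α → Prop) (u : α) :
    Nat.card {x // P x} ≤ Nat.card {x : α // x ≠ u ∧ P x} + 1 := by
  classical
  haveI := Fintype.ofFinite {x : α // x ≠ u ∧ P x}
  rw [← card_opt]
  refine Nat.card_le_card_of_injective
    (fun x : {x // P x} => if h : x.1 = u then none else some ⟨x.1, h, x.2⟩) ?_
  intro x y hxy
  by_cases hx : x.1 = u <;> by_cases hy : y.1 = u <;>
    simp only [hx, hy, dif_pos, dif_neg, not_false_iff] at hxy <;>
    first
      | (exact Subtype.ext (hx.trans hy.symm))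
      | simp_all [Subtype.ext_iff]

-- ======== base graphs ========

lemma cycle_degs {n : ℕ} (hn : 2 ≤ n) (e : V ≃ ZMod n)
    (hadj : ∀ x y, G.Adj x y ↔ e y = e x + 1) (v : V) :
    G.outDeg v = 1 ∧ G.inDeg v = 1 := by
  haveI : NeZero n := ⟨by omega⟩
  constructor
  · refine unique_card ⟨e.symm (e v + 1), (hadj _ _).mpr (by simp)⟩ ?_
    rintro ⟨w, hw⟩
    have h1 := (hadj v w).mp hw
    exact Subtype.ext (e.injective (by simp [h1]))
  · refine unique_card ⟨e.symm (e v - 1), (hadj _ _).mpr (by simp)⟩ ?_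
    rintro ⟨w, hw⟩
    have h1 := (hadj w v).mp hw
    refine Subtype.ext (e.injective ?_)
    simp [eq_sub_of_add_eq h1.symm]

lemma oddcycle_degs {n : ℕ} (hn : 3 ≤ n) (e : V ≃ ZMod n)
    (hadj : ∀ x y, G.Adj x y ↔ (e y = e x + 1 ∨ e x = e y + 1)) (v : V) :
    G.outDeg v = 2 ∧ G.inDeg v = 2 := by
  haveI : NeZero n := ⟨by omega⟩
  have hne : ∀ a : ZMod n, a + 1 ≠ a - 1 := by
    intro a hc
    have h2 : ((2 : ℕ) : ZMod n) = 0 := by push_cast; linear_combination hc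
    rw [ZMod.natCast_eq_zero_iff] at h2
    have := Nat.le_of_dvd (by norm_num) h2
    omega
  have key : ∀ x, Nat.card {w // (e w = e x + 1 ∨ e x = e w + 1)} = 2 := by
    intro x
    refine two_card ⟨e.symm (e x + 1), by simp⟩ ⟨e.symm (e x - 1), by right; simp⟩ ?_ ?_
    · intro hc
      rw [Subtype.ext_iff] at hc
      exact hne (e x) (by simpa using congrArg e hc)
    · rintro ⟨w, (hw | hw)⟩
      · left; exact Subtype.ext (e.injective (by simp [hw]))
      · right; exact Subtype.ext (e.injective (by simp [eq_sub_of_add_eq hw.symm]))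
  constructor
  · rw [show G.outDeg v = Nat.card {w // G.Adj v w} from rfl,
      Nat.card_congr (Equiv.subtypeEquivRight fun w => hadj v w)]
    exact key v
  · rw [show G.inDeg v = Nat.card {w // G.Adj w v} from rfl,
      Nat.card_congr (Equiv.subtypeEquivRight fun w => (hadj w v).trans or_comm)]
    exact key v

lemma symComplete_deg [Finite V] (h : G.IsSymmetricComplete) (v : V) :
    G.outDeg v = Nat.card V - 1 ∧ G.inDeg v = Nat.card V - 1 := by
  classical
  haveI := Fintype.ofFinite V
  have key : Nat.card {w : V // w ≠ v} = Nat.card V - 1 := by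
    have h2 := Nat.card_congr (Equiv.optionSubtypeNe v)
    rw [card_opt] at h2
    omega
  constructor
  · rw [show G.outDeg v = Nat.card {w // G.Adj v w} from rfl,
      Nat.card_congr (Equiv.subtypeEquivRight fun w => (h v w).trans ne_comm)]
    exact key
  · rw [show G.inDeg v = Nat.card {w // G.Adj w v} from rfl,
      Nat.card_congr (Equiv.subtypeEquivRight fun w => h w v)]
    exact key

lemma path_degs {n : ℕ} (hn : 2 ≤ n) (e : V ≃ Fin n)
    (hadj : ∀ x y, G.Adj x y ↔ ((e y).val = (e x).val + 1 ∨ (e x).val = (e y).val + 1))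
    (v : V) :
    G.inDeg v = G.outDeg v ∧
    (((e v).val = 0 ∨ (e v).val = n - 1) → G.outDeg v = 1) ∧
    (¬((e v).val = 0 ∨ (e v).val = n - 1) → 2 ≤ G.outDeg v) := by
  haveI : Finite V := Finite.of_equiv _ e.symm
  refine ⟨?_, ?_, ?_⟩
  · exact Nat.card_congr (Equiv.subtypeEquivRight fun w =>
      ((hadj w v).trans or_comm).trans (hadj v w).symm)
  · rintro (h0 | h1)
    · refine unique_card ⟨e.symm ⟨1, by omega⟩, (hadj _ _).mpr (by left; simp [h0])⟩ ?_
      rintro ⟨w, hw⟩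
      refine Subtype.ext (e.injective (Fin.ext ?_))
      rcases (hadj v w).mp hw with h | h <;> simp <;> omega
    · refine unique_card ⟨e.symm ⟨n - 2, by omega⟩,
        (hadj _ _).mpr (by right; simp [h1]; omega)⟩ ?_
      rintro ⟨w, hw⟩
      refine Subtype.ext (e.injective (Fin.ext ?_))
      have hb := (e w).isLt
      rcases (hadj v w).mp hw with h | h <;> simp <;> omega
  · intro hv
    push_neg at hv
    have hlt := (e v).isLt
    refine two_le_card ⟨e.symm ⟨(e v).val + 1, by omega⟩, (hadj _ _).mpr (by left; simp)⟩
      ⟨e.symm ⟨(e v).val - 1, by omega⟩, (hadj _ _).mpr (by right; simp; omega)⟩ ?_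
    intro hc
    have := congrArg (fun z => (e z.1).val) hc
    simp at this
    omega

lemma digon_oddpath (h : G.IsSymmetricComplete) (h2 : Nat.card V = 2) :
    G.IsSymmetricOddPath := by
  haveI : Finite V := (Nat.card_pos_iff.mp (by omega)).2
  haveI := Fintype.ofFinite V
  obtain ⟨e⟩ : Nonempty (V ≃ Fin 2) := by
    rw [Nat.card_eq_fintype_card] at h2
    exact ⟨Fintype.equivFinOfCardEq h2⟩
  refine ⟨2, le_refl 2, by decide, e, fun x y => ?_⟩
  rw [h x y]
  constructor
  · intro hxy
    have h3 : e x ≠ e y := fun hc => hxy (e.injective hc)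
    revert h3; generalize e x = a; generalize e y = b; revert a b; decide
  · rintro hxy rfl
    omega


lemma IsException.fin {V : Type} {G : Digraph' V} {m : ℕ} (h : G.IsException m) :
    Finite V := by
  rcases h with ⟨-, n, hn, e, -⟩ | ⟨-, n, hn, -, e, -⟩ | ⟨-, -, hcard⟩
  · haveI : NeZero n := ⟨by omega⟩; exact Finite.of_equiv _ e.symm
  · haveI : NeZero n := ⟨by omega⟩; exact Finite.of_equiv _ e.symm
  · exact (Nat.card_pos_iff.mp (by omega)).2

lemma Buildable.fin {k : ℕ} {V : Type} {G : Digraph' V} (hb : Buildable k G) :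
    Finite V := by
  induction hb with
  | base G h => exact h.fin
  | direct G₁ G₂ v₁ v₂ d G h₁ h₂ hAdj ih₁ ih₂ =>
      haveI := ih₁; haveI := ih₂; infer_instance
  | cyclic hn Vf Gf vf G hf hAdj ih =>
      haveI := ih; infer_instance
  | iso e G H hIff hb ih => exact Finite.of_equiv _ e

lemma Buildable.two_le {k : ℕ} {V : Type} {G : Digraph' V} (hb : Buildable k G) :
    2 ≤ k := by
  induction hb with
  | base G h => rcases h with ⟨h1, -⟩ | ⟨h1, -⟩ | ⟨h1, -⟩ <;> omega
  | direct G₁ G₂ v₁ v₂ d G h₁ h₂ hAdj ih₁ ih₂ => exact ih₁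
  | cyclic hn Vf Gf vf G hf hAdj ih => exact ih ⟨0, by omega⟩
  | iso e G H hIff hb ih => exact ih

section Direct

variable {V₁ V₂ : Type} {G₁ : Digraph' V₁} {G₂ : Digraph' V₂} {v₁ : V₁} {v₂ : V₂}
  {d : Bool} {G : Digraph' (V₁ ⊕ V₂)}
  (hAdj : ∀ a b, G.Adj a b ↔
        ((∃ x y, a = Sum.inl x ∧ b = Sum.inl y ∧ G₁.Adj x y) ∨
         (∃ x y, a = Sum.inr x ∧ b = Sum.inr y ∧ G₂.Adj x y) ∨
         (d = true ∧ a = Sum.inl v₁ ∧ b = Sum.inr v₂) ∨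
         (d = false ∧ a = Sum.inr v₂ ∧ b = Sum.inl v₁)))

include hAdj

open Classical in
lemma direct_outDeg_l [Finite V₁] (x : V₁) :
    G.outDeg (Sum.inl x) = G₁.outDeg x + (if d = true ∧ x = v₁ then 1 else 0) := by
  classical
  have key : ∀ b, G.Adj (Sum.inl x) b ↔
      ((∃ y, b = Sum.inl y ∧ G₁.Adj x y) ∨ ((d = true ∧ x = v₁) ∧ b = Sum.inr v₂)) := by
    intro b
    rw [hAdj]
    constructor
    · rintro (⟨x', y, hx, hb, hA⟩ | ⟨x', y, hx, hb, hA⟩ | ⟨hd, hx, hb⟩ | ⟨hd, hx, hb⟩)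
      · obtain rfl := Sum.inl.inj hx; exact Or.inl ⟨y, hb, hA⟩
      · simp at hx
      · obtain rfl := Sum.inl.inj hx; exact Or.inr ⟨⟨hd, rfl⟩, hb⟩
      · simp at hx
    · rintro (⟨y, hb, hA⟩ | ⟨⟨hd, rfl⟩, hb⟩)
      · exact Or.inl ⟨x, y, rfl, hb, hA⟩
      · exact Or.inr (Or.inr (Or.inl ⟨hd, rfl, hb⟩))
  rw [show G.outDeg (Sum.inl x) = Nat.card {b // G.Adj (Sum.inl x) b} from rfl,
    Nat.card_congr (Equiv.subtypeEquivRight key)]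
  exact card_nbhd Sum.inl_injective _ _ _ (fun y => by simp)

open Classical in
lemma direct_inDeg_l [Finite V₁] (x : V₁) :
    G.inDeg (Sum.inl x) = G₁.inDeg x + (if d = false ∧ x = v₁ then 1 else 0) := by
  classical
  have key : ∀ a, G.Adj a (Sum.inl x) ↔
      ((∃ y, a = Sum.inl y ∧ G₁.Adj y x) ∨ ((d = false ∧ x = v₁) ∧ a = Sum.inr v₂)) := by
    intro a
    rw [hAdj]
    constructor
    · rintro (⟨x', y, ha, hb, hA⟩ | ⟨x', y, ha, hb, hA⟩ | ⟨hd, ha, hb⟩ | ⟨hd, ha, hb⟩)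
      · obtain rfl := Sum.inl.inj hb; exact Or.inl ⟨x', ha, hA⟩
      · simp at hb
      · simp at hb
      · obtain rfl := Sum.inl.inj hb; exact Or.inr ⟨⟨hd, rfl⟩, ha⟩
    · rintro (⟨y, ha, hA⟩ | ⟨⟨hd, rfl⟩, ha⟩)
      · exact Or.inl ⟨y, x, ha, rfl, hA⟩
      · exact Or.inr (Or.inr (Or.inr ⟨hd, ha, rfl⟩))
  rw [show G.inDeg (Sum.inl x) = Nat.card {a // G.Adj a (Sum.inl x)} from rfl,
    Nat.card_congr (Equiv.subtypeEquivRight key)]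
  exact card_nbhd Sum.inl_injective _ _ _ (fun y => by simp)

open Classical in
lemma direct_outDeg_r [Finite V₂] (z : V₂) :
    G.outDeg (Sum.inr z) = G₂.outDeg z + (if d = false ∧ z = v₂ then 1 else 0) := by
  classical
  have key : ∀ b, G.Adj (Sum.inr z) b ↔
      ((∃ y, b = Sum.inr y ∧ G₂.Adj z y) ∨ ((d = false ∧ z = v₂) ∧ b = Sum.inl v₁)) := by
    intro b
    rw [hAdj]
    constructor
    · rintro (⟨x', y, hx, hb, hA⟩ | ⟨x', y, hx, hb, hA⟩ | ⟨hd, hx, hb⟩ | ⟨hd, hx, hb⟩)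
      · simp at hx
      · obtain rfl := Sum.inr.inj hx; exact Or.inl ⟨y, hb, hA⟩
      · simp at hx
      · obtain rfl := Sum.inr.inj hx; exact Or.inr ⟨⟨hd, rfl⟩, hb⟩
    · rintro (⟨y, hb, hA⟩ | ⟨⟨hd, rfl⟩, hb⟩)
      · exact Or.inr (Or.inl ⟨z, y, rfl, hb, hA⟩)
      · exact Or.inr (Or.inr (Or.inr ⟨hd, rfl, hb⟩))
  rw [show G.outDeg (Sum.inr z) = Nat.card {b // G.Adj (Sum.inr z) b} from rfl,
    Nat.card_congr (Equiv.subtypeEquivRight key)]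
  exact card_nbhd Sum.inr_injective _ _ _ (fun y => by simp)

open Classical in
lemma direct_inDeg_r [Finite V₂] (z : V₂) :
    G.inDeg (Sum.inr z) = G₂.inDeg z + (if d = true ∧ z = v₂ then 1 else 0) := by
  classical
  have key : ∀ a, G.Adj a (Sum.inr z) ↔
      ((∃ y, a = Sum.inr y ∧ G₂.Adj y z) ∨ ((d = true ∧ z = v₂) ∧ a = Sum.inl v₁)) := by
    intro a
    rw [hAdj]
    constructor
    · rintro (⟨x', y, ha, hb, hA⟩ | ⟨x', y, ha, hb, hA⟩ | ⟨hd, ha, hb⟩ | ⟨hd, ha, hb⟩)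
      · simp at hb
      · obtain rfl := Sum.inr.inj hb; exact Or.inl ⟨x', ha, hA⟩
      · obtain rfl := Sum.inr.inj hb; exact Or.inr ⟨⟨hd, rfl⟩, ha⟩
      · simp at hb
    · rintro (⟨y, ha, hA⟩ | ⟨⟨hd, rfl⟩, ha⟩)
      · exact Or.inr (Or.inl ⟨y, z, ha, rfl, hA⟩)
      · exact Or.inr (Or.inr (Or.inl ⟨hd, ha, rfl⟩))
  rw [show G.inDeg (Sum.inr z) = Nat.card {a // G.Adj a (Sum.inr z)} from rfl,
    Nat.card_congr (Equiv.subtypeEquivRight key)]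
  exact card_nbhd Sum.inr_injective (fun y => G₂.Adj y z) (Sum.inl v₁) (d = true ∧ z = v₂) (fun y => by simp)

end Direct

section Cyclic

variable {n : ℕ} {Vf : Fin n → Type} {Gf : ∀ i, Digraph' (Vf i)} {vf : ∀ i, Vf i}
  {G : Digraph' (Σ i, Vf i)} (hn : 2 ≤ n)
  (hAdj : ∀ a b, G.Adj a b ↔
        ((∃ (i : Fin n) (x y : Vf i), a = ⟨i, x⟩ ∧ b = ⟨i, y⟩ ∧ (Gf i).Adj x y) ∨
         (∃ i : Fin n, a = ⟨i, vf i⟩ ∧ b = ⟨i + ⟨1, by omega⟩, vf (i + ⟨1, by omega⟩)⟩)))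

include hn hAdj

open Classical in
lemma cyclic_outDeg [∀ i, Finite (Vf i)] (i : Fin n) (x : Vf i) :
    G.outDeg ⟨i, x⟩ = (Gf i).outDeg x + (if x = vf i then 1 else 0) := by
  classical
  haveI : NeZero n := ⟨by omega⟩
  set s : Fin n := ⟨1, by omega⟩ with hs
  have key : ∀ b, G.Adj ⟨i, x⟩ b ↔
      ((∃ y, b = ⟨i, y⟩ ∧ (Gf i).Adj x y) ∨ (x = vf i ∧ b = ⟨i + s, vf (i + s)⟩)) := by
    intro b
    rw [hAdj]
    constructor
    · rintro (⟨j, x', y', ha, hb, hA⟩ | ⟨j, ha, hb⟩)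
      · obtain ⟨rfl, hx⟩ := Sigma.mk.inj_iff.mp ha
        obtain rfl := eq_of_heq hx
        exact Or.inl ⟨y', hb, hA⟩
      · obtain ⟨rfl, hx⟩ := Sigma.mk.inj_iff.mp ha
        obtain rfl := eq_of_heq hx
        exact Or.inr ⟨rfl, hb⟩
    · rintro (⟨y, hb, hA⟩ | ⟨rfl, hb⟩)
      · exact Or.inl ⟨i, x, y, rfl, hb, hA⟩
      · exact Or.inr ⟨i, rfl, hb⟩
  rw [show G.outDeg ⟨i, x⟩ = Nat.card {b // G.Adj ⟨i, x⟩ b} from rfl,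
    Nat.card_congr (Equiv.subtypeEquivRight key)]
  refine card_nbhd sigma_mk_injective ((Gf i).Adj x) ⟨i + s, vf (i + s)⟩ (x = vf i) ?_
  intro y h
  have h1 : i = i + s := congrArg Sigma.fst h
  have h2 := congrArg Fin.val (left_eq_add.mp h1)
  rw [hs] at h2
  exact one_ne_zero h2

open Classical in
lemma cyclic_inDeg [∀ i, Finite (Vf i)] (i : Fin n) (x : Vf i) :
    G.inDeg ⟨i, x⟩ = (Gf i).inDeg x + (if x = vf i then 1 else 0) := by
  classical
  haveI : NeZero n := ⟨by omega⟩
  set s : Fin n := ⟨1, by omega⟩ with hs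
  have key : ∀ a, G.Adj a ⟨i, x⟩ ↔
      ((∃ y, a = ⟨i, y⟩ ∧ (Gf i).Adj y x) ∨ (x = vf i ∧ a = ⟨i - s, vf (i - s)⟩)) := by
    intro a
    rw [hAdj]
    constructor
    · rintro (⟨j, x', y', ha, hb, hA⟩ | ⟨j, ha, hb⟩)
      · obtain ⟨rfl, hx⟩ := Sigma.mk.inj_iff.mp hb
        obtain rfl := eq_of_heq hx
        exact Or.inl ⟨x', ha, hA⟩
      · obtain ⟨h1, hx⟩ := Sigma.mk.inj_iff.mp hb
        subst h1
        obtain rfl := eq_of_heq hx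
        refine Or.inr ⟨rfl, ?_⟩
        have hj : j + s - s = j := add_sub_cancel_right (a := j) (b := s)
        rw [hj]
        exact ha
    · rintro (⟨y, ha, hA⟩ | ⟨rfl, ha⟩)
      · exact Or.inl ⟨i, y, x, ha, rfl, hA⟩
      · refine Or.inr ⟨i - s, ha, ?_⟩
        have hj : i - s + s = i := sub_add_cancel (a := i) (b := s)
        rw [hj]
  rw [show G.inDeg ⟨i, x⟩ = Nat.card {a // G.Adj a ⟨i, x⟩} from rfl,
    Nat.card_congr (Equiv.subtypeEquivRight key)]
  refine card_nbhd sigma_mk_injective (fun y => (Gf i).Adj y x) ⟨i - s, vf (i - s)⟩ (x = vf i) ?_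
  intro y h
  have h1 : i = i - s := congrArg Sigma.fst h
  have h2 := congrArg Fin.val (sub_eq_self.mp h1.symm)
  rw [hs] at h2
  exact one_ne_zero h2

end Cyclic

-- ======== gluing two symmetric paths ========

lemma endpoint_normalize {V : Type} {m : ℕ} (E : V ≃ Fin m) (u : V)
    (hu : (E u).val = 0 ∨ (E u).val = m - 1) (c : ℕ) (hc : c = 0 ∨ c = m - 1) :
    ∃ F : V ≃ Fin m, (F u).val = c ∧
      ∀ x y : V, (((F y).val = (F x).val + 1 ∨ (F x).val = (F y).val + 1)) ↔
        (((E y).val = (E x).val + 1 ∨ (E x).val = (E y).val + 1)) := by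
  by_cases h : (E u).val = c
  · exact ⟨E, h, fun x y => Iff.rfl⟩
  · refine ⟨E.trans (Fin.revPerm), ?_, ?_⟩
    · have h1 := (E u).isLt
      simp only [Equiv.trans_apply, Fin.revPerm_apply, Fin.val_rev]
      omega
    · intro x y
      have h1 := (E x).isLt
      have h2 := (E y).isLt
      simp only [Equiv.trans_apply, Fin.revPerm_apply, Fin.val_rev]
      omega

lemma glue_paths {V₁ V₂ : Type} {G : Digraph' (V₁ ⊕ V₂)} {n₁ n₂ : ℕ}
    (h₁ : 2 ≤ n₁) (h₂ : 2 ≤ n₂) (he₁ : Even n₁) (he₂ : Even n₂)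
    (E₁ : V₁ ≃ Fin n₁) (E₂ : V₂ ≃ Fin n₂) (u₁ : V₁) (u₂ : V₂)
    (hu₁ : (E₁ u₁).val = 0 ∨ (E₁ u₁).val = n₁ - 1)
    (hu₂ : (E₂ u₂).val = 0 ∨ (E₂ u₂).val = n₂ - 1)
    (cl : ∀ x y : V₁, G.Adj (Sum.inl x) (Sum.inl y) ↔
      ((E₁ y).val = (E₁ x).val + 1 ∨ (E₁ x).val = (E₁ y).val + 1))
    (cr : ∀ x y : V₂, G.Adj (Sum.inr x) (Sum.inr y) ↔
      ((E₂ y).val = (E₂ x).val + 1 ∨ (E₂ x).val = (E₂ y).val + 1))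
    (clr : ∀ (x : V₁) (y : V₂), G.Adj (Sum.inl x) (Sum.inr y) ↔ (x = u₁ ∧ y = u₂))
    (crl : ∀ (x : V₂) (y : V₁), G.Adj (Sum.inr x) (Sum.inl y) ↔ (x = u₂ ∧ y = u₁)) :
    G.IsSymmetricOddPath := by
  obtain ⟨F₁, hF₁u, hF₁⟩ := endpoint_normalize E₁ u₁ hu₁ (n₁ - 1) (Or.inr rfl)
  obtain ⟨F₂, hF₂u, hF₂⟩ := endpoint_normalize E₂ u₂ hu₂ 0 (Or.inl rfl)
  refine ⟨n₁ + n₂, by omega, he₁.add he₂, (F₁.sumCongr F₂).trans finSumFinEquiv, ?_⟩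
  have inj₁ : ∀ x : V₁, (F₁ x).val = n₁ - 1 → x = u₁ := by
    intro x hx; apply F₁.injective; apply Fin.ext; rw [hx, hF₁u]
  have inj₂ : ∀ x : V₂, (F₂ x).val = 0 → x = u₂ := by
    intro x hx; apply F₂.injective; apply Fin.ext; rw [hx, hF₂u]
  rintro (x | x) (y | y) <;>
    simp only [Equiv.trans_apply, Equiv.sumCongr_apply, Sum.map_inl, Sum.map_inr,
      finSumFinEquiv_apply_left, finSumFinEquiv_apply_right, Fin.coe_castAdd, Fin.coe_natAdd]
  · rw [cl x y, ← hF₁ x y]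
  · rw [clr x y]
    have b1 := (F₁ x).isLt
    have b2 := (F₂ y).isLt
    constructor
    · rintro ⟨rfl, rfl⟩
      left
      rw [hF₁u, hF₂u]
      omega
    · rintro (h | h)
      · have e1 : (F₁ x).val = n₁ - 1 := by omega
        have e2 : (F₂ y).val = 0 := by omega
        exact ⟨inj₁ x e1, inj₂ y e2⟩
      · omega
  · rw [crl x y]
    have b1 := (F₂ x).isLt
    have b2 := (F₁ y).isLt
    constructor
    · rintro ⟨rfl, rfl⟩
      right
      rw [hF₁u, hF₂u]
      omega
    · rintro (h | h)
      · omega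
      · have e1 : (F₁ y).val = n₁ - 1 := by omega
        have e2 : (F₂ x).val = 0 := by omega
        exact ⟨inj₂ x e2, inj₁ y e1⟩
  · rw [cr x y, ← hF₂ x y]
    constructor
    · rintro (h | h)
      · left; omega
      · right; omega
    · rintro (h | h)
      · left; omega
      · right; omega

-- ======== iso transport ========

section Iso

variable {V W : Type} (e : V ≃ W) {G : Digraph' V} {H : Digraph' W}
  (hIff : ∀ x y, G.Adj x y ↔ H.Adj (e x) (e y))

include hIff

lemma iso_outDeg (x : V) : G.outDeg x = H.outDeg (e x) :=
  Nat.card_congr (Equiv.subtypeEquiv e fun w => hIff x w)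

lemma iso_inDeg (x : V) : G.inDeg x = H.inDeg (e x) :=
  Nat.card_congr (Equiv.subtypeEquiv e fun w => hIff w x)

lemma iso_dmin (x : V) : G.dmin x = H.dmin (e x) := by
  rw [dmin, dmin, iso_outDeg e hIff, iso_inDeg e hIff]

lemma iso_dmax (x : V) : G.dmax x = H.dmax (e x) := by
  rw [dmax, dmax, iso_outDeg e hIff, iso_inDeg e hIff]

lemma iso_adj' (w w' : W) : H.Adj w w' ↔ G.Adj (e.symm w) (e.symm w') := by
  rw [hIff (e.symm w) (e.symm w'), Equiv.apply_symm_apply, Equiv.apply_symm_apply]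

lemma iso_symComplete (h : G.IsSymmetricComplete) : H.IsSymmetricComplete := by
  intro w w'
  rw [iso_adj' e hIff, h]
  constructor
  · intro hne hc
    exact hne (by rw [hc])
  · intro hne hc
    exact hne (e.symm.injective hc)

lemma iso_oddpath (h : G.IsSymmetricOddPath) : H.IsSymmetricOddPath := by
  obtain ⟨n, hn, hev, E, hE⟩ := h
  refine ⟨n, hn, hev, e.symm.trans E, fun w w' => ?_⟩
  rw [iso_adj' e hIff, hE]
  simp

end Iso

-- ======== per-part counting bounds ========

lemma card_le_part {V₀ W : Type} [Finite W] {G : Digraph' W} {k : ℕ}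
    (ι : V₀ → W) (hι : Function.Injective ι) (P : V₀ → Prop)
    (h : ∀ x, P x → G.dmin (ι x) = k - 1) :
    Nat.card {x : V₀ // P x} ≤ Nat.card {x : V₀ // G.dmin (ι x) = k - 1} := by
  haveI : Finite V₀ := Finite.of_injective ι hι
  exact Nat.card_le_card_of_injective
    (fun x => ⟨x.1, h x.1 x.2⟩) (fun a b hab => by
      cases a; cases b; simpa [Subtype.ext_iff] using hab)

lemma part_bound {k : ℕ} {V₀ W : Type} [Finite V₀] [Finite W]
    {G₀ : Digraph' V₀} {G : Digraph' W} (ι : V₀ → W) (hι : Function.Injective ι) (u : V₀)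
    (hpres : ∀ x, x ≠ u → G.dmin (ι x) = G₀.dmin x)
    (hk : 2 ≤ k)
    (part2 : ¬(G₀.IsSymmetricComplete ∧ Nat.card V₀ = k) → ¬G₀.IsSymmetricOddPath →
      k + 1 ≤ Nat.card {x : V₀ // G₀.dmin x = k - 1})
    (hpath : ¬G₀.IsSymmetricOddPath) :
    k - 1 ≤ Nat.card {x : V₀ // G.dmin (ι x) = k - 1} ∧
      (k = 2 → 2 ≤ Nat.card {x : V₀ // G.dmin (ι x) = k - 1}) := by
  by_cases hexc : G₀.IsSymmetricComplete ∧ Nat.card V₀ = k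
  · have hk3 : 3 ≤ k := by
      rcases Nat.lt_or_ge k 3 with h | h
      · have : k = 2 := by omega
        exact absurd (digon_oddpath hexc.1 (by rw [hexc.2, this])) hpath
      · exact h
    have hall : ∀ x, G₀.dmin x = k - 1 := fun x => by
      rw [dmin, (symComplete_deg hexc.1 x).1, (symComplete_deg hexc.1 x).2, hexc.2]
      simp
    have h1 : Nat.card {x : V₀ // x ≠ u} ≤ Nat.card {x : V₀ // G.dmin (ι x) = k - 1} :=
      card_le_part ι hι _ (fun x hx => by rw [hpres x hx, hall])
    have h2 : Nat.card {x : V₀ // x ≠ u} = Nat.card V₀ - 1 := by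
      classical
      have h3 := Nat.card_congr (Equiv.optionSubtypeNe u)
      rw [card_opt] at h3
      omega
    constructor
    · omega
    · omega
  · have h1 := part2 hexc hpath
    have h2 := card_ne_aux (fun x => G₀.dmin x = k - 1) u
    have h3 : Nat.card {x : V₀ // x ≠ u ∧ G₀.dmin x = k - 1} ≤
        Nat.card {x : V₀ // G.dmin (ι x) = k - 1} :=
      card_le_part ι hι _ (fun x hx => by rw [hpres x hx.1]; exact hx.2)
    exact ⟨by omega, fun _ => by omega⟩

lemma path_k_eq_two {k : ℕ} {V₀ : Type} {G₀ : Digraph' V₀}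
    (part1 : ∀ x, k - 1 ≤ G₀.dmin x) (hk : 2 ≤ k)
    (hp : G₀.IsSymmetricOddPath) : k = 2 := by
  obtain ⟨m, hm, hev, E, hE⟩ := hp
  have degs := path_degs hm E hE (E.symm ⟨0, by omega⟩)
  have h0 : (E (E.symm ⟨0, by omega⟩)).val = 0 := by simp
  have h1 := degs.2.1 (Or.inl h0)
  have hin := degs.1.trans h1
  have h2 := part1 (E.symm ⟨0, by omega⟩)
  rw [dmin, h1, hin] at h2
  omega

/-- For an odd symmetric path part with a designated vertex `u` such that
`dmin` in the big graph is preserved off `u` and also at `u` when its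
out/in degrees agree, the part contributes two vertices of `dmin = 1`. -/
lemma path_part_two {V₀ W : Type} [Finite W] {G₀ : Digraph' V₀} {G : Digraph' W}
    (ι : V₀ → W) (hι : Function.Injective ι) (u : V₀)
    (hpres : ∀ x, x ≠ u → G.dmin (ι x) = G₀.dmin x)
    (hsame : G₀.outDeg u = G₀.inDeg u → G.dmin (ι u) = G₀.dmin u)
    (hp : G₀.IsSymmetricOddPath) :
    2 ≤ Nat.card {x : V₀ // G.dmin (ι x) = 1} := by
  obtain ⟨m, hm, hev, E, hE⟩ := hp
  haveI : Finite V₀ := Finite.of_equiv _ E.symm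
  have key : ∀ x : V₀, ((E x).val = 0 ∨ (E x).val = m - 1) → G.dmin (ι x) = 1 := by
    intro x hx
    have degs := path_degs hm E hE x
    have hdm : G₀.dmin x = 1 := by rw [dmin, degs.2.1 hx, degs.1.trans (degs.2.1 hx)]; exact min_self 1
    by_cases hxu : x = u
    · subst hxu
      rw [hsame (by rw [← degs.1]), hdm]
    · rw [hpres x hxu, hdm]
  have hne : E.symm ⟨0, by omega⟩ ≠ E.symm ⟨m - 1, by omega⟩ := by
    intro hc
    have := congrArg (fun z => (E z).val) hc
    simp at this
    omega
  refine two_le_card (⟨E.symm ⟨0, by omega⟩, key _ (Or.inl (by simp))⟩ :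
      {x : V₀ // G.dmin (ι x) = 1})
    ⟨E.symm ⟨m - 1, by omega⟩, key _ (Or.inr (by simp))⟩ ?_
  intro hc
  exact hne (congrArg Subtype.val hc)

lemma path_part_one {V₀ W : Type} [Finite W] {G₀ : Digraph' V₀} {G : Digraph' W}
    (ι : V₀ → W) (hι : Function.Injective ι) (u : V₀)
    (hpres : ∀ x, x ≠ u → G.dmin (ι x) = G₀.dmin x)
    (hp : G₀.IsSymmetricOddPath) :
    1 ≤ Nat.card {x : V₀ // G.dmin (ι x) = 1} := by
  haveI : Finite V₀ := hp.elim fun m hm' => hm'.2.2.elim fun E _ => Finite.of_equiv _ E.symm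
  obtain ⟨m, hm, hev, E, hE⟩ := hp
  have key : ∀ x : V₀, x ≠ u → ((E x).val = 0 ∨ (E x).val = m - 1) → G.dmin (ι x) = 1 := by
    intro x hxu hx
    have degs := path_degs hm E hE x
    have hdm : G₀.dmin x = 1 := by rw [dmin, degs.2.1 hx, degs.1.trans (degs.2.1 hx)]; exact min_self 1
    rw [hpres x hxu, hdm]
  have hne : E.symm ⟨0, by omega⟩ ≠ E.symm ⟨m - 1, by omega⟩ := by
    intro hc
    have := congrArg (fun z => (E z).val) hc
    simp at this
    omega
  refine Nat.card_pos_iff.mpr ⟨?_, inferInstance⟩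
  by_cases h0 : E.symm ⟨0, by omega⟩ = u
  · exact ⟨⟨E.symm ⟨m - 1, by omega⟩,
      key _ (fun hc => hne (h0.trans hc.symm)) (Or.inr (by simp))⟩⟩
  · exact ⟨⟨E.symm ⟨0, by omega⟩, key _ h0 (Or.inl (by simp))⟩⟩

-- ======== two odd paths glued cyclically form an odd path ========

lemma cyclic_two_glue {Vf : Fin 2 → Type} {Gf : ∀ i, Digraph' (Vf i)} {vf : ∀ i, Vf i}
    {G : Digraph' (Σ i, Vf i)} [∀ i, Finite (Vf i)]
    (hAdj : ∀ a b, G.Adj a b ↔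
        ((∃ (i : Fin 2) (x y : Vf i), a = ⟨i, x⟩ ∧ b = ⟨i, y⟩ ∧ (Gf i).Adj x y) ∨
         (∃ i : Fin 2, a = ⟨i, vf i⟩ ∧ b = ⟨i + ⟨1, by omega⟩, vf (i + ⟨1, by omega⟩)⟩)))
    (hΔ : ∀ v, G.dmax v ≤ 2) (hp : ∀ i, (Gf i).IsSymmetricOddPath) :
    G.IsSymmetricOddPath := by
  have h01 : (0 : Fin 2) + ⟨1, by omega⟩ = 1 := rfl
  have h11 : (1 : Fin 2) + ⟨1, by omega⟩ = 0 := rfl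
  have od := cyclic_outDeg (le_refl 2) hAdj
  have id' := cyclic_inDeg (le_refl 2) hAdj
  obtain ⟨m₀, hm₀, hev₀, E₀, hE₀⟩ := hp 0
  obtain ⟨m₁, hm₁, hev₁, E₁, hE₁⟩ := hp 1
  -- the hubs are endpoints
  have endpoint : ∀ (i : Fin 2) {m : ℕ} (hm : 2 ≤ m) (E : Vf i ≃ Fin m)
      (hE : ∀ x y, (Gf i).Adj x y ↔
        ((E y).val = (E x).val + 1 ∨ (E x).val = (E y).val + 1)),
      ((E (vf i)).val = 0 ∨ (E (vf i)).val = m - 1) := by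
    intro i m hm E hE
    by_contra hcon
    have h2 := (path_degs hm E hE (vf i)).2.2 hcon
    have hd := hΔ ⟨i, vf i⟩
    rw [dmax, od i (vf i), id' i (vf i), if_pos rfl] at hd
    have h3 := le_trans (le_max_left ((Gf i).outDeg (vf i) + 1) ((Gf i).inDeg (vf i) + 1)) hd
    omega
  have hu₀ := endpoint 0 hm₀ E₀ hE₀
  have hu₁ := endpoint 1 hm₁ E₁ hE₁
  -- transfer to a sum type
  let σ : Vf 0 ⊕ Vf 1 → Σ i, Vf i := fun a => Sum.elim (fun x => ⟨0, x⟩) (fun x => ⟨1, x⟩) a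
  have hinj : Function.Injective σ := by
    rintro (a | a) (b | b) hab <;>
      simp only [σ, Sum.elim_inl, Sum.elim_inr] at hab
    · obtain ⟨-, h⟩ := Sigma.mk.inj_iff.mp hab
      rw [eq_of_heq h]
    · have h := congrArg Sigma.fst hab
      simp at h
    · have h := congrArg Sigma.fst hab
      simp at h
    · obtain ⟨-, h⟩ := Sigma.mk.inj_iff.mp hab
      rw [eq_of_heq h]
  have hsurj : Function.Surjective σ := by
    rintro ⟨i, x⟩
    have : i = 0 ∨ i = 1 := by omega
    rcases this with rfl | rfl
    · exact ⟨Sum.inl x, rfl⟩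
    · exact ⟨Sum.inr x, rfl⟩
  let τ : (Vf 0 ⊕ Vf 1) ≃ Σ i, Vf i := Equiv.ofBijective σ ⟨hinj, hsurj⟩
  let H : Digraph' (Vf 0 ⊕ Vf 1) := ⟨fun a b => G.Adj (τ a) (τ b), fun a ha => G.irrefl _ ha⟩
  have cl : ∀ x y : Vf 0, G.Adj ⟨0, x⟩ ⟨0, y⟩ ↔
      ((E₀ y).val = (E₀ x).val + 1 ∨ (E₀ x).val = (E₀ y).val + 1) := by
    intro x y
    rw [hAdj]
    constructor
    · rintro (⟨j, x', y', ha, hb, hA⟩ | ⟨j, ha, hb⟩)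
      · obtain ⟨h, hh⟩ := Sigma.mk.inj_iff.mp ha
        subst h
        obtain rfl := eq_of_heq hh
        obtain ⟨-, hh2⟩ := Sigma.mk.inj_iff.mp hb
        obtain rfl := eq_of_heq hh2
        exact (hE₀ x y).mp hA
      · obtain ⟨h, -⟩ := Sigma.mk.inj_iff.mp ha
        subst h
        obtain ⟨h2, -⟩ := Sigma.mk.inj_iff.mp hb
        rw [h01] at h2
        exact absurd h2 (by decide)
    · intro h
      exact Or.inl ⟨0, x, y, rfl, rfl, (hE₀ x y).mpr h⟩
  have cr : ∀ x y : Vf 1, G.Adj ⟨1, x⟩ ⟨1, y⟩ ↔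
      ((E₁ y).val = (E₁ x).val + 1 ∨ (E₁ x).val = (E₁ y).val + 1) := by
    intro x y
    rw [hAdj]
    constructor
    · rintro (⟨j, x', y', ha, hb, hA⟩ | ⟨j, ha, hb⟩)
      · obtain ⟨h, hh⟩ := Sigma.mk.inj_iff.mp ha
        subst h
        obtain rfl := eq_of_heq hh
        obtain ⟨-, hh2⟩ := Sigma.mk.inj_iff.mp hb
        obtain rfl := eq_of_heq hh2
        exact (hE₁ x y).mp hA
      · obtain ⟨h, -⟩ := Sigma.mk.inj_iff.mp ha
        subst h
        obtain ⟨h2, -⟩ := Sigma.mk.inj_iff.mp hb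
        rw [h11] at h2
        exact absurd h2 (by decide)
    · intro h
      exact Or.inl ⟨1, x, y, rfl, rfl, (hE₁ x y).mpr h⟩
  have clr : ∀ (x : Vf 0) (y : Vf 1), G.Adj ⟨0, x⟩ ⟨1, y⟩ ↔ (x = vf 0 ∧ y = vf 1) := by
    intro x y
    rw [hAdj]
    constructor
    · rintro (⟨j, x', y', ha, hb, hA⟩ | ⟨j, ha, hb⟩)
      · obtain ⟨h, -⟩ := Sigma.mk.inj_iff.mp ha
        obtain ⟨h2, -⟩ := Sigma.mk.inj_iff.mp hb
        rw [← h] at h2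
        exact absurd h2 (by decide)
      · obtain ⟨h, hh⟩ := Sigma.mk.inj_iff.mp ha
        subst h
        obtain rfl := eq_of_heq hh
        rw [h01] at hb
        obtain ⟨-, hh2⟩ := Sigma.mk.inj_iff.mp hb
        obtain rfl := eq_of_heq hh2
        exact ⟨rfl, rfl⟩
    · rintro ⟨rfl, rfl⟩
      refine Or.inr ⟨0, rfl, ?_⟩
      rw [h01]
  have crl : ∀ (x : Vf 1) (y : Vf 0), G.Adj ⟨1, x⟩ ⟨0, y⟩ ↔ (x = vf 1 ∧ y = vf 0) := by
    intro x y
    rw [hAdj]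
    constructor
    · rintro (⟨j, x', y', ha, hb, hA⟩ | ⟨j, ha, hb⟩)
      · obtain ⟨h, -⟩ := Sigma.mk.inj_iff.mp ha
        obtain ⟨h2, -⟩ := Sigma.mk.inj_iff.mp hb
        rw [← h] at h2
        exact absurd h2 (by decide)
      · obtain ⟨h, hh⟩ := Sigma.mk.inj_iff.mp ha
        subst h
        obtain rfl := eq_of_heq hh
        rw [h11] at hb
        obtain ⟨-, hh2⟩ := Sigma.mk.inj_iff.mp hb
        obtain rfl := eq_of_heq hh2
        exact ⟨rfl, rfl⟩
    · rintro ⟨rfl, rfl⟩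
      refine Or.inr ⟨1, rfl, ?_⟩
      rw [h11]
  have Hpath : H.IsSymmetricOddPath :=
    glue_paths hm₀ hm₁ hev₀ hev₁ E₀ E₁ (vf 0) (vf 1) hu₀ hu₁ cl cr clr crl
  exact iso_oddpath τ (fun _ _ => Iff.rfl) Hpath

-- ======== main induction ========

lemma main_thm {k : ℕ} {V : Type} {G : Digraph' V} (hb : Buildable k G) :
    (∀ v, G.dmax v ≤ k) →
    ((∀ v, k - 1 ≤ G.dmin v) ∧
     (¬(G.IsSymmetricComplete ∧ Nat.card V = k) → ¬G.IsSymmetricOddPath →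
      k + 1 ≤ Nat.card {v : V // G.dmin v = k - 1})) := by
  induction hb with
  | @base Vb G hexc =>
    intro hΔ
    rcases hexc with ⟨hk, n, hn, e, hadj⟩ | ⟨hk, n, hn, hodd, e, hadj⟩ | ⟨hk, hsym, hcard⟩
    · -- directed cycle, k = 2
      obtain rfl : k = 2 := by omega
      haveI : NeZero n := ⟨by omega⟩
      have degs := cycle_degs hn e hadj
      have hdmin : ∀ v, G.dmin v = 1 := fun v => by
        rw [dmin, (degs v).1, (degs v).2]; exact min_self 1
      refine ⟨fun v => by rw [hdmin v], fun h1 _ => ?_⟩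
      have hcV : Nat.card Vb = n := by
        rw [Nat.card_congr e, Nat.card_eq_fintype_card, ZMod.card]
      have h21 : (2 : ℕ) - 1 = 1 := rfl
      rw [h21]
      have hcount : Nat.card {v : Vb // G.dmin v = 1} = n := by
        rw [Nat.card_congr (Equiv.subtypeUnivEquiv hdmin), hcV]
      rcases Nat.lt_or_ge n 3 with h | h
      · obtain rfl : n = 2 := by omega
        refine absurd ⟨fun x y => ?_, by rw [hcV]⟩ h1
        rw [hadj]
        have key : ∀ a b : ZMod 2, (b = a + 1) ↔ ¬a = b := by decide
        exact (key (e x) (e y)).trans (not_congr e.apply_eq_iff_eq)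
      · rw [hcount]; omega
    · -- symmetric odd cycle, k = 3
      obtain rfl : k = 3 := by omega
      haveI : NeZero n := ⟨by omega⟩
      have degs := oddcycle_degs hn e hadj
      have hdmin : ∀ v, G.dmin v = 2 := fun v => by
        rw [dmin, (degs v).1, (degs v).2]; exact min_self 2
      refine ⟨fun v => by rw [hdmin v], fun h1 _ => ?_⟩
      have hcV : Nat.card Vb = n := by
        rw [Nat.card_congr e, Nat.card_eq_fintype_card, ZMod.card]
      have h32 : (3 : ℕ) - 1 = 2 := rfl
      rw [h32]
      have hcount : Nat.card {v : Vb // G.dmin v = 2} = n := by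
        rw [Nat.card_congr (Equiv.subtypeUnivEquiv hdmin), hcV]
      rcases Nat.lt_or_ge n 4 with h | h
      · obtain rfl : n = 3 := by omega
        refine absurd ⟨fun x y => ?_, by rw [hcV]⟩ h1
        rw [hadj]
        have key : ∀ a b : ZMod 3, (b = a + 1 ∨ a = b + 1) ↔ ¬a = b := by decide
        exact (key (e x) (e y)).trans (not_congr e.apply_eq_iff_eq)
      · rw [hcount]; omega
    · -- complete symmetric digraph
      have hcV : Nat.card Vb = k := by omega
      haveI : Finite Vb := (Nat.card_pos_iff.mp (by omega)).2
      have degs := symComplete_deg hsym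
      have hdmin : ∀ v, G.dmin v = k - 1 := fun v => by
        rw [dmin, (degs v).1, (degs v).2, hcV]; exact min_self _
      exact ⟨fun v => by rw [hdmin v], fun h1 _ => absurd ⟨hsym, hcV⟩ h1⟩
  | @direct V₁ V₂ G₁ G₂ v₁ v₂ d G hb1 hb2 hAdj ih₁ ih₂ =>
    intro hΔ
    haveI : Finite V₁ := hb1.fin
    haveI : Finite V₂ := hb2.fin
    have hk := hb1.two_le
    have o1 := direct_outDeg_l hAdj
    have i1 := direct_inDeg_l hAdj
    have o2 := direct_outDeg_r hAdj
    have i2 := direct_inDeg_r hAdj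
    have hmono1 : ∀ x, G₁.dmax x ≤ G.dmax (Sum.inl x) ∧ G₁.dmin x ≤ G.dmin (Sum.inl x) := by
      intro x
      rw [dmax, dmax, dmin, dmin, o1 x, i1 x]
      constructor <;> split_ifs <;> omega
    have hmono2 : ∀ x, G₂.dmax x ≤ G.dmax (Sum.inr x) ∧ G₂.dmin x ≤ G.dmin (Sum.inr x) := by
      intro x
      rw [dmax, dmax, dmin, dmin, o2 x, i2 x]
      constructor <;> split_ifs <;> omega
    have hΔ1 : ∀ x, G₁.dmax x ≤ k := fun x => le_trans (hmono1 x).1 (hΔ _)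
    have hΔ2 : ∀ x, G₂.dmax x ≤ k := fun x => le_trans (hmono2 x).1 (hΔ _)
    obtain ⟨p1₁, p2₁⟩ := ih₁ hΔ1
    obtain ⟨p1₂, p2₂⟩ := ih₂ hΔ2
    have hpres1 : ∀ x, x ≠ v₁ → G.dmin (Sum.inl x) = G₁.dmin x := by
      intro x hx
      rw [dmin, dmin, o1 x, i1 x, if_neg (fun h => hx h.2), if_neg (fun h => hx h.2)]
      omega
    have hpres2 : ∀ x, x ≠ v₂ → G.dmin (Sum.inr x) = G₂.dmin x := by
      intro x hx
      rw [dmin, dmin, o2 x, i2 x, if_neg (fun h => hx h.2), if_neg (fun h => hx h.2)]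
      omega
    have hsame1 : G₁.outDeg v₁ = G₁.inDeg v₁ → G.dmin (Sum.inl v₁) = G₁.dmin v₁ := by
      intro h
      rw [dmin, dmin, o1 v₁, i1 v₁]
      cases d <;> simp <;> omega
    have hsame2 : G₂.outDeg v₂ = G₂.inDeg v₂ → G.dmin (Sum.inr v₂) = G₂.dmin v₂ := by
      intro h
      rw [dmin, dmin, o2 v₂, i2 v₂]
      cases d <;> simp <;> omega
    constructor
    · rintro (x | x)
      · exact le_trans (p1₁ x) (hmono1 x).2
      · exact le_trans (p1₂ x) (hmono2 x).2
    · intro h1 h2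
      have hcard : Nat.card {x : V₁ // G.dmin (Sum.inl x) = k - 1} +
          Nat.card {x : V₂ // G.dmin (Sum.inr x) = k - 1} ≤
          Nat.card {v : V₁ ⊕ V₂ // G.dmin v = k - 1} := by
        rw [← Nat.card_sum]
        refine Nat.card_le_card_of_injective (fun ab =>
          Sum.elim (fun x => (⟨Sum.inl x.1, x.2⟩ : {v : V₁ ⊕ V₂ // G.dmin v = k - 1}))
            (fun x => ⟨Sum.inr x.1, x.2⟩) ab) ?_
        rintro (a | a) (b | b) hab <;>
          simp_all [Subtype.ext_iff]
      have hB1 : k - 1 ≤ Nat.card {x : V₁ // G.dmin (Sum.inl x) = k - 1} ∧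
          (k = 2 → 2 ≤ Nat.card {x : V₁ // G.dmin (Sum.inl x) = k - 1}) := by
        by_cases hp : G₁.IsSymmetricOddPath
        · obtain rfl : k = 2 := path_k_eq_two p1₁ hk hp
          have h2b : 2 ≤ Nat.card {x : V₁ // G.dmin (Sum.inl x) = 2 - 1} :=
            path_part_two Sum.inl Sum.inl_injective v₁ hpres1 hsame1 hp
          exact ⟨by omega, fun _ => h2b⟩
        · exact part_bound Sum.inl Sum.inl_injective v₁ hpres1 hk p2₁ hp
      have hB2 : k - 1 ≤ Nat.card {x : V₂ // G.dmin (Sum.inr x) = k - 1} ∧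
          (k = 2 → 2 ≤ Nat.card {x : V₂ // G.dmin (Sum.inr x) = k - 1}) := by
        by_cases hp : G₂.IsSymmetricOddPath
        · obtain rfl : k = 2 := path_k_eq_two p1₂ hk hp
          have h2b : 2 ≤ Nat.card {x : V₂ // G.dmin (Sum.inr x) = 2 - 1} :=
            path_part_two Sum.inr Sum.inr_injective v₂ hpres2 hsame2 hp
          exact ⟨by omega, fun _ => h2b⟩
        · exact part_bound Sum.inr Sum.inr_injective v₂ hpres2 hk p2₂ hp
      rcases eq_or_lt_of_le hk with hk2 | hk3
      · have b1 := hB1.2 hk2.symm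
        have b2 := hB2.2 hk2.symm
        omega
      · have b1 := hB1.1
        have b2 := hB2.1
        omega
  | @cyclic n hn Vf Gf vf G hbf hAdj ih =>
    intro hΔ
    haveI : ∀ i, Finite (Vf i) := fun i => (hbf i).fin
    have hk := (hbf ⟨0, by omega⟩).two_le
    have od := cyclic_outDeg hn hAdj
    have id' := cyclic_inDeg hn hAdj
    have hmono : ∀ i (x : Vf i), (Gf i).dmax x ≤ G.dmax ⟨i, x⟩ ∧
        (Gf i).dmin x ≤ G.dmin ⟨i, x⟩ := by
      intro i x
      rw [dmax, dmax, dmin, dmin, od i x, id' i x]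
      constructor <;> split_ifs <;> omega
    have hΔi : ∀ i, ∀ x, (Gf i).dmax x ≤ k := fun i x => le_trans (hmono i x).1 (hΔ _)
    have ihs := fun i => ih i (hΔi i)
    have hpres : ∀ i (x : Vf i), x ≠ vf i → G.dmin ⟨i, x⟩ = (Gf i).dmin x := by
      intro i x hx
      rw [dmin, dmin, od i x, id' i x, if_neg hx]
      omega
    constructor
    · rintro ⟨i, x⟩
      exact le_trans ((ihs i).1 x) (hmono i x).2
    · intro h1 h2
      classical
      have hcard : ∑ i, Nat.card {x : Vf i // G.dmin ⟨i, x⟩ = k - 1} ≤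
          Nat.card {v : (Σ i, Vf i) // G.dmin v = k - 1} := by
        have e1 : Nat.card (Σ i, {x : Vf i // G.dmin ⟨i, x⟩ = k - 1}) =
            ∑ i, Nat.card {x : Vf i // G.dmin ⟨i, x⟩ = k - 1} := by
          haveI := fun i => Fintype.ofFinite {x : Vf i // G.dmin ⟨i, x⟩ = k - 1}
          simp [Nat.card_eq_fintype_card, Fintype.card_sigma]
        rw [← e1]
        refine Nat.card_le_card_of_injective (fun p => ⟨⟨p.1, p.2.1⟩, p.2.2⟩) ?_
        rintro ⟨i, x, hx⟩ ⟨j, y, hy⟩ hab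
        simp only [Subtype.mk.injEq] at hab
        obtain ⟨rfl, h⟩ := Sigma.mk.inj_iff.mp hab
        obtain rfl := eq_of_heq h
        rfl
      have hBl : ∀ i, ¬(Gf i).IsSymmetricOddPath →
          k - 1 ≤ Nat.card {x : Vf i // G.dmin ⟨i, x⟩ = k - 1} ∧
          (k = 2 → 2 ≤ Nat.card {x : Vf i // G.dmin ⟨i, x⟩ = k - 1}) :=
        fun i hp => part_bound (Sigma.mk i) sigma_mk_injective (vf i) (hpres i) hk (ihs i).2 hp
      have hB1 : ∀ i, 1 ≤ Nat.card {x : Vf i // G.dmin ⟨i, x⟩ = k - 1} := by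
        intro i
        by_cases hp : (Gf i).IsSymmetricOddPath
        · obtain rfl : k = 2 := path_k_eq_two (ihs i).1 hk hp
          exact path_part_one (Sigma.mk i) sigma_mk_injective (vf i) (hpres i) hp
        · have := (hBl i hp).1; omega
      rcases eq_or_lt_of_le hk with hk2 | hk3
      · -- k = 2
        obtain rfl : k = 2 := hk2.symm
        by_cases hallpath : ∀ i, (Gf i).IsSymmetricOddPath
        · rcases Nat.lt_or_ge n 3 with hn2 | hn3
          · obtain rfl : n = 2 := by omega
            exact absurd (cyclic_two_glue hAdj hΔ hallpath) h2
          · have hs := Finset.card_nsmul_le_sum (Finset.univ : Finset (Fin n))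
              (fun i => Nat.card {x : Vf i // G.dmin ⟨i, x⟩ = 2 - 1}) 1
              (fun i _ => hB1 i)
            simp only [Finset.card_univ, Fintype.card_fin, smul_eq_mul, mul_one] at hs
            omega
        · push_neg at hallpath
          obtain ⟨i₀, hi₀⟩ := hallpath
          have b₀ := (hBl i₀ hi₀).2 rfl
          have hsplit := Finset.add_sum_erase Finset.univ
            (fun i => Nat.card {x : Vf i // G.dmin ⟨i, x⟩ = 2 - 1}) (Finset.mem_univ i₀)
          have hrest := Finset.card_nsmul_le_sum (Finset.univ.erase i₀)
            (fun i => Nat.card {x : Vf i // G.dmin ⟨i, x⟩ = 2 - 1}) 1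
            (fun i _ => hB1 i)
          simp only [Finset.card_erase_of_mem (Finset.mem_univ i₀), Finset.card_univ,
            Fintype.card_fin, smul_eq_mul, mul_one] at hrest
          beta_reduce at hsplit hrest
          omega
      · -- k ≥ 3 : no part is a path
        have hs := Finset.card_nsmul_le_sum (Finset.univ : Finset (Fin n))
          (fun i => Nat.card {x : Vf i // G.dmin ⟨i, x⟩ = k - 1}) (k - 1)
          (fun i _ => by
            refine (hBl i (fun hp => ?_)).1
            have := path_k_eq_two (ihs i).1 hk hp
            omega)
        simp only [Finset.card_univ, Fintype.card_fin, smul_eq_mul] at hs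
        have h4 : k + 1 ≤ 2 * (k - 1) := by omega
        have h5 : 2 * (k - 1) ≤ n * (k - 1) := Nat.mul_le_mul_right _ hn
        omega
  | @iso Vi W e G H hIff hb ih =>
    intro hΔ
    have hΔG : ∀ v, G.dmax v ≤ k := fun v => by
      rw [iso_dmax e hIff v]; exact hΔ _
    obtain ⟨p1, p2⟩ := ih hΔG
    constructor
    · intro w
      have h3 := p1 (e.symm w)
      rwa [iso_dmin e hIff, Equiv.apply_symm_apply] at h3
    · intro h1 h2
      have h1' : ¬(G.IsSymmetricComplete ∧ Nat.card _ = k) := fun hc =>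
        h1 ⟨iso_symComplete e hIff hc.1, by rw [← Nat.card_congr e]; exact hc.2⟩
      have h2' : ¬G.IsSymmetricOddPath := fun hp => h2 (iso_oddpath e hIff hp)
      refine le_trans (p2 h1' h2')
        (le_of_eq (Nat.card_congr (Equiv.subtypeEquiv e fun v => ?_)))
      rw [iso_dmin e hIff]

end Digraph'

/-- Every vertex of a `k`-tree has mindegree at least `k − 1`; moreover a `k`-tree
has at least `k + 1` vertices of mindegree exactly `k − 1`, unless it is `↔K_k` or a
symmetric path of odd length. -/
theorem ktree_mindegree {V : Type} [Fintype V] (G : Digraph' V) (k : ℕ)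
    (h : G.IsKTree k) :
    (∀ v : V, k - 1 ≤ G.dmin v) ∧
      (¬ (G.IsSymmetricComplete ∧ Nat.card V = k) → ¬ G.IsSymmetricOddPath →
        k + 1 ≤ Nat.card {v : V // G.dmin v = k - 1}) := by
  obtain ⟨hD, hb⟩ := h
  have hD' : ∀ v, G.dmax v ≤ k := fun v =>
    le_trans (le_csSup (Set.Finite.bddAbove (Set.finite_range _)) (Set.mem_range_self v)) hD
  exact Digraph'.main_thm hb hD'
end

section
/- Let G be a digraph with Δ_max(G) ≤ r₁ + r₂ where r₁, r₂ ≥ 1, and let (V₁, V₂) be a partition of V(G) minimizing r₂·|A(G[V₁])| + r₁·|A(G[V₂])|. Then for i = 1, 2, the induced subdigraph G[Vᵢ] is rᵢ-special: every vertex v of G[Vᵢ] has min(d⁺(v), d⁻(v)) < rᵢ in G[Vᵢ], or d⁺(v) = d⁻(v) = rᵢ in G[Vᵢ]. -/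
namespace Digraph'

/-- `G` is `r`-special: every vertex has `min(d⁺, d⁻) < r` or `d⁺ = d⁻ = r`. -/
def IsSpecial {V : Type} (G : Digraph' V) (r : ℕ) : Prop :=
  ∀ v : V, G.dmin v < r ∨ (G.outDeg v = r ∧ G.inDeg v = r)

/-- The number of arcs of `G`. -/
noncomputable def numArcs {V : Type} (G : Digraph' V) : ℕ :=
  Nat.card {p : V × V // G.Adj p.1 p.2}

end Digraph'

open Finset

variable {V : Type} [Fintype V] (G : Digraph' V)

lemma numArcs_induce (S : Set V) :
    (G.induce S).numArcs = Nat.card {p : V × V // p.1 ∈ S ∧ p.2 ∈ S ∧ G.Adj p.1 p.2} := by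
  refine Nat.card_congr ?_
  exact { toFun := fun x => ⟨(x.1.1, x.1.2), x.1.1.2, x.1.2.2, x.2⟩
          invFun := fun x => ⟨(⟨x.1.1, x.2.1⟩, ⟨x.1.2, x.2.2.1⟩), x.2.2.2⟩
          left_inv := fun x => rfl
          right_inv := fun x => rfl }

lemma outDeg_induce (S : Set V) (v : V) (hv : v ∈ S) :
    (G.induce S).outDeg ⟨v, hv⟩ = Nat.card {w : V // w ∈ S ∧ G.Adj v w} := by
  refine Nat.card_congr ?_
  exact { toFun := fun x => ⟨x.1.1, x.1.2, x.2⟩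
          invFun := fun x => ⟨⟨x.1, x.2.1⟩, x.2.2⟩
          left_inv := fun x => rfl
          right_inv := fun x => rfl }

lemma inDeg_induce (S : Set V) (v : V) (hv : v ∈ S) :
    (G.induce S).inDeg ⟨v, hv⟩ = Nat.card {w : V // w ∈ S ∧ G.Adj w v} := by
  refine Nat.card_congr ?_
  exact { toFun := fun x => ⟨x.1.1, x.1.2, x.2⟩
          invFun := fun x => ⟨⟨x.1, x.2.1⟩, x.2.2⟩
          left_inv := fun x => rfl
          right_inv := fun x => rfl }

lemma outDeg_split (S : Set V) (v : V) :
    Nat.card {w : V // w ∈ S ∧ G.Adj v w} + Nat.card {w : V // w ∈ Sᶜ ∧ G.Adj v w}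
      = G.outDeg v := by
  classical
  rw [Digraph'.outDeg, Nat.card_eq_fintype_card, Nat.card_eq_fintype_card,
    Nat.card_eq_fintype_card, Fintype.card_subtype, Fintype.card_subtype,
    Fintype.card_subtype]
  have hsplit := Finset.card_filter_add_card_filter_not
    (s := univ.filter (fun w => G.Adj v w)) (p := fun w => w ∈ S)
  rw [Finset.filter_filter, Finset.filter_filter] at hsplit
  have e1 : univ.filter (fun w => G.Adj v w ∧ w ∈ S)
      = univ.filter (fun w => w ∈ S ∧ G.Adj v w) := by
    ext w; simp only [Finset.mem_filter]; tauto
  have e2 : univ.filter (fun w => G.Adj v w ∧ ¬ w ∈ S)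
      = univ.filter (fun w => w ∈ Sᶜ ∧ G.Adj v w) := by
    ext w; simp only [Finset.mem_filter, Set.mem_compl_iff]; tauto
  rw [e1, e2] at hsplit
  convert hsplit using 2 <;> simp

lemma inDeg_split (S : Set V) (v : V) :
    Nat.card {w : V // w ∈ S ∧ G.Adj w v} + Nat.card {w : V // w ∈ Sᶜ ∧ G.Adj w v}
      = G.inDeg v := by
  classical
  rw [Digraph'.inDeg, Nat.card_eq_fintype_card, Nat.card_eq_fintype_card,
    Nat.card_eq_fintype_card, Fintype.card_subtype, Fintype.card_subtype,
    Fintype.card_subtype]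
  have hsplit := Finset.card_filter_add_card_filter_not
    (s := univ.filter (fun w => G.Adj w v)) (p := fun w => w ∈ S)
  rw [Finset.filter_filter, Finset.filter_filter] at hsplit
  have e1 : univ.filter (fun w => G.Adj w v ∧ w ∈ S)
      = univ.filter (fun w => w ∈ S ∧ G.Adj w v) := by
    ext w; simp only [Finset.mem_filter]; tauto
  have e2 : univ.filter (fun w => G.Adj w v ∧ ¬ w ∈ S)
      = univ.filter (fun w => w ∈ Sᶜ ∧ G.Adj w v) := by
    ext w; simp only [Finset.mem_filter, Set.mem_compl_iff]; tauto
  rw [e1, e2] at hsplit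
  convert hsplit using 2 <;> simp

lemma arcs_split (S : Set V) (v : V) (hv : v ∈ S) :
    Nat.card {p : V × V // p.1 ∈ S ∧ p.2 ∈ S ∧ G.Adj p.1 p.2}
      = Nat.card {p : V × V // p.1 ∈ S \ {v} ∧ p.2 ∈ S \ {v} ∧ G.Adj p.1 p.2}
        + Nat.card {w : V // w ∈ S ∧ G.Adj v w}
        + Nat.card {w : V // w ∈ S ∧ G.Adj w v} := by
  classical
  rw [Nat.card_eq_fintype_card, Nat.card_eq_fintype_card, Nat.card_eq_fintype_card,
    Nat.card_eq_fintype_card, Fintype.card_subtype, Fintype.card_subtype,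
    Fintype.card_subtype, Fintype.card_subtype]
  set s := univ.filter (fun p : V × V => p.1 ∈ S ∧ p.2 ∈ S ∧ G.Adj p.1 p.2) with hs
  have h1 : (s.filter (fun p => p.1 = v)).card + (s.filter (fun p => ¬ p.1 = v)).card
      = s.card := Finset.card_filter_add_card_filter_not _
  have h2 : ((s.filter (fun p => ¬ p.1 = v)).filter (fun p => p.2 = v)).card
      + ((s.filter (fun p => ¬ p.1 = v)).filter (fun p => ¬ p.2 = v)).card
      = (s.filter (fun p => ¬ p.1 = v)).card :=
    Finset.card_filter_add_card_filter_not _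
  have hout : s.filter (fun p => p.1 = v)
      = (univ.filter (fun w => w ∈ S ∧ G.Adj v w)).image (fun w => (v, w)) := by
    ext ⟨a, b⟩
    simp only [hs, Finset.mem_filter, Finset.mem_image, Finset.mem_univ, true_and]
    constructor
    · rintro ⟨⟨_, hb, hab⟩, rfl⟩; exact ⟨b, ⟨hb, hab⟩, rfl⟩
    · rintro ⟨w, ⟨hw, haw⟩, h⟩
      rw [Prod.mk.injEq] at h
      obtain ⟨rfl, rfl⟩ := h
      exact ⟨⟨hv, hw, haw⟩, rfl⟩
  have hin : (s.filter (fun p => ¬ p.1 = v)).filter (fun p => p.2 = v)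
      = (univ.filter (fun w => w ∈ S ∧ G.Adj w v)).image (fun w => (w, v)) := by
    ext ⟨a, b⟩
    simp only [hs, Finset.mem_filter, Finset.mem_image, Finset.mem_univ, true_and]
    constructor
    · rintro ⟨⟨⟨ha, _, hab⟩, _⟩, rfl⟩; exact ⟨a, ⟨ha, hab⟩, rfl⟩
    · rintro ⟨w, ⟨hw, haw⟩, h⟩
      rw [Prod.mk.injEq] at h
      obtain ⟨rfl, rfl⟩ := h
      exact ⟨⟨⟨hw, hv, haw⟩, fun h => G.irrefl v (h ▸ haw)⟩, rfl⟩
  have hrest : (s.filter (fun p => ¬ p.1 = v)).filter (fun p => ¬ p.2 = v)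
      = univ.filter (fun p : V × V => p.1 ∈ S \ {v} ∧ p.2 ∈ S \ {v} ∧ G.Adj p.1 p.2) := by
    ext ⟨a, b⟩
    simp only [hs, Finset.filter_filter, Finset.mem_filter, Finset.mem_univ, true_and,
      Set.mem_diff, Set.mem_singleton_iff]
    tauto
  have c1 : (s.filter (fun p => p.1 = v)).card
      = (univ.filter (fun w => w ∈ S ∧ G.Adj v w)).card := by
    rw [hout]; exact Finset.card_image_of_injective _ (fun a b h => by injection h)
  have c2 : ((s.filter (fun p => ¬ p.1 = v)).filter (fun p => p.2 = v)).card
      = (univ.filter (fun w => w ∈ S ∧ G.Adj w v)).card := by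
    rw [hin]; exact Finset.card_image_of_injective _ (fun a b h => by injection h)
  have c3 : ((s.filter (fun p => ¬ p.1 = v)).filter (fun p => ¬ p.2 = v)).card
      = (univ.filter (fun p : V × V => p.1 ∈ S \ {v} ∧ p.2 ∈ S \ {v} ∧ G.Adj p.1 p.2)).card := by
    rw [hrest]
  omega

lemma special_left (G : Digraph' V) (r₁ r₂ : ℕ) (h1 : 1 ≤ r₁) (h2 : 1 ≤ r₂)
    (hd : G.DeltaMax ≤ r₁ + r₂) (A : Set V)
    (hmin : ∀ B : Set V,
      r₂ * (G.induce A).numArcs + r₁ * (G.induce Aᶜ).numArcs ≤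
        r₂ * (G.induce B).numArcs + r₁ * (G.induce Bᶜ).numArcs) :
    (G.induce A).IsSpecial r₁ := by
  rintro ⟨v, hv⟩
  have hδ : G.dmax v ≤ r₁ + r₂ :=
    le_trans (le_csSup (Set.Finite.bddAbove (Set.finite_range _))
      (Set.mem_range_self v)) hd
  simp only [Digraph'.dmax, max_le_iff] at hδ
  have hx : Nat.card {w : V // w ∈ A ∧ G.Adj v w}
      + Nat.card {w : V // w ∈ Aᶜ ∧ G.Adj v w} ≤ r₁ + r₂ := by
    rw [outDeg_split G A v]; exact hδ.1
  have hy : Nat.card {w : V // w ∈ A ∧ G.Adj w v}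
      + Nat.card {w : V // w ∈ Aᶜ ∧ G.Adj w v} ≤ r₁ + r₂ := by
    rw [inDeg_split G A v]; exact hδ.2
  have hB := hmin (A \ {v})
  rw [numArcs_induce, numArcs_induce, numArcs_induce, numArcs_induce] at hB
  have e1 := arcs_split G A v hv
  have hvB : v ∈ (A \ {v})ᶜ := by simp
  have e2 := arcs_split G ((A \ {v})ᶜ) v hvB
  have hset : (A \ {v})ᶜ \ {v} = Aᶜ := by
    ext w
    simp only [Set.mem_diff, Set.mem_compl_iff, Set.mem_singleton_iff]
    by_cases hw : w = v
    · subst hw; simp [hv]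
    · simp [hw]
  have eo : Nat.card {w : V // w ∈ (A \ {v})ᶜ ∧ G.Adj v w}
      = Nat.card {w : V // w ∈ Aᶜ ∧ G.Adj v w} := by
    refine Nat.card_congr (Equiv.subtypeEquivRight ?_)
    intro w
    rcases eq_or_ne w v with rfl | hw
    · simp [G.irrefl]
    · simp only [Set.mem_compl_iff, Set.mem_diff, Set.mem_singleton_iff, hw]
      tauto
  have ei : Nat.card {w : V // w ∈ (A \ {v})ᶜ ∧ G.Adj w v}
      = Nat.card {w : V // w ∈ Aᶜ ∧ G.Adj w v} := by
    refine Nat.card_congr (Equiv.subtypeEquivRight ?_)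
    intro w
    rcases eq_or_ne w v with rfl | hw
    · simp [G.irrefl]
    · simp only [Set.mem_compl_iff, Set.mem_diff, Set.mem_singleton_iff, hw]
      tauto
  rw [hset, eo, ei] at e2
  rw [e1, e2] at hB
  have go := outDeg_induce G A v hv
  have gi := inDeg_induce G A v hv
  simp only [Digraph'.dmin, go, gi]
  set a := Nat.card {w : V // w ∈ A ∧ G.Adj v w} with ha
  set b := Nat.card {w : V // w ∈ A ∧ G.Adj w v} with hb
  set c := Nat.card {w : V // w ∈ Aᶜ ∧ G.Adj v w} with hc
  set d := Nat.card {w : V // w ∈ Aᶜ ∧ G.Adj w v} with hd2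
  set X := Nat.card {p : V × V // p.1 ∈ A \ {v} ∧ p.2 ∈ A \ {v} ∧ G.Adj p.1 p.2} with hX
  set Y := Nat.card {p : V × V // p.1 ∈ Aᶜ ∧ p.2 ∈ Aᶜ ∧ G.Adj p.1 p.2} with hY
  clear_value a b c d X Y
  clear e1 e2 eo ei hset go gi hvB hmin
  have key : r₂ * (a + b) ≤ r₁ * (c + d) := by linarith [hB]
  by_contra hcon
  push_neg at hcon
  obtain ⟨hge, hne⟩ := hcon
  rw [le_min_iff] at hge
  obtain ⟨hgo, hgi⟩ := hge
  have hsum : (r₁ + r₂) * (a + b) ≤ (r₁ + r₂) * (2 * r₁) := by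
    have hmul : r₁ * ((a + c) + (b + d)) ≤ r₁ * ((r₁ + r₂) + (r₁ + r₂)) :=
      mul_le_mul_right (add_le_add hx hy) r₁
    calc (r₁ + r₂) * (a + b) = r₂ * (a + b) + r₁ * (a + b) := by ring
      _ ≤ r₁ * (c + d) + r₁ * (a + b) := add_le_add_left key _
      _ = r₁ * ((a + c) + (b + d)) := by ring
      _ ≤ r₁ * ((r₁ + r₂) + (r₁ + r₂)) := hmul
      _ = (r₁ + r₂) * (2 * r₁) := by ring
  have hfin : a + b ≤ 2 * r₁ := Nat.le_of_mul_le_mul_left hsum (by omega)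
  have : a = r₁ ∧ b = r₁ := by omega
  exact hne this.1 this.2

/-- For an `(r₁, r₂)`-normal partition `(A, Aᶜ)` (one minimizing
`r₂·|A(G[V₁])| + r₁·|A(G[V₂])|`) with `Δ_max(G) ≤ r₁ + r₂`, the induced subdigraph
`G[A]` is `r₁`-special and `G[Aᶜ]` is `r₂`-special. -/
theorem normal_partition_special {V : Type} [Fintype V] (G : Digraph' V)
    (r₁ r₂ : ℕ) (h1 : 1 ≤ r₁) (h2 : 1 ≤ r₂) (hd : G.DeltaMax ≤ r₁ + r₂)
    (A : Set V)
    (hmin : ∀ B : Set V,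
      r₂ * (G.induce A).numArcs + r₁ * (G.induce Aᶜ).numArcs ≤
        r₂ * (G.induce B).numArcs + r₁ * (G.induce Bᶜ).numArcs) :
    (G.induce A).IsSpecial r₁ ∧ (G.induce Aᶜ).IsSpecial r₂ := by
  constructor
  · exact special_left G r₁ r₂ h1 h2 hd A hmin
  · refine special_left G r₂ r₁ h2 h1 (by rwa [Nat.add_comm]) Aᶜ ?_
    intro B
    have h := hmin Bᶜ
    rw [compl_compl] at h
    rw [compl_compl]
    omega
end
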